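/- arXiv:2103.03153 — 9 statements merged into one kernel-verified Lean document; each statement's English description precedes it below -/
import Mathlib

section
/- For a set Γ and n ∈ ω, the space σ_n(Γ) is scattered of Cantor–Bendixson height exactly n+1 (when Γ is infinite); moreover its k-th Cantor–Bendixson derivative equals σ_{n−k}(Γ) for every k ≤ n. -/
def sigmaN (Γ : Type*) (n : ℕ) : Set (Γ → Bool) :=
  {f | ({γ | f γ = true}).Finite ∧ ({γ | f γ = true}).ncard ≤ n}

/-- A space is scattered if every nonempty subset has a point isolated in it. -/
def IsScattered (X : Type*) [TopologicalSpace X] : Prop :=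
  ∀ S : Set X, S.Nonempty → ∃ x ∈ S, ∃ U : Set X, IsOpen U ∧ U ∩ S = {x}

section Aux

variable {Γ : Type*}

lemma sigmaAux_ext {f g : Γ → Bool} (h : {γ | f γ = true} = {γ | g γ = true}) : f = g := by
  funext γ
  have := Set.ext_iff.mp h γ
  simp only [Set.mem_setOf_eq] at this
  cases hf : f γ <;> cases hg : g γ <;> simp_all

lemma sigmaAux_isOpen_fixed {s : Set Γ} (hs : s.Finite) (b : Γ → Bool) :
    IsOpen {h : Γ → Bool | ∀ γ ∈ s, h γ = b γ} := by
  have he : {h : Γ → Bool | ∀ γ ∈ s, h γ = b γ}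
      = ⋂ γ ∈ s, (fun h : Γ → Bool => h γ) ⁻¹' {b γ} := by
    ext h; simp
  rw [he]
  exact hs.isOpen_biInter fun γ _ =>
    (continuous_apply γ).isOpen_preimage _ (isOpen_discrete _)

lemma sigmaAux_mem_derivedSet [Infinite Γ] {n : ℕ} {f : Γ → Bool} :
    f ∈ derivedSet (sigmaN Γ n) ↔ f ∈ sigmaN Γ n ∧ ({γ | f γ = true}).ncard < n := by
  constructor
  · intro hf
    rw [mem_derivedSet, accPt_iff_nhds] at hf
    by_cases hfin : ({γ | f γ = true}).Finite
    · rcases lt_or_ge ({γ | f γ = true}).ncard n with hlt | hge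
      · exact ⟨⟨hfin, hlt.le⟩, hlt⟩
      · -- ncard ≥ n : derive a contradiction
        exfalso
        rcases eq_or_lt_of_le hge with heq | hgt
        · -- ncard = n : f is isolated in sigmaN Γ n
          obtain ⟨g, ⟨hgU, hgfin, hgcard⟩, hgf⟩ :=
            hf {h | ∀ γ ∈ {γ | f γ = true}, h γ = f γ}
              ((sigmaAux_isOpen_fixed hfin f).mem_nhds (fun γ _ => rfl))
          apply hgf
          have hsub : {γ | f γ = true} ⊆ {γ | g γ = true} := fun γ hγ => by
            have := hgU γ hγ; simp only [Set.mem_setOf_eq] at *; rw [this, hγ]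
          have : {γ | g γ = true} = {γ | f γ = true} :=
            (Set.eq_of_subset_of_ncard_le hsub (by omega) hgfin).symm
          exact sigmaAux_ext this
        · -- ncard > n : pick n+1 coords, nbhd disjoint from sigmaN Γ n
          obtain ⟨t, hts, htcard⟩ := Set.exists_subset_card_eq (show n + 1 ≤ _ from hgt)
          have htfin : t.Finite := hfin.subset hts
          obtain ⟨g, ⟨hgU, hgfin, hgcard⟩, -⟩ :=
            hf {h | ∀ γ ∈ t, h γ = f γ}
              ((sigmaAux_isOpen_fixed htfin f).mem_nhds (fun γ _ => rfl))
          have hsub : t ⊆ {γ | g γ = true} := fun γ hγ => by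
            have := hgU γ hγ; have := hts hγ; simp only [Set.mem_setOf_eq] at *
            rw [hgU γ hγ]; exact hts hγ
          have := Set.ncard_le_ncard hsub hgfin
          omega
    · -- supp f infinite : pick n+1 coords, nbhd disjoint from sigmaN Γ n
      exfalso
      obtain ⟨t, hts, htfin, htcard⟩ :=
        Set.Infinite.exists_subset_ncard_eq hfin (n + 1)
      obtain ⟨g, ⟨hgU, hgfin, hgcard⟩, -⟩ :=
        hf {h | ∀ γ ∈ t, h γ = f γ}
          ((sigmaAux_isOpen_fixed htfin f).mem_nhds (fun γ _ => rfl))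
      have hsub : t ⊆ {γ | g γ = true} := fun γ hγ => by
        simp only [Set.mem_setOf_eq]; rw [hgU γ hγ]; exact hts hγ
      have := Set.ncard_le_ncard hsub hgfin
      omega
  · rintro ⟨⟨hfin, -⟩, hlt⟩
    classical
    rw [mem_derivedSet, accPt_iff_nhds]
    intro U hU
    obtain ⟨V, hVU, hV, hfV⟩ := mem_nhds_iff.mp hU
    obtain ⟨I, u, hu, hIu⟩ := isOpen_pi_iff.mp hV f hfV
    have hfinU : ((I : Set Γ) ∪ {γ | f γ = true}).Finite :=
      (I.finite_toSet).union hfin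
    obtain ⟨γ₀, hγ₀⟩ := hfinU.infinite_compl.nonempty
    simp only [Set.mem_compl_iff, Set.mem_union, not_or] at hγ₀
    refine ⟨Function.update f γ₀ true, ⟨hVU (hIu ?_), ?_, ?_⟩, ?_⟩
    · intro γ hγ
      rw [Function.update_of_ne (by rintro rfl; exact hγ₀.1 hγ)]
      exact (hu γ hγ).2
    · have : {γ | Function.update f γ₀ true γ = true}
          = insert γ₀ {γ | f γ = true} := by
        ext γ
        rcases eq_or_ne γ γ₀ with rfl | hne
        · simp [Function.update_self]
        · simp [Function.update_of_ne hne, hne]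
      rw [this]; exact hfin.insert γ₀
    · have hs : {γ | Function.update f γ₀ true γ = true}
          = insert γ₀ {γ | f γ = true} := by
        ext γ
        rcases eq_or_ne γ γ₀ with rfl | hne
        · simp [Function.update_self]
        · simp [Function.update_of_ne hne, hne]
      rw [hs, Set.ncard_insert_of_notMem hγ₀.2 hfin]
      omega
    · intro h
      have : Function.update f γ₀ true γ₀ = f γ₀ := by rw [h]
      rw [Function.update_self] at this
      have : f γ₀ = true := this.symm
      exact hγ₀.2 this

lemma sigmaAux_derivedSet_succ [Infinite Γ] (n : ℕ) :
    derivedSet (sigmaN Γ (n + 1)) = sigmaN Γ n := by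
  ext f
  rw [sigmaAux_mem_derivedSet]
  constructor
  · rintro ⟨⟨hfin, -⟩, hlt⟩; exact ⟨hfin, by omega⟩
  · rintro ⟨hfin, hle⟩; exact ⟨⟨hfin, by omega⟩, by omega⟩

lemma sigmaAux_derivedSet_zero [Infinite Γ] :
    derivedSet (sigmaN Γ 0) = ∅ := by
  ext f
  rw [sigmaAux_mem_derivedSet]
  simp

lemma sigmaAux_iterate [Infinite Γ] (n : ℕ) :
    ∀ k : ℕ, k ≤ n → (derivedSet)^[k] (sigmaN Γ n) = sigmaN Γ (n - k) := by
  intro k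
  induction k with
  | zero => simp
  | succ k ih =>
    intro hk
    rw [Function.iterate_succ_apply', ih (by omega)]
    have : n - k = (n - (k + 1)) + 1 := by omega
    rw [this, sigmaAux_derivedSet_succ]

end Aux

/-- for an infinite `Γ`, `σ_n(Γ)` is scattered, its `k`-th
Cantor–Bendixson derivative equals `σ_{n-k}(Γ)` for `k ≤ n`, and its
Cantor–Bendixson height is exactly `n + 1`. -/
theorem sigmaN_scattered_height (Γ : Type*) [Infinite Γ] (n : ℕ) :
    IsScattered ↥(sigmaN Γ n) ∧
    (∀ k : ℕ, k ≤ n → (derivedSet)^[k] (sigmaN Γ n) = sigmaN Γ (n - k)) ∧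
    (derivedSet)^[n + 1] (sigmaN Γ n) = ∅ ∧
    (derivedSet)^[n] (sigmaN Γ n) ≠ ∅ := by
  refine ⟨?_, sigmaAux_iterate n, ?_, ?_⟩
  · -- scattered
    intro S hS
    -- pick x ∈ S with maximal support cardinality
    set T : Set ℕ := (fun x : ↥(sigmaN Γ n) => ({γ | (x : Γ → Bool) γ = true}).ncard) '' S
      with hT
    have hTne : T.Nonempty := hS.image _
    have hTbdd : BddAbove T := by
      refine ⟨n, ?_⟩
      rintro m ⟨x, -, rfl⟩
      exact x.2.2
    have hmem : sSup T ∈ T := Nat.sSup_mem hTne hTbdd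
    obtain ⟨x, hxS, hxcard⟩ := hmem
    refine ⟨x, hxS, Subtype.val ⁻¹' {h | ∀ γ ∈ {γ | (x : Γ → Bool) γ = true}, h γ = true}, ?_, ?_⟩
    · exact (sigmaAux_isOpen_fixed x.2.1 (fun _ => true)).preimage continuous_subtype_val
    · ext y
      simp only [Set.mem_inter_iff, Set.mem_preimage, Set.mem_setOf_eq, Set.mem_singleton_iff]
      constructor
      · rintro ⟨hyU, hyS⟩
        have hsub : {γ | (x : Γ → Bool) γ = true} ⊆ {γ | (y : Γ → Bool) γ = true} :=
          fun γ hγ => hyU γ hγ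
        have hyle : ({γ | (y : Γ → Bool) γ = true}).ncard ≤ sSup T :=
          le_csSup hTbdd ⟨y, hyS, rfl⟩
        have heq : {γ | (x : Γ → Bool) γ = true} = {γ | (y : Γ → Bool) γ = true} :=
          Set.eq_of_subset_of_ncard_le hsub (hyle.trans hxcard.ge) y.2.1
        exact Subtype.ext (sigmaAux_ext heq.symm)
      · rintro rfl
        exact ⟨fun γ hγ => hγ, hxS⟩
  · rw [Function.iterate_succ_apply', sigmaAux_iterate n n le_rfl]
    simpa using sigmaAux_derivedSet_zero
  · rw [sigmaAux_iterate n n le_rfl]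
    intro h
    have he : {γ : Γ | (fun _ : Γ => false) γ = true} = ∅ := by ext; simp
    have hmem : (fun _ : Γ => false) ∈ sigmaN Γ (n - n) := by
      constructor <;> rw [he] <;> simp
    rw [h] at hmem
    exact hmem
end

section
/- A compact space K embeds into σ_n(Γ) for some set Γ if and only if K has a T₀-separating point-n family of clopen subsets, where a family U is point-n if every point lies in at most n members of U. -/
universe u

/-- a compact space `K` embeds into `σ_n(Γ)` for some set `Γ`
iff `K` has a `T₀`-separating point-`n` family of clopen subsets. -/
theorem embeds_sigmaN_iff_clopen_family (K : Type u) [TopologicalSpace K]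
    [CompactSpace K] [T2Space K] (n : ℕ) :
    (∃ (Γ : Type u) (f : K → ↥(sigmaN Γ n)), Topology.IsEmbedding f) ↔
    (∃ U : Set (Set K), (∀ A ∈ U, IsClopen A) ∧
      (∀ x y : K, x ≠ y → ∃ A ∈ U, Xor' (x ∈ A) (y ∈ A)) ∧
      (∀ x : K, Cardinal.mk {A : Set K // A ∈ U ∧ x ∈ A} ≤ (n : Cardinal.{u}))) := by
  constructor
  · rintro ⟨Γ, f, hf⟩
    refine ⟨{A | ∃ γ : Γ, A = {x | (f x : Γ → Bool) γ = true}}, ?_, ?_, ?_⟩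
    · rintro A ⟨γ, rfl⟩
      have hc : Continuous fun x : K => (f x : Γ → Bool) γ :=
        (continuous_apply γ).comp (continuous_subtype_val.comp hf.continuous)
      have : IsClopen ((fun x : K => (f x : Γ → Bool) γ) ⁻¹' {true}) :=
        (isClopen_discrete {true}).preimage hc
      simpa [Set.preimage, Set.mem_singleton_iff] using this
    · intro x y hxy
      have hne : (f x : Γ → Bool) ≠ (f y : Γ → Bool) := by
        intro h
        exact hxy (hf.injective (Subtype.ext h))
      obtain ⟨γ, hγ⟩ := Function.ne_iff.mp hne
      refine ⟨{z | (f z : Γ → Bool) γ = true}, ⟨γ, rfl⟩, ?_⟩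
      rcases Bool.eq_false_or_eq_true ((f x : Γ → Bool) γ) with hx | hx <;>
        rcases Bool.eq_false_or_eq_true ((f y : Γ → Bool) γ) with hy | hy <;>
          simp_all [Xor', Set.mem_setOf_eq]
    · intro x
      obtain ⟨hfin, hcard⟩ := (f x).2
      set s : Set Γ := {γ | (f x : Γ → Bool) γ = true} with hs
      have hsurj : Function.Surjective
          (fun γ : s => (⟨{z | (f z : Γ → Bool) γ.1 = true}, ⟨γ.1, rfl⟩, γ.2⟩ :
            {A : Set K // A ∈ {A | ∃ γ : Γ, A = {x | (f x : Γ → Bool) γ = true}} ∧ x ∈ A})) := by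
        rintro ⟨A, ⟨γ, rfl⟩, hxA⟩
        exact ⟨⟨γ, hxA⟩, rfl⟩
      refine le_trans (Cardinal.mk_le_of_surjective hsurj) ?_
      have hlt : Cardinal.mk s < Cardinal.aleph0 := Cardinal.mk_lt_aleph0_iff.mpr hfin
      have h1 : ((Cardinal.toNat (Cardinal.mk s) : ℕ) : Cardinal) = Cardinal.mk s :=
        Cardinal.cast_toNat_of_lt_aleph0 hlt
      have h2 : Cardinal.toNat (Cardinal.mk s) = s.ncard := by
        rw [← Nat.card_coe_set_eq]; rfl
      rw [← h1, h2]
      exact_mod_cast hcard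
  · rintro ⟨U, hclopen, hsep, hcard⟩
    classical
    refine ⟨Set K, ?_⟩
    have hfin : ∀ x : K, ({A : ↥U | x ∈ (A : Set K)}).Finite ∧
        ({A : ↥U | x ∈ (A : Set K)}).ncard ≤ n := by
      intro x
      have he : {A : Set K // A ∈ U ∧ x ∈ A} ≃ ↥{A : ↥U | x ∈ (A : Set K)} :=
        { toFun := fun A => ⟨⟨A.1, A.2.1⟩, A.2.2⟩
          invFun := fun A => ⟨A.1.1, A.1.2, A.2⟩
          left_inv := fun A => rfl
          right_inv := fun A => rfl }
      have hmk : Cardinal.mk ↥{A : ↥U | x ∈ (A : Set K)} ≤ (n : Cardinal.{u}) :=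
        (Cardinal.mk_congr he).symm.le.trans (hcard x)
      have hlt : Cardinal.mk ↥{A : ↥U | x ∈ (A : Set K)} < Cardinal.aleph0 :=
        lt_of_le_of_lt hmk (Cardinal.nat_lt_aleph0 n)
      have hF : ({A : ↥U | x ∈ (A : Set K)}).Finite := by
        rw [← Set.finite_coe_iff]; exact Cardinal.mk_lt_aleph0_iff.mp hlt
      refine ⟨hF, ?_⟩
      have h2 : Cardinal.toNat (Cardinal.mk ↥{A : ↥U | x ∈ (A : Set K)}) =
          ({A : ↥U | x ∈ (A : Set K)}).ncard := by
        rw [← Nat.card_coe_set_eq]; rfl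
      have := Cardinal.toNat_le_toNat hmk (Cardinal.nat_lt_aleph0 n)
      rwa [h2, Cardinal.toNat_natCast] at this
    -- the map
    set g : K → (Set K → Bool) := fun x A =>
      if A ∈ U then (A.boolIndicator x) else false with hg
    have hmem : ∀ x, g x ∈ sigmaN (Set K) n := by
      intro x
      have hset : {A : Set K | g x A = true} = Subtype.val '' {A : ↥U | x ∈ (A : Set K)} := by
        ext A
        simp only [hg, Set.mem_setOf_eq, Set.mem_image]
        constructor
        · intro h
          by_cases hA : A ∈ U
          · rw [if_pos hA] at h
            exact ⟨⟨A, hA⟩, (A.mem_iff_boolIndicator x).mpr h, rfl⟩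
          · rw [if_neg hA] at h; simp at h
        · rintro ⟨⟨B, hB⟩, hxB, rfl⟩
          rw [if_pos hB]
          exact (B.mem_iff_boolIndicator x).mp hxB
      obtain ⟨hF, hn⟩ := hfin x
      constructor
      · rw [hset]; exact hF.image _
      · rw [hset, Set.ncard_image_of_injective _ Subtype.val_injective]
        exact hn
    set f : K → ↥(sigmaN (Set K) n) := fun x => ⟨g x, hmem x⟩ with hfdef
    have hgc : Continuous g := by
      refine continuous_pi fun A => ?_
      by_cases hA : A ∈ U
      · have h1 : (fun x => g x A) = A.boolIndicator := by
          funext x; simp only [hg]; rw [if_pos hA]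
        rw [show (fun x => g x A) = A.boolIndicator from h1]
        exact (continuous_boolIndicator_iff_isClopen A).mpr (hclopen A hA)
      · have h1 : (fun x => g x A) = fun _ => false := by
          funext x; simp only [hg]; rw [if_neg hA]
        rw [show (fun x => g x A) = fun _ => false from h1]
        exact continuous_const
    have hcont : Continuous f := hgc.subtype_mk hmem
    have hinj : Function.Injective f := by
      intro x y hxy
      by_contra hne
      obtain ⟨A, hAU, hxor⟩ := hsep x y hne
      have : g x A = g y A := congrFun (congrArg Subtype.val hxy) A
      rw [hg] at this
      simp only [if_pos hAU] at this
      rcases hxor with ⟨hx, hy⟩ | ⟨hy, hx⟩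
      · rw [(A.mem_iff_boolIndicator x).mp hx, ((A.notMem_iff_boolIndicator y).mp hy)] at this
        exact Bool.noConfusion this
      · rw [(A.notMem_iff_boolIndicator x).mp hx, ((A.mem_iff_boolIndicator y).mp hy)] at this
        exact Bool.noConfusion this.symm
    exact ⟨f, (hcont.isClosedEmbedding hinj).toIsEmbedding⟩
end

section
/- If K is an infinite compact subspace of σ_n(Γ) for some set Γ and n ∈ ω, then K embeds into σ_n(κ) where κ = w(K) is the weight of K. -/
universe u

/-- The weight of a topological space: the least cardinality of a base. -/
noncomputable def tweight (X : Type u) [TopologicalSpace X] : Cardinal.{u} :=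
  sInf {c | ∃ B : Set (Set X), TopologicalSpace.IsTopologicalBasis B ∧ Cardinal.mk B = c}

/-- an infinite compact subspace `K` of `σ_n(Γ)` embeds into
`σ_n(κ)` where `κ = w(K)` is the weight of `K`. -/
theorem compact_subset_sigmaN_embeds_weight {Γ : Type u} {n : ℕ}
    (K : Set ↥(sigmaN Γ n)) (hinf : K.Infinite) (hcomp : IsCompact K) :
    ∃ f : ↥K → ↥(sigmaN (tweight ↥K).ord.ToType n), Topology.IsEmbedding f := by
  classical
  haveI : CompactSpace ↥K := isCompact_iff_compactSpace.mp hcomp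
  haveI : Infinite ↥K := hinf.to_subtype
  -- a basis realizing the weight
  obtain ⟨B, hB, hBcard⟩ :
      ∃ B : Set (Set ↥K), TopologicalSpace.IsTopologicalBasis B ∧
        Cardinal.mk B = tweight ↥K := by
    have hne : {c | ∃ B : Set (Set ↥K), TopologicalSpace.IsTopologicalBasis B ∧
        Cardinal.mk B = c}.Nonempty :=
      ⟨_, {U | IsOpen U}, TopologicalSpace.isTopologicalBasis_opens, rfl⟩
    exact csInf_mem hne
  -- the basis is infinite
  have hBinf : Infinite ↥B := by
    have hKinj : Function.Injective (fun x : ↥K => {b : ↥B | x ∈ (b : Set ↥K)}) := by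
      intro x y hxy
      by_contra hne
      obtain ⟨U, V, hU, hV, hxU, hyV, hUV⟩ := t2_separation hne
      obtain ⟨b, hbB, hxb, hbU⟩ := hB.exists_subset_of_mem_open hxU hU
      have hb : y ∈ b := (Set.ext_iff.mp hxy ⟨b, hbB⟩).mp hxb
      exact hUV.le_bot ⟨hbU hb, hyV⟩
    have h1 : Cardinal.mk ↥K ≤ 2 ^ Cardinal.mk ↥B := by
      calc Cardinal.mk ↥K ≤ Cardinal.mk (Set ↥B) := Cardinal.mk_le_of_injective hKinj
      _ = 2 ^ Cardinal.mk ↥B := Cardinal.mk_set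
    rw [Cardinal.infinite_iff]
    by_contra hlt
    push_neg at hlt
    have : Cardinal.mk ↥K < Cardinal.aleph0 :=
      h1.trans_lt (Cardinal.power_lt_aleph0 (by exact_mod_cast Cardinal.nat_lt_aleph0 2) hlt)
    exact absurd this (not_lt_of_ge (Cardinal.infinite_iff.mp inferInstance))
  -- every clopen set is a finite union of basis elements
  have key : ∀ U : Set ↥K, IsClopen U → ∃ s : Finset ↥B, U = ⋃ b ∈ s, (b : Set ↥K) := by
    intro U hU
    obtain ⟨S, hSB, hUS⟩ := hB.open_eq_sUnion hU.isOpen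
    have hUcomp : IsCompact U := hU.isClosed.isCompact
    have hcover : U ⊆ ⋃ i : ↥S, (i : Set ↥K) := by
      rw [hUS, Set.sUnion_eq_iUnion]
    obtain ⟨t, ht⟩ := hUcomp.elim_finite_subcover (fun i : ↥S => (i : Set ↥K))
      (fun i => hB.isOpen (hSB i.2)) hcover
    refine ⟨t.image (fun i : ↥S => (⟨(i : Set ↥K), hSB i.2⟩ : ↥B)), Set.Subset.antisymm ?_ ?_⟩
    · intro x hx
      obtain ⟨i, hi, hxi⟩ := Set.mem_iUnion₂.mp (ht hx)
      exact Set.mem_iUnion₂.mpr ⟨⟨(i : Set ↥K), hSB i.2⟩, Finset.mem_image_of_mem _ hi, hxi⟩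
    · intro x hx
      obtain ⟨b, hb, hxb⟩ := Set.mem_iUnion₂.mp hx
      obtain ⟨i, _, rfl⟩ := Finset.mem_image.mp hb
      rw [hUS]
      exact Set.mem_sUnion.mpr ⟨(i : Set ↥K), i.2, hxb⟩
  -- cardinality of clopen sets is at most the weight
  have hCle : Cardinal.mk {U : Set ↥K // IsClopen U} ≤ tweight ↥K := by
    choose g hg using fun U : {U : Set ↥K // IsClopen U} => key U.1 U.2
    have hginj : Function.Injective g := by
      intro U V hUV
      apply Subtype.ext
      rw [hg U, hg V, hUV]
    calc Cardinal.mk {U : Set ↥K // IsClopen U}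
        ≤ Cardinal.mk (Finset ↥B) := Cardinal.mk_le_of_injective hginj
      _ = Cardinal.mk ↥B := Cardinal.mk_finset_of_infinite ↥B
      _ = tweight ↥K := hBcard
  -- quotient of Γ by agreement on K
  let r : Setoid Γ :=
    ⟨fun a b => ∀ x : ↥K, x.1.1 a = x.1.1 b,
      ⟨fun _ _ => rfl, fun h x => (h x).symm, fun h h' x => (h x).trans (h' x)⟩⟩
  have hev : ∀ γ : Γ, Continuous (fun x : ↥K => x.1.1 γ) := fun γ =>
    (continuous_apply γ).comp (continuous_subtype_val.comp continuous_subtype_val)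
  have hclopen : ∀ γ : Γ, IsClopen {x : ↥K | x.1.1 γ = true} := by
    intro γ
    have : {x : ↥K | x.1.1 γ = true} = (fun x : ↥K => x.1.1 γ) ⁻¹' {true} := rfl
    rw [this]
    exact (isClopen_discrete {true}).preimage (hev γ)
  let ψ : Quotient r → {U : Set ↥K // IsClopen U} :=
    Quotient.lift (fun γ => ⟨{x : ↥K | x.1.1 γ = true}, hclopen γ⟩)
      (by
        intro a b hab
        apply Subtype.ext
        ext x
        simp only [Set.mem_setOf_eq, hab x])
  have hψinj : Function.Injective ψ := by
    intro q q'
    refine Quotient.inductionOn₂ q q' ?_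
    intro a b hab
    apply Quotient.sound
    intro x
    have : x ∈ {x : ↥K | x.1.1 a = true} ↔ x ∈ {x : ↥K | x.1.1 b = true} := by
      rw [show {x : ↥K | x.1.1 a = true} = {x : ↥K | x.1.1 b = true} from
        congrArg Subtype.val hab]
    exact Bool.eq_iff_iff.mpr this
  -- embed the quotient into the target index type
  have hQle : Cardinal.mk (Quotient r) ≤ Cardinal.mk (tweight ↥K).ord.ToType := by
    rw [Cardinal.mk_ord_toType]
    exact (Cardinal.mk_le_of_injective hψinj).trans hCle
  obtain ⟨e⟩ := Cardinal.le_def _ _ |>.mp hQle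
  -- the map
  let F : ↥K → (tweight ↥K).ord.ToType → Bool :=
    fun x t => decide (∃ γ : Γ, e (Quotient.mk r γ) = t ∧ x.1.1 γ = true)
  have hcoord : ∀ (γ₀ : Γ) (x : ↥K), F x (e (Quotient.mk r γ₀)) = x.1.1 γ₀ := by
    intro γ₀ x
    by_cases h : x.1.1 γ₀ = true
    · rw [h]
      exact decide_eq_true ⟨γ₀, rfl, h⟩
    · rw [Bool.not_eq_true] at h
      rw [h]
      apply decide_eq_false
      rintro ⟨γ, hγ, hγt⟩
      have heq : Quotient.mk r γ = Quotient.mk r γ₀ := e.injective hγ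
      have hr := Quotient.exact heq x
      rw [hr, h] at hγt
      exact Bool.false_ne_true hγt
  have hmem : ∀ x : ↥K, F x ∈ sigmaN (tweight ↥K).ord.ToType n := by
    intro x
    have hsub : {t | F x t = true} ⊆
        (fun γ => e (Quotient.mk r γ)) '' {γ | x.1.1 γ = true} := by
      intro t ht
      obtain ⟨γ, h1, h2⟩ := of_decide_eq_true ht
      exact ⟨γ, h2, h1⟩
    have hfin : {γ | x.1.1 γ = true}.Finite := x.1.2.1
    refine ⟨(hfin.image _).subset hsub, ?_⟩
    calc {t | F x t = true}.ncard
        ≤ ((fun γ => e (Quotient.mk r γ)) '' {γ | x.1.1 γ = true}).ncard :=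
          Set.ncard_le_ncard hsub (hfin.image _)
      _ ≤ {γ | x.1.1 γ = true}.ncard := Set.ncard_image_le hfin
      _ ≤ n := x.1.2.2
  let G : ↥K → ↥(sigmaN (tweight ↥K).ord.ToType n) := fun x => ⟨F x, hmem x⟩
  have hGinj : Function.Injective G := by
    intro x y hxy
    have hF : F x = F y := congrArg Subtype.val hxy
    by_contra hne
    have hne' : x.1.1 ≠ y.1.1 := fun h => hne (Subtype.ext (Subtype.ext h))
    obtain ⟨γ₀, hγ₀⟩ := Function.ne_iff.mp hne'
    exact hγ₀ (by rw [← hcoord γ₀ x, hF, hcoord γ₀ y])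
  have hFcont : Continuous fun x : ↥K => F x := by
    apply continuous_pi
    intro t
    by_cases ht : ∃ q : Quotient r, e q = t
    · obtain ⟨q, rfl⟩ := ht
      obtain ⟨γ₀, rfl⟩ := Quotient.exists_rep q
      have : (fun x : ↥K => F x (e (Quotient.mk r γ₀))) = fun x => x.1.1 γ₀ :=
        funext fun x => hcoord γ₀ x
      rw [this]
      exact hev γ₀
    · have : (fun x : ↥K => F x t) = fun _ => false := by
        funext x
        exact decide_eq_false (fun ⟨γ, h1, _⟩ => ht ⟨_, h1⟩)
      rw [this]
      exact continuous_const
  have hGcont : Continuous G := hFcont.subtype_mk _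
  exact ⟨G, (hGcont.isClosedEmbedding hGinj).isEmbedding⟩
end

section
/- The quotient L of σ_2(ω₁ × 2) by the equivalence relation identifying χ_{{(α,0)}} with χ_{{(α,1)}} for every α < ω₁ is a compact Hausdorff space that does not embed into σ_2(Γ) for any set Γ. -/
universe u

/-- A set of cardinality `ω₁`. -/
def Om1 : Type := (Cardinal.aleph 1).ord.ToType

/-- The equivalence relation on `σ₂(ω₁ × 2)` identifying `χ_{{(α,0)}}` with
`χ_{{(α,1)}}` for each `α < ω₁` (and identifying nothing else). -/
def rel8 (x y : ↥(sigmaN (Om1 × Bool) 2)) : Prop :=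
  x = y ∨ ∃ α : Om1,
    ({p | (x : (Om1 × Bool) → Bool) p = true} = {(α, false)} ∧
      {p | (y : (Om1 × Bool) → Bool) p = true} = {(α, true)}) ∨
    ({p | (x : (Om1 × Bool) → Bool) p = true} = {(α, true)} ∧
      {p | (y : (Om1 × Bool) → Bool) p = true} = {(α, false)})

open Filter Set Topology

noncomputable instance : LinearOrder Om1 := by unfold Om1; infer_instance

lemma Om1_mk : Cardinal.mk Om1 = Cardinal.aleph 1 := Cardinal.mk_ord_toType _

lemma Om1_uncountable : ¬ Countable Om1 := by
  intro h
  have := Cardinal.mk_le_aleph0_iff.2 h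
  rw [Om1_mk] at this
  exact absurd (lt_of_lt_of_le Cardinal.aleph0_lt_aleph_one this) (lt_irrefl _)

instance : Infinite Om1 := by
  rw [Cardinal.infinite_iff, Om1_mk]
  exact le_of_lt Cardinal.aleph0_lt_aleph_one

-- support
def supf {Γ : Type*} (y : ↥(sigmaN Γ 2)) : Set Γ := {γ | (y : Γ → Bool) γ = true}

lemma supf_finite {Γ : Type*} (y : ↥(sigmaN Γ 2)) : (supf y).Finite := y.2.1
lemma supf_ncard {Γ : Type*} (y : ↥(sigmaN Γ 2)) : (supf y).ncard ≤ 2 := y.2.2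

lemma ext_supf {Γ : Type*} {x y : ↥(sigmaN Γ 2)} (h : supf x = supf y) : x = y := by
  apply Subtype.ext; funext r
  have := Set.ext_iff.mp h r
  simp only [supf, Set.mem_setOf_eq] at this
  cases hx : (x : Γ → Bool) r <;> cases hy : (y : Γ → Bool) r <;> simp_all

-- indicator elements
lemma mem_sigmaN_pair {Γ : Type*} [DecidableEq Γ] (p q : Γ) :
    (fun r => decide (r = p ∨ r = q)) ∈ sigmaN Γ 2 := by
  have hs : {γ : Γ | decide (γ = p ∨ γ = q) = true} = {p, q} := by
    ext r; simp [Set.mem_insert_iff]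
  constructor
  · rw [hs]; exact (Set.finite_singleton q).insert p
  · rw [hs]
    exact le_trans (Set.ncard_insert_le _ _) (by simp [Set.ncard_singleton])

noncomputable def ind2 (p q : Om1 × Bool) : ↥(sigmaN (Om1 × Bool) 2) :=
  ⟨fun r => decide (r = p ∨ r = q), mem_sigmaN_pair p q⟩

def ind0 : ↥(sigmaN (Om1 × Bool) 2) :=
  ⟨fun _ => false, by constructor <;> simp [Set.ncard_empty, show {γ : Om1 × Bool | False} = ∅ from rfl]⟩

lemma supf_ind2 (p q : Om1 × Bool) : supf (ind2 p q) = {p, q} := by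
  ext r; simp [supf, ind2, Set.mem_insert_iff]

lemma supf_ind0 : supf ind0 = ∅ := by
  ext r; simp [supf, ind0]

lemma ind2_comm (p q : Om1 × Bool) : ind2 p q = ind2 q p :=
  ext_supf (by rw [supf_ind2, supf_ind2, Set.pair_comm])

-- compactness of sigmaN Γ 2
lemma sigmaN_eq_inter (Γ : Type*) :
    sigmaN Γ 2 = {f | ∀ a b c : Γ, a ≠ b → a ≠ c → b ≠ c →
      ¬(f a = true ∧ f b = true ∧ f c = true)} := by
  ext f
  constructor
  · rintro ⟨hfin, hcard⟩ a b c hab hac hbc ⟨ha, hb, hc⟩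
    have hsub : {a, b, c} ⊆ {γ | f γ = true} := by
      intro x hx
      rcases hx with rfl | rfl | rfl <;> assumption
    have h3 : ({a, b, c} : Set Γ).ncard = 3 := by
      rw [Set.ncard_insert_of_notMem (by simp [hab, hac]) ((Set.finite_singleton c).insert b),
        Set.ncard_pair hbc]
    have := Set.ncard_le_ncard hsub hfin
    omega
  · intro h
    by_cases he : {γ | f γ = true} = ∅
    · exact ⟨he ▸ Set.finite_empty, by rw [he]; simp⟩
    obtain ⟨a, ha⟩ := Set.nonempty_iff_ne_empty.2 he
    by_cases h1 : ∃ b ∈ {γ | f γ = true}, b ≠ a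
    · obtain ⟨b, hb, hba⟩ := h1
      have hsub : {γ | f γ = true} ⊆ {a, b} := by
        intro c hc
        by_contra hcn
        simp only [Set.mem_insert_iff, Set.mem_singleton_iff, not_or] at hcn
        exact h a b c (Ne.symm hba) (Ne.symm hcn.1) (Ne.symm hcn.2) ⟨ha, hb, hc⟩
      have hfin2 : ({a, b} : Set Γ).Finite := (Set.finite_singleton b).insert a
      refine ⟨hfin2.subset hsub, ?_⟩
      exact le_trans (Set.ncard_le_ncard hsub hfin2)
        (le_trans (Set.ncard_insert_le _ _) (by simp [Set.ncard_singleton]))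
    · push_neg at h1
      have hsub : {γ | f γ = true} ⊆ {a} := fun c hc => h1 c hc
      refine ⟨(Set.finite_singleton a).subset hsub, ?_⟩
      exact le_trans (Set.ncard_le_ncard hsub (Set.finite_singleton a)) (by simp)

lemma isClosed_sigmaN (Γ : Type*) : IsClosed (sigmaN Γ 2) := by
  rw [sigmaN_eq_inter]
  have : {f : Γ → Bool | ∀ a b c : Γ, a ≠ b → a ≠ c → b ≠ c →
      ¬(f a = true ∧ f b = true ∧ f c = true)} =
      ⋂ (a : Γ) (b : Γ) (c : Γ) (_ : a ≠ b) (_ : a ≠ c) (_ : b ≠ c),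
        {f : Γ → Bool | ¬(f a = true ∧ f b = true ∧ f c = true)} := by
    ext f; simp [Set.mem_iInter]
  rw [this]
  refine isClosed_iInter fun a => isClosed_iInter fun b => isClosed_iInter fun c =>
    isClosed_iInter fun _ => isClosed_iInter fun _ => isClosed_iInter fun _ => ?_
  have : {f : Γ → Bool | ¬(f a = true ∧ f b = true ∧ f c = true)} =
      ({f : Γ → Bool | f a = true ∧ f b = true ∧ f c = true})ᶜ := rfl
  rw [this]
  apply IsOpen.isClosed_compl
  have : {f : Γ → Bool | f a = true ∧ f b = true ∧ f c = true} =
      (fun f : Γ → Bool => f a) ⁻¹' {true} ∩ ((fun f : Γ → Bool => f b) ⁻¹' {true} ∩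
      (fun f : Γ → Bool => f c) ⁻¹' {true}) := by
    ext f; simp [Set.mem_inter_iff]
  rw [this]
  exact ((isOpen_discrete _).preimage (continuous_apply a)).inter
    (((isOpen_discrete _).preimage (continuous_apply b)).inter
      ((isOpen_discrete _).preimage (continuous_apply c)))

instance sigmaN_compact (Γ : Type*) : CompactSpace ↥(sigmaN Γ 2) :=
  isCompact_iff_compactSpace.mp ((isClosed_sigmaN Γ).isCompact)

instance : CompactSpace (Quot rel8) :=
  ⟨by
    have : (Set.univ : Set (Quot rel8)) = Quot.mk rel8 '' Set.univ := by
      rw [Set.image_univ]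
      exact (Set.range_eq_univ.2 Quot.mk_surjective).symm
    rw [this]
    exact CompactSpace.isCompact_univ.image continuous_quot_mk⟩
-- Part B: Hausdorff
noncomputable def Phi (x : ↥(sigmaN (Om1 × Bool) 2)) :
    (Om1 → Bool) × (Om1 × Bool → Om1 × Bool → Bool) :=
  (fun α => (x : (Om1 × Bool) → Bool) (α, false) || (x : (Om1 × Bool) → Bool) (α, true),
   fun p q => ((x : (Om1 × Bool) → Bool) p && (x : (Om1 × Bool) → Bool) q) && decide (p ≠ q))

lemma Phi_singleton (x : ↥(sigmaN (Om1 × Bool) 2)) (a : Om1 × Bool) (h : supf x = {a}) :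
    Phi x = (fun b => decide (b = a.1), fun _ _ => false) := by
  have hx : ∀ p, (x : (Om1 × Bool) → Bool) p = true ↔ p = a := by
    intro p
    have := Set.ext_iff.mp h p
    simpa [supf] using this
  obtain ⟨a1, a2⟩ := a
  unfold Phi
  refine Prod.ext ?_ ?_
  · funext α
    rw [Bool.eq_iff_iff]
    simp only [Bool.or_eq_true, hx, Prod.mk.injEq, decide_eq_true_eq]
    constructor
    · rintro (⟨h1, _⟩ | ⟨h1, _⟩) <;> exact h1
    · rintro rfl
      rcases Bool.dichotomy a2 with h2 | h2
      · left; exact ⟨rfl, h2.symm⟩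
      · right; exact ⟨rfl, h2.symm⟩
  · funext p q
    rw [Bool.eq_iff_iff]
    simp only [Bool.and_eq_true, hx, decide_eq_true_eq, Bool.false_eq_true]
    constructor
    · rintro ⟨⟨rfl, rfl⟩, hne⟩; exact absurd rfl hne
    · intro h; exact h.elim

lemma phi_rel8 (x y : ↥(sigmaN (Om1 × Bool) 2)) (h : rel8 x y) : Phi x = Phi y := by
  rcases h with rfl | ⟨α, ⟨hx, hy⟩ | ⟨hx, hy⟩⟩
  · rfl
  · rw [Phi_singleton x _ hx, Phi_singleton y _ hy]
  · rw [Phi_singleton x _ hx, Phi_singleton y _ hy]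

lemma rel8_of_Phi {x y : ↥(sigmaN (Om1 × Bool) 2)} (h : Phi x = Phi y) : rel8 x y := by
  by_cases h2 : ∃ p q, p ≠ q ∧ p ∈ supf x ∧ q ∈ supf x
  · obtain ⟨p, q, hpq, hp, hq⟩ := h2
    have hxp : (x : (Om1 × Bool) → Bool) p = true := hp
    have hxq : (x : (Om1 × Bool) → Bool) q = true := hq
    have h2x : (Phi x).2 p q = true := by
      simp [Phi, hxp, hxq, hpq]
    rw [h] at h2x
    have hyp : (y : (Om1 × Bool) → Bool) p = true ∧ (y : (Om1 × Bool) → Bool) q = true := by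
      simp only [Phi, Bool.and_eq_true, decide_eq_true_eq] at h2x
      exact ⟨h2x.1.1, h2x.1.2⟩
    have hsx : ({p, q} : Set (Om1 × Bool)) = supf x := by
      apply Set.eq_of_subset_of_ncard_le
      · rintro r (rfl | rfl) <;> assumption
      · rw [Set.ncard_pair hpq]; exact supf_ncard x
      · exact supf_finite x
    have hsy : ({p, q} : Set (Om1 × Bool)) = supf y := by
      apply Set.eq_of_subset_of_ncard_le
      · rintro r (rfl | rfl)
        · exact hyp.1
        · exact hyp.2
      · rw [Set.ncard_pair hpq]; exact supf_ncard y
      · exact supf_finite y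
    exact Or.inl (ext_supf (hsx ▸ hsy))
  · by_cases h3 : ∃ p q, p ≠ q ∧ p ∈ supf y ∧ q ∈ supf y
    · obtain ⟨p, q, hpq, hp, hq⟩ := h3
      have h2y : (Phi y).2 p q = true := by
        simp [Phi, show (y : (Om1 × Bool) → Bool) p = true from hp,
          show (y : (Om1 × Bool) → Bool) q = true from hq, hpq]
      rw [← h] at h2y
      simp only [Phi, Bool.and_eq_true, decide_eq_true_eq] at h2y
      exact absurd ⟨p, q, hpq, h2y.1.1, h2y.1.2⟩ h2
    · -- both supports subsingleton
      push_neg at h2 h3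
      by_cases hx0 : supf x = ∅
      · left
        apply ext_supf
        rw [hx0]
        by_contra hne
        obtain ⟨⟨β, i⟩, hb⟩ := Set.nonempty_iff_ne_empty.2 (Ne.symm hne)
        have h1y : (Phi y).1 β = true := by
          simp only [Phi, Bool.or_eq_true]
          rcases Bool.dichotomy i with h' | h' <;> subst h'
          · left; exact hb
          · right; exact hb
        rw [← h] at h1y
        simp only [Phi, Bool.or_eq_true] at h1y
        rcases h1y with h' | h'
        · exact absurd (show (β, false) ∈ supf x from h') (by rw [hx0]; simp)
        · exact absurd (show (β, true) ∈ supf x from h') (by rw [hx0]; simp)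
      · obtain ⟨⟨a1, a2⟩, ha⟩ := Set.nonempty_iff_ne_empty.2 hx0
        have hxs : supf x = {(a1, a2)} := by
          apply Set.eq_singleton_iff_unique_mem.2
          exact ⟨ha, fun r hr => by
            by_contra hne
            exact h2 r (a1, a2) hne hr ha⟩
        have h1x : (Phi x).1 a1 = true := by
          simp only [Phi, Bool.or_eq_true]
          rcases Bool.dichotomy a2 with h' | h' <;> subst h'
          · left; exact ha
          · right; exact ha
        rw [h] at h1x
        simp only [Phi, Bool.or_eq_true] at h1x
        have hys : ∃ j, supf y = {(a1, j)} := by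
          rcases h1x with h' | h'
          · exact ⟨false, Set.eq_singleton_iff_unique_mem.2
              ⟨h', fun r hr => by by_contra hne; exact h3 r (a1, false) hne hr h'⟩⟩
          · exact ⟨true, Set.eq_singleton_iff_unique_mem.2
              ⟨h', fun r hr => by by_contra hne; exact h3 r (a1, true) hne hr h'⟩⟩
        obtain ⟨j, hys⟩ := hys
        rcases Bool.dichotomy a2 with h' | h' <;> subst h' <;>
          rcases Bool.dichotomy j with h'' | h'' <;> subst h''
        · exact Or.inl (ext_supf (hxs.trans hys.symm))
        · exact Or.inr ⟨a1, Or.inl ⟨hxs, hys⟩⟩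
        · exact Or.inr ⟨a1, Or.inr ⟨hxs, hys⟩⟩
        · exact Or.inl (ext_supf (hxs.trans hys.symm))

lemma continuous_coordV (p : Om1 × Bool) :
    Continuous (fun x : ↥(sigmaN (Om1 × Bool) 2) => (x : (Om1 × Bool) → Bool) p) :=
  (continuous_apply p).comp continuous_subtype_val

lemma continuous_Phi : Continuous Phi := by
  apply Continuous.prodMk
  · apply continuous_pi
    intro α
    exact (continuous_of_discreteTopology (f := fun b : Bool × Bool => b.1 || b.2)).comp
      ((continuous_coordV (α, false)).prodMk (continuous_coordV (α, true)))
  · apply continuous_pi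
    intro p
    apply continuous_pi
    intro q
    exact (continuous_of_discreteTopology
      (f := fun b : Bool × Bool => b.1 && b.2 && decide (p ≠ q))).comp
      ((continuous_coordV p).prodMk (continuous_coordV q))

noncomputable def Psi : Quot rel8 → (Om1 → Bool) × (Om1 × Bool → Om1 × Bool → Bool) :=
  Quot.lift Phi phi_rel8

lemma continuous_Psi : Continuous Psi := continuous_quot_lift _ continuous_Phi

lemma mk_eq_iff {x y : ↥(sigmaN (Om1 × Bool) 2)} :
    Quot.mk rel8 x = Quot.mk rel8 y ↔ rel8 x y := by
  constructor
  · intro h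
    exact rel8_of_Phi (show Psi (Quot.mk rel8 x) = Psi (Quot.mk rel8 y) from congrArg Psi h)
  · exact Quot.sound

instance : T2Space (Quot rel8) := by
  constructor
  intro a b hab
  induction a using Quot.ind with | _ x =>
  induction b using Quot.ind with | _ y =>
  have hne : Psi (Quot.mk rel8 x) ≠ Psi (Quot.mk rel8 y) := by
    intro h
    exact hab (Quot.sound (rel8_of_Phi h))
  obtain ⟨U, V, hU, hV, hxU, hyV, hUV⟩ := t2_separation hne
  exact ⟨Psi ⁻¹' U, Psi ⁻¹' V, hU.preimage continuous_Psi, hV.preimage continuous_Psi,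
    hxU, hyV, hUV.preimage _⟩
-- Part C: helpers for the main argument

lemma rel8_supf_cases {x y : ↥(sigmaN (Om1 × Bool) 2)} (h : rel8 x y) :
    supf x = supf y ∨ ∃ a : Om1 × Bool, supf x = {a} ∧ supf y = {(a.1, !a.2)} := by
  rcases h with rfl | ⟨α, ⟨h1, h2⟩ | ⟨h1, h2⟩⟩
  · left; rfl
  · right; exact ⟨(α, false), h1, h2⟩
  · right; exact ⟨(α, true), h1, h2⟩

lemma pair_sub_singleton {α : Type*} {p q a : α} (h : ({p, q} : Set α) = {a}) : p = a ∧ q = a := by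
  constructor
  · have := Set.ext_iff.mp h p; simpa using this
  · have := Set.ext_iff.mp h q; simpa using this

-- convergence lemma
lemma keyC {Γ : Type u} (f : Quot rel8 → ↥(sigmaN Γ 2)) (hc : Continuous f)
    (x : Om1 → ↥(sigmaN (Om1 × Bool) 2)) (x₀ : ↥(sigmaN (Om1 × Bool) 2))
    (h : ∀ p, {β | (x β : (Om1 × Bool) → Bool) p ≠ (x₀ : (Om1 × Bool) → Bool) p}.Finite) (γ : Γ) :
    {β | (f (Quot.mk rel8 (x β)) : Γ → Bool) γ ≠ (f (Quot.mk rel8 x₀) : Γ → Bool) γ}.Finite := by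
  have h1 : Filter.Tendsto (fun β => ((x β) : (Om1 × Bool) → Bool)) Filter.cofinite
      (nhds (x₀ : (Om1 × Bool) → Bool)) := by
    rw [tendsto_pi_nhds]
    intro p
    rw [nhds_discrete, Filter.tendsto_pure, Filter.eventually_cofinite]
    exact h p
  have h2 : Filter.Tendsto x Filter.cofinite (nhds x₀) := tendsto_subtype_rng.mpr h1
  have h3 : Filter.Tendsto (fun β => f (Quot.mk rel8 (x β))) Filter.cofinite
      (nhds (f (Quot.mk rel8 x₀))) :=
    ((hc.comp continuous_quot_mk).tendsto x₀).comp h2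
  have h4 : Filter.Tendsto (fun β => (f (Quot.mk rel8 (x β)) : Γ → Bool) γ) Filter.cofinite
      (nhds ((f (Quot.mk rel8 x₀) : Γ → Bool) γ)) :=
    (((continuous_apply γ).comp continuous_subtype_val).tendsto _).comp h3
  rwa [nhds_discrete, Filter.tendsto_pure, Filter.eventually_cofinite] at h4
-- Part D: main non-embedding lemmas

lemma supf_ind1 (p : Om1 × Bool) : supf (ind2 p p) = {p} := by
  rw [supf_ind2, Set.pair_eq_singleton]

lemma conv_sing_zero (p : Om1 × Bool) :
    {β : Om1 | (ind2 (β, false) (β, false) : (Om1 × Bool) → Bool) p ≠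
      (ind0 : (Om1 × Bool) → Bool) p}.Finite := by
  apply (Set.finite_singleton p.1).subset
  intro β hβ
  simp only [Set.mem_setOf_eq, ind2, ind0] at hβ
  have hp : p = (β, false) := by simpa using hβ
  simp [hp]

lemma conv_pair_sing (α : Om1) (i j : Bool) (p : Om1 × Bool) :
    {β : Om1 | (ind2 (α, i) (β, j) : (Om1 × Bool) → Bool) p ≠
      (ind2 (α, i) (α, i) : (Om1 × Bool) → Bool) p}.Finite := by
  apply (Set.finite_singleton p.1).subset
  intro β hβ
  simp only [Set.mem_setOf_eq, ind2] at hβ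
  by_cases hp : p = (α, i)
  · simp [hp] at hβ
  · have hpb : p = (β, j) := by
      by_contra hpb
      simp [hp, hpb] at hβ
    simp [hpb]

lemma relfin0 : {β : Om1 | rel8 (ind2 (β, false) (β, false)) ind0}.Finite := by
  apply Set.finite_empty.subset
  intro β hβ
  exfalso
  rcases rel8_supf_cases hβ with h1 | ⟨a, h1, h2⟩
  · rw [supf_ind1, supf_ind0] at h1; exact Set.singleton_ne_empty _ h1
  · rw [supf_ind0] at h2; exact Set.singleton_ne_empty _ h2.symm

lemma relfin1 (α : Om1) (i j : Bool) :
    {β : Om1 | rel8 (ind2 (α, i) (β, j)) (ind2 (α, i) (α, i))}.Finite := by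
  apply (Set.finite_singleton α).subset
  intro β hβ
  rcases rel8_supf_cases hβ with h1 | ⟨a, h1, h2⟩
  · rw [supf_ind2, supf_ind1] at h1
    obtain ⟨_, h2'⟩ := pair_sub_singleton h1
    exact Set.mem_singleton_iff.mpr (congrArg Prod.fst h2')
  · rw [supf_ind2] at h1
    obtain ⟨hpa, hqa⟩ := pair_sub_singleton h1
    exact Set.mem_singleton_iff.mpr ((congrArg Prod.fst hqa).trans (congrArg Prod.fst hpa).symm)

lemma rel8_sing_sing_false {b b' : Om1}
    (h : rel8 (ind2 (b, false) (b, false)) (ind2 (b', false) (b', false))) : b = b' := by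
  rcases rel8_supf_cases h with h1 | ⟨a, h1, h2⟩
  · rw [supf_ind1, supf_ind1, Set.singleton_eq_singleton_iff] at h1
    exact congrArg Prod.fst h1
  · rw [supf_ind1, Set.singleton_eq_singleton_iff] at h1 h2
    obtain ⟨a1, a2⟩ := a
    simp only [Prod.ext_iff] at h1 h2
    exfalso
    rcases h1 with ⟨_, h12⟩
    rcases h2 with ⟨_, h22⟩
    rw [← h12] at h22
    simp at h22

lemma no_embed (Γ : Type u) :
    ¬ ∃ f : Quot rel8 → ↥(sigmaN Γ 2), Topology.IsEmbedding f := by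
  rintro ⟨f, hf⟩
  have hc : Continuous f := hf.continuous
  have hi : Function.Injective f := hf.injective
  -- Claim A : limits of nontrivial families have subsingleton support
  have claimA : ∀ (x₀ : ↥(sigmaN (Om1 × Bool) 2)) (y : Om1 → ↥(sigmaN (Om1 × Bool) 2)),
      (∀ p, {β | (y β : (Om1 × Bool) → Bool) p ≠ (x₀ : (Om1 × Bool) → Bool) p}.Finite) →
      {β | rel8 (y β) x₀}.Finite →
      (supf (f (Quot.mk rel8 x₀))).Subsingleton := by
    intro x₀ y hconv hrel γ₁ hγ₁ γ₂ hγ₂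
    by_contra hne
    have B1 := keyC f hc y x₀ hconv γ₁
    have B2 := keyC f hc y x₀ hconv γ₂
    obtain ⟨β, hβ⟩ := ((B1.union B2).union hrel).infinite_compl.nonempty
    simp only [Set.mem_compl_iff, Set.mem_union, not_or, Set.mem_setOf_eq, not_not] at hβ
    obtain ⟨⟨hb1, hb2⟩, hb3⟩ := hβ
    have hm1 : γ₁ ∈ supf (f (Quot.mk rel8 (y β))) := by
      show (f (Quot.mk rel8 (y β)) : Γ → Bool) γ₁ = true
      rw [hb1]; exact hγ₁
    have hm2 : γ₂ ∈ supf (f (Quot.mk rel8 (y β))) := by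
      show (f (Quot.mk rel8 (y β)) : Γ → Bool) γ₂ = true
      rw [hb2]; exact hγ₂
    have hs1 : ({γ₁, γ₂} : Set Γ) = supf (f (Quot.mk rel8 (y β))) :=
      Set.eq_of_subset_of_ncard_le (by rintro r (rfl | rfl) <;> assumption)
        (le_trans (supf_ncard _) (Set.ncard_pair hne).ge) (supf_finite _)
    have hs2 : ({γ₁, γ₂} : Set Γ) = supf (f (Quot.mk rel8 x₀)) :=
      Set.eq_of_subset_of_ncard_le (by rintro r (rfl | rfl) <;> assumption)
        (le_trans (supf_ncard _) (Set.ncard_pair hne).ge) (supf_finite _)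
    exact hb3 (mk_eq_iff.mp (hi (ext_supf (hs1.symm.trans hs2))))
  have hsub0 : (supf (f (Quot.mk rel8 ind0))).Subsingleton :=
    claimA ind0 (fun β => ind2 (β, false) (β, false)) conv_sing_zero relfin0
  have hsubs : ∀ (α : Om1) (i : Bool),
      (supf (f (Quot.mk rel8 (ind2 (α, i) (α, i))))).Subsingleton := fun α i =>
    claimA _ (fun β => ind2 (α, i) (β, false)) (conv_pair_sing α i false) (relfin1 α i false)
  -- Step 3 : support of image of zero is empty
  have hzero : supf (f (Quot.mk rel8 ind0)) = ∅ := by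
    by_contra h0
    obtain ⟨γ₀, hγ₀⟩ := Set.nonempty_iff_ne_empty.2 h0
    have hB := keyC f hc (fun β => ind2 (β, false) (β, false)) ind0 conv_sing_zero γ₀
    obtain ⟨β, hβm, β', hβ'm, hββ'⟩ := hB.infinite_compl.nontrivial
    have key1 : ∀ b : Om1,
        (f (Quot.mk rel8 (ind2 (b, false) (b, false))) : Γ → Bool) γ₀ =
          (f (Quot.mk rel8 ind0) : Γ → Bool) γ₀ →
        supf (f (Quot.mk rel8 (ind2 (b, false) (b, false)))) = {γ₀} := by
      intro b hb
      apply (hsubs b false).eq_singleton_of_mem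
      show (f (Quot.mk rel8 (ind2 (b, false) (b, false))) : Γ → Bool) γ₀ = true
      rw [hb]; exact hγ₀
    have e1 := key1 β (not_not.mp hβm)
    have e2 := key1 β' (not_not.mp hβ'm)
    exact hββ' (rel8_sing_sing_false (mk_eq_iff.mp (hi (ext_supf (e1.trans e2.symm)))))
  -- Step 4 : define g
  have hne0 : ∀ (α : Om1) (i : Bool), supf (f (Quot.mk rel8 (ind2 (α, i) (α, i)))) ≠ ∅ := by
    intro α i h
    have hr := mk_eq_iff.mp (hi (ext_supf (h.trans hzero.symm)))
    rcases rel8_supf_cases hr with h1 | ⟨a, h1, h2⟩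
    · rw [supf_ind1, supf_ind0] at h1; exact Set.singleton_ne_empty _ h1
    · rw [supf_ind0] at h2; exact Set.singleton_ne_empty _ h2.symm
  have hex : ∀ α : Om1, ∃ γ, supf (f (Quot.mk rel8 (ind2 (α, false) (α, false)))) = {γ} := by
    intro α
    obtain ⟨γ, hγ⟩ := Set.nonempty_iff_ne_empty.2 (hne0 α false)
    exact ⟨γ, (hsubs α false).eq_singleton_of_mem hγ⟩
  choose g hg using hex
  have hgi : ∀ (α : Om1) (i : Bool),
      supf (f (Quot.mk rel8 (ind2 (α, i) (α, i)))) = {g α} := by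
    intro α i
    cases i
    · exact hg α
    · have hr : rel8 (ind2 (α, false) (α, false)) (ind2 (α, true) (α, true)) :=
        Or.inr ⟨α, Or.inl ⟨supf_ind1 (α, false), supf_ind1 (α, true)⟩⟩
      rw [show Quot.mk rel8 (ind2 (α, true) (α, true)) =
        Quot.mk rel8 (ind2 (α, false) (α, false)) from (Quot.sound hr).symm]
      exact hg α
  have ginj : ∀ {α α' : Om1}, g α = g α' → α = α' := by
    intro α α' h
    have : supf (f (Quot.mk rel8 (ind2 (α, false) (α, false)))) =
        supf (f (Quot.mk rel8 (ind2 (α', false) (α', false)))) := by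
      rw [hg α, hg α', h]
    exact rel8_sing_sing_false (mk_eq_iff.mp (hi (ext_supf this)))
  -- Step 5 : bad sets
  have hBfin : ∀ (α : Om1) (i j : Bool),
      {β : Om1 | (f (Quot.mk rel8 (ind2 (α, i) (β, j))) : Γ → Bool) (g α) ≠ true}.Finite := by
    intro α i j
    apply (keyC f hc (fun β => ind2 (α, i) (β, j)) (ind2 (α, i) (α, i))
      (conv_pair_sing α i j) (g α)).subset
    intro β hβ
    simp only [Set.mem_setOf_eq] at hβ ⊢
    have ht : (f (Quot.mk rel8 (ind2 (α, i) (α, i))) : Γ → Bool) (g α) = true :=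
      (Set.ext_iff.mp (hgi α i) (g α)).mpr rfl
    rw [ht]
    exact hβ
  set B : Om1 → Set Om1 := fun α => ⋃ (i : Bool) (j : Bool),
    {β : Om1 | (f (Quot.mk rel8 (ind2 (α, i) (β, j))) : Γ → Bool) (g α) ≠ true} with hBdef
  have hBfin' : ∀ α, (B α).Finite := fun α =>
    Set.finite_iUnion fun i => Set.finite_iUnion fun j => hBfin α i j
  -- Step 6 : pigeonhole
  have hcover : (Set.univ : Set Om1) = ⋃ n : ℕ, {α | (B α).ncard ≤ n} := by
    ext α
    simp only [Set.mem_univ, Set.mem_iUnion, Set.mem_setOf_eq, true_iff]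
    exact ⟨(B α).ncard, le_refl _⟩
  have hexn : ∃ n : ℕ, ¬ ({α : Om1 | (B α).ncard ≤ n}).Countable := by
    by_contra hco
    push_neg at hco
    have : (Set.univ : Set Om1).Countable := hcover ▸ Set.countable_iUnion hco
    exact Om1_uncountable (Set.countable_univ_iff.mp this)
  obtain ⟨n, hn⟩ := hexn
  have hinf : {α : Om1 | (B α).ncard ≤ n}.Infinite := fun hfin => hn hfin.countable
  obtain ⟨T, hTsub, hTcard⟩ := hinf.exists_subset_card_eq (2 * n + 2)
  -- Step 7 : find a good pair
  have hpair : ∃ α ∈ T, ∃ β ∈ T, α ≠ β ∧ β ∉ B α ∧ α ∉ B β := by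
    by_contra hcon
    push_neg at hcon
    classical
    set E : Finset (Om1 × Om1) :=
      T.biUnion (fun α => ((hBfin' α).toFinset).image (fun β => (α, β))) with hE
    have hEcard : E.card ≤ n * (2 * n + 2) := by
      calc E.card ≤ ∑ α ∈ T, (((hBfin' α).toFinset).image (fun β => (α, β))).card :=
            Finset.card_biUnion_le
        _ ≤ ∑ _α ∈ T, n := by
            refine Finset.sum_le_sum (fun α hα => ?_)
            refine le_trans Finset.card_image_le ?_
            rw [← Set.ncard_eq_toFinset_card (B α) (hBfin' α)]
            exact hTsub hα
        _ = n * (2 * n + 2) := by rw [Finset.sum_const, smul_eq_mul, hTcard, mul_comm]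
    have hsubE : T.offDiag ⊆ E ∪ E.image Prod.swap := by
      rintro ⟨a, b⟩ hab
      rw [Finset.mem_offDiag] at hab
      obtain ⟨ha, hb, hne'⟩ := hab
      by_cases hbB : b ∈ B a
      · exact Finset.mem_union_left _ (Finset.mem_biUnion.mpr
          ⟨a, ha, Finset.mem_image.mpr ⟨b, (hBfin' a).mem_toFinset.mpr hbB, rfl⟩⟩)
      · have haB : a ∈ B b := hcon a ha b hb hne' hbB
        exact Finset.mem_union_right _ (Finset.mem_image.mpr
          ⟨(b, a), Finset.mem_biUnion.mpr
            ⟨b, hb, Finset.mem_image.mpr ⟨a, (hBfin' b).mem_toFinset.mpr haB, rfl⟩⟩, rfl⟩)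
    have hcount := Finset.card_le_card hsubE
    rw [Finset.offDiag_card, hTcard] at hcount
    have h2' : (E ∪ E.image Prod.swap).card ≤ 2 * (n * (2 * n + 2)) := by
      have h3' := Finset.card_image_le (s := E) (f := Prod.swap)
      have h4' := Finset.card_union_le E (E.image Prod.swap)
      omega
    have hcount' := Nat.sub_le_iff_le_add.mp hcount
    nlinarith [hcount', h2']
  obtain ⟨α, hαT, β, hβT, hαβ, hβB, hαB⟩ := hpair
  -- Step 8 : final contradiction
  have hgood : ∀ i j : Bool,
      supf (f (Quot.mk rel8 (ind2 (α, i) (β, j)))) = {g α, g β} := by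
    intro i j
    have h1 : (f (Quot.mk rel8 (ind2 (α, i) (β, j))) : Γ → Bool) (g α) = true := by
      by_contra h'
      exact hβB (by rw [hBdef]; exact Set.mem_iUnion.mpr ⟨i, Set.mem_iUnion.mpr ⟨j, h'⟩⟩)
    have h2 : (f (Quot.mk rel8 (ind2 (α, i) (β, j))) : Γ → Bool) (g β) = true := by
      have h2' : (f (Quot.mk rel8 (ind2 (β, j) (α, i))) : Γ → Bool) (g β) = true := by
        by_contra h'
        exact hαB (by rw [hBdef]; exact Set.mem_iUnion.mpr ⟨j, Set.mem_iUnion.mpr ⟨i, h'⟩⟩)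
      rwa [ind2_comm] at h2'
    have hgne : g α ≠ g β := fun h => hαβ (ginj h)
    exact (Set.eq_of_subset_of_ncard_le
      (by rintro r (rfl | rfl); exacts [h1, h2])
      (le_trans (supf_ncard _) (Set.ncard_pair hgne).ge) (supf_finite _)).symm
  have heq : f (Quot.mk rel8 (ind2 (α, false) (β, false))) =
      f (Quot.mk rel8 (ind2 (α, true) (β, false))) :=
    ext_supf ((hgood false false).trans (hgood true false).symm)
  have hr := mk_eq_iff.mp (hi heq)
  rcases rel8_supf_cases hr with h1 | ⟨a, h1, h2⟩
  · rw [supf_ind2, supf_ind2] at h1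
    have hm : (α, false) ∈ ({(α, true), (β, false)} : Set (Om1 × Bool)) :=
      h1 ▸ Set.mem_insert _ _
    rcases Set.mem_insert_iff.mp hm with h' | h'
    · exact absurd (congrArg Prod.snd h') (by simp)
    · exact hαβ (congrArg Prod.fst (Set.mem_singleton_iff.mp h'))
  · rw [supf_ind2] at h1
    obtain ⟨hpa, hqa⟩ := pair_sub_singleton h1
    exact hαβ ((congrArg Prod.fst hpa).trans (congrArg Prod.fst hqa).symm)

/-- the quotient `L` of `σ₂(ω₁ × 2)` by the above relation is a
compact Hausdorff space which does not embed into `σ₂(Γ)` for any set `Γ`. -/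
theorem quotient_not_in_EC2 :
    CompactSpace (Quot rel8) ∧ T2Space (Quot rel8) ∧
    ∀ Γ : Type u, ¬ ∃ f : Quot rel8 → ↥(sigmaN Γ 2), Topology.IsEmbedding f :=
  ⟨inferInstance, inferInstance, no_embed⟩
end

section
/- Every continuous Hausdorff image of a compact subspace of σ_2(Γ) (for any set Γ) embeds into σ_3(Γ'), for some set Γ'; equivalently, every continuous image of a space in the class EC₂ belongs to EC₃. -/
open Set Topology

universe u

namespace EC23

lemma bool_ext {a b : Bool} (h : a = true ↔ b = true) : a = b := by
  cases a <;> cases b <;> simp_all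

/-- compact set whose points are "relatively isolated" is finite -/
lemma finite_of_isolated {Q : Type*} [TopologicalSpace Q] {s : Set Q} (hs : IsCompact s)
    (h : ∀ x ∈ s, ∃ O : Set Q, IsOpen O ∧ x ∈ O ∧ s ∩ O ⊆ {x}) : s.Finite := by
  choose O hO hxO hsub using h
  obtain ⟨t, ht⟩ := hs.elim_finite_subcover (fun x : s => O x.1 x.2)
    (fun x => hO x.1 x.2) (fun x hx => mem_iUnion.2 ⟨⟨x, hx⟩, hxO x hx⟩)
  have : s ⊆ (fun x : s => x.1) '' ↑t := by
    intro x hx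
    obtain ⟨i, hi, hxi⟩ := mem_iUnion₂.1 (ht hx)
    have : x = i.1 := hsub i.1 i.2 ⟨hx, hxi⟩
    exact ⟨i, hi, this.symm⟩
  exact (t.finite_toSet.image _).subset this

lemma cylinder_of_nhds {Γ : Type*} {f : Γ → Bool} {s : Set (Γ → Bool)} (hs : s ∈ nhds f) :
    ∃ I : Set Γ, I.Finite ∧ {g | ∀ i ∈ I, g i = f i} ⊆ s := by
  rw [nhds_pi, Filter.mem_pi] at hs
  obtain ⟨I, hIfin, t, hti, hsub⟩ := hs
  refine ⟨I, hIfin, fun g hg => hsub fun i hi => ?_⟩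
  have := hti i
  rw [nhds_discrete, Filter.mem_pure] at this
  rw [hg i hi]; exact this

lemma mem_closure_pi {Γ : Type*} (f : Γ → Bool) (X : Set (Γ → Bool)) (hX : X.Infinite)
    (h : ∀ g ∈ X, ∃ δ, f δ = false ∧ ∀ i, (g i = true ↔ (f i = true ∨ i = δ))) :
    f ∈ closure X := by
  rw [mem_closure_iff_nhds]
  intro s hs
  obtain ⟨I, hIfin, hsub⟩ := cylinder_of_nhds hs
  choose δ hδf hδg using h
  by_contra hne
  -- every g ∈ X has δ g ∈ I
  have hmem : ∀ g (hg : g ∈ X), δ g hg ∈ I := by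
    intro g hg
    by_contra hni
    refine hne ⟨g, hsub (fun i hi => ?_), hg⟩
    refine bool_ext ?_
    rw [hδg g hg i]
    constructor
    · rintro (h1 | rfl)
      · exact h1
      · exact absurd hi hni
    · exact Or.inl
  -- injectivity of δ
  have hfin : X.Finite := by
    have hinj : Set.InjOn (fun g : X => δ g.1 g.2) Set.univ := by
      intro a _ b _ hab
      simp only at hab
      have : a.1 = b.1 := by
        funext i
        refine bool_ext ?_
        rw [hδg a.1 a.2 i, hδg b.1 b.2 i, hab]
      exact Subtype.ext this
    have hfu : Set.Finite (Set.univ : Set X) := by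
      have himg : (fun g : X => δ g.1 g.2) '' Set.univ ⊆ I := by
        rintro _ ⟨g, _, rfl⟩; exact hmem g.1 g.2
      exact Set.Finite.of_finite_image (hIfin.subset himg) hinj
    have : Finite X := Set.finite_univ_iff.1 hfu
    exact Set.toFinite X
  exact hX hfin



def supp {Q Γ : Type*} (e : Q → Γ → Bool) (x : Q) : Set Γ := {γ | e x γ = true}

lemma eq_pair {Γ : Type*} {s : Set Γ} {a b : Γ} (hab : a ≠ b) (ha : a ∈ s) (hb : b ∈ s)
    (hf : s.Finite) (hc : s.ncard ≤ 2) : s = {a, b} := by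
  refine (Set.eq_of_subset_of_ncard_le ?_ ?_ hf).symm
  · rintro x (rfl | rfl) <;> assumption
  · rw [Set.ncard_pair hab]; exact hc

lemma eq_sing {Γ : Type*} {s : Set Γ} {a : Γ} (ha : a ∈ s)
    (hf : s.Finite) (hc : s.ncard ≤ 1) : s = {a} := by
  refine (Set.eq_of_subset_of_ncard_le ?_ ?_ hf).symm
  · rintro x rfl; assumption
  · rw [Set.ncard_singleton]; exact hc

section Defs

variable {Q L Γ : Type*}

def Fib (φ : Q → L) (ℓ : L) : Set Q := φ ⁻¹' {ℓ}

variable (e : Q → Γ → Bool) (φ : Q → L)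

def Dset : Set L := {ℓ | ∀ x ∈ Fib φ ℓ, (supp e x).ncard = 2}

def Mset : Set L :=
  {ℓ | (∃ x ∈ Fib φ ℓ, (supp e x).ncard = 1) ∧ ∀ x ∈ Fib φ ℓ, supp e x ≠ ∅}

def Tset (ℓ : L) : Set Γ := {γ | ∃ x ∈ Fib φ ℓ, supp e x = {γ}}

def W0 (ℓ : L) : Set Q := {x | ∃ γ ∈ Tset e φ ℓ, e x γ = true}

def Em (m : L) : Set Q := Fib φ m \ W0 e φ m

def Xm (m : L) : Set Q := {x | x ∈ W0 e φ m ∧ φ x ≠ m ∧ φ x ∉ Dset e φ}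

def W1 (m : L) : Set Q := (W0 e φ m \ Xm e φ m) ∪ Em e φ m

def Uset (m : L) : Set L := {ℓ | Fib φ ℓ ⊆ W1 e φ m}

end Defs

section Lems
set_option linter.unusedSectionVars false

variable {Q L Γ : Type*} [TopologicalSpace Q] [TopologicalSpace L]
  {e : Q → Γ → Bool} {φ : Q → L}

lemma supp_inj (hinj : Function.Injective e) {x y : Q} (h : supp e x = supp e y) : x = y := by
  apply hinj; funext i
  refine bool_ext ?_
  constructor
  · intro hi; have : i ∈ supp e x := hi; rw [h] at this; exact this
  · intro hi; have : i ∈ supp e y := hi; rw [← h] at this; exact this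

lemma isClopen_V (he : Continuous e) (γ : Γ) : IsClopen {x : Q | e x γ = true} := by
  have : Continuous fun x => e x γ := (continuous_apply γ).comp he
  exact (isClopen_discrete {true}).preimage this

/-- a point whose support is a doubleton is isolated -/
lemma isOpen_singleton_two (he : Continuous e) (hinj : Function.Injective e)
    (hfin : ∀ x, (supp e x).Finite) (hcard : ∀ x, (supp e x).ncard ≤ 2)
    {x : Q} (hx : (supp e x).ncard = 2) : IsOpen ({x} : Set Q) := by
  obtain ⟨a, b, hab, hsx⟩ := Set.ncard_eq_two.1 hx
  have : ({x} : Set Q) = {y | e y a = true} ∩ {y | e y b = true} := by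
    ext y
    simp only [Set.mem_singleton_iff, Set.mem_inter_iff, Set.mem_setOf_eq]
    constructor
    · rintro rfl
      constructor
      · show a ∈ supp e _
        rw [hsx]; exact Set.mem_insert _ _
      · show b ∈ supp e _
        rw [hsx]; exact Set.mem_insert_of_mem _ rfl
    · rintro ⟨hya, hyb⟩
      have h1 : supp e y = {a, b} := eq_pair hab hya hyb (hfin y) (hcard y)
      exact supp_inj hinj (h1.trans hsx.symm)
  rw [this]
  exact ((isClopen_V he a).inter (isClopen_V he b)).isOpen

lemma isOpen_dbl (he : Continuous e) (hinj : Function.Injective e)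
    (hfin : ∀ x, (supp e x).Finite) (hcard : ∀ x, (supp e x).ncard ≤ 2) :
    IsOpen {x : Q | (supp e x).ncard = 2} := by
  rw [isOpen_iff_forall_mem_open]
  intro x hx
  exact ⟨{x}, by rintro y rfl; exact hx, isOpen_singleton_two he hinj hfin hcard hx, rfl⟩

lemma finite_of_dbl (he : Continuous e) (hinj : Function.Injective e)
    (hfin : ∀ x, (supp e x).Finite) (hcard : ∀ x, (supp e x).ncard ≤ 2)
    {s : Set Q} (hsc : IsCompact s) (h : ∀ x ∈ s, (supp e x).ncard = 2) : s.Finite := by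
  refine finite_of_isolated hsc fun x hx => ⟨{x}, isOpen_singleton_two he hinj hfin hcard (h x hx),
    rfl, fun y hy => hy.2⟩

lemma finite_of_sing (he : Continuous e) (hinj : Function.Injective e)
    (hfin : ∀ x, (supp e x).Finite)
    {s : Set Q} (hsc : IsCompact s) (h : ∀ x ∈ s, (supp e x).ncard = 1) : s.Finite := by
  refine finite_of_isolated hsc fun x hx => ?_
  obtain ⟨γ, hγ⟩ := Set.ncard_eq_one.1 (h x hx)
  refine ⟨{y | e y γ = true}, (isClopen_V he γ).isOpen, ?_, ?_⟩
  · show γ ∈ supp e x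
    rw [hγ]; rfl
  · rintro y ⟨hys, hyγ⟩
    have h1 : supp e y = {γ} := eq_sing hyγ (hfin y) (h y hys).le
    exact supp_inj hinj (h1.trans hγ.symm)

/-- set of points with doubleton support that is finite, is clopen -/
lemma isClopen_finite_dbl [T1Space Q] (he : Continuous e) (hinj : Function.Injective e)
    (hfin : ∀ x, (supp e x).Finite) (hcard : ∀ x, (supp e x).ncard ≤ 2)
    {s : Set Q} (hsf : s.Finite) (h : ∀ x ∈ s, (supp e x).ncard = 2) : IsClopen s := by
  refine ⟨hsf.isClosed, ?_⟩
  rw [isOpen_iff_forall_mem_open]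
  intro x hx
  exact ⟨{x}, by rintro y rfl; exact hx, isOpen_singleton_two he hinj hfin hcard (h x hx), rfl⟩


lemma clQ (hemb : Topology.IsEmbedding e) {z : Q} {X : Set Q} (hX : X.Infinite)
    (h : ∀ x ∈ X, ∃ δ, δ ∉ supp e z ∧ supp e x = insert δ (supp e z)) :
    z ∈ closure X := by
  rw [hemb.closure_eq_preimage_closure_image, Set.mem_preimage]
  refine mem_closure_pi (e z) (e '' X) ((Set.infinite_image_iff hemb.injective.injOn).2 hX) ?_
  rintro g ⟨x, hx, rfl⟩
  obtain ⟨δ, hδ, hsupp⟩ := h x hx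
  refine ⟨δ, ?_, fun i => ?_⟩
  · have : ¬ (e z δ = true) := hδ
    simpa using this
  · constructor
    · intro hi
      have h2 : i ∈ supp e x := hi
      rw [hsupp] at h2
      rcases h2 with rfl | hmem
      · right; rfl
      · left; exact hmem
    · rintro (hi | rfl)
      · show i ∈ supp e x
        rw [hsupp]; exact Set.mem_insert_of_mem _ hi
      · show i ∈ supp e x
        rw [hsupp]; exact Set.mem_insert _ _

lemma tset_disj {γ : Γ} {ℓ ℓ' : L} (hinj : Function.Injective e)
    (h1 : γ ∈ Tset e φ ℓ) (h2 : γ ∈ Tset e φ ℓ') : ℓ = ℓ' := by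
  obtain ⟨x, hx, hsx⟩ := h1
  obtain ⟨y, hy, hsy⟩ := h2
  have : x = y := supp_inj hinj (hsx.trans hsy.symm)
  subst this
  exact hx.symm.trans hy

lemma mset_card_le_one {ℓ : L} {x : Q} (hfin : ∀ x, (supp e x).Finite)
    (hcard : ∀ x, (supp e x).ncard ≤ 2)
    (hℓ : ℓ ∈ Mset e φ) (hx : x ∈ Fib φ ℓ) (hnd : (supp e x).ncard ≠ 2) :
    (supp e x).ncard = 1 := by
  have h1 : (supp e x) ≠ ∅ := hℓ.2 x hx
  have h2 : (supp e x).ncard ≤ 2 := hcard x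
  have h3 : (supp e x).ncard ≠ 0 := by
    intro h0
    exact h1 ((Set.ncard_eq_zero (hfin x)).1 h0)
  omega


lemma fib_compact [CompactSpace Q] [T1Space L] (hc : Continuous φ) (ℓ : L) :
    IsCompact (Fib φ ℓ) :=
  (isClosed_singleton.preimage hc).isCompact

lemma tset_finite [CompactSpace Q] [T1Space L] (he : Continuous e)
    (hinj : Function.Injective e) (hfin : ∀ x, (supp e x).Finite)
    (hcard : ∀ x, (supp e x).ncard ≤ 2) (hc : Continuous φ)
    {m : L} (hm : m ∈ Mset e φ) : (Tset e φ m).Finite := by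
  set s := Fib φ m ∩ {x | (supp e x).ncard = 2}ᶜ with hs
  have hcl : IsClosed s := (isClosed_singleton.preimage hc).inter
    (isOpen_dbl he hinj hfin hcard).isClosed_compl
  have hsing : ∀ x ∈ s, (supp e x).ncard = 1 := fun x hx =>
    mset_card_le_one hfin hcard hm hx.1 hx.2
  have hsfin : s.Finite := finite_of_sing he hinj hfin hcl.isCompact hsing
  refine (hsfin.biUnion (fun x _ => hfin x)).subset ?_
  rintro γ ⟨x, hx, hsx⟩
  refine Set.mem_biUnion (⟨hx, ?_⟩ : x ∈ s) ?_
  · simp only [Set.mem_compl_iff, Set.mem_setOf_eq, hsx, Set.ncard_singleton]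
    omega
  · rw [hsx]; rfl

lemma w0_eq (m : L) : W0 e φ m = ⋃ γ ∈ Tset e φ m, {x | e x γ = true} := by
  ext x; simp [W0]

lemma isClopen_w0 [CompactSpace Q] [T1Space L] (he : Continuous e)
    (hinj : Function.Injective e) (hfin : ∀ x, (supp e x).Finite)
    (hcard : ∀ x, (supp e x).ncard ≤ 2) (hc : Continuous φ)
    {m : L} (hm : m ∈ Mset e φ) : IsClopen (W0 e φ m) := by
  rw [w0_eq]
  exact (tset_finite he hinj hfin hcard hc hm).isClopen_biUnion fun γ _ => isClopen_V he γ

lemma em_dbl (hfin : ∀ x, (supp e x).Finite) (hcard : ∀ x, (supp e x).ncard ≤ 2)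
    {m : L} (hm : m ∈ Mset e φ) : ∀ x ∈ Em e φ m, (supp e x).ncard = 2 := by
  rintro x ⟨hxf, hxw⟩
  by_contra hne
  have h1 : (supp e x).ncard = 1 := mset_card_le_one hfin hcard hm hxf hne
  obtain ⟨γ, hγ⟩ := Set.ncard_eq_one.1 h1
  exact hxw ⟨γ, ⟨x, hxf, hγ⟩, by rw [show (e x γ = true) = (γ ∈ supp e x) from rfl, hγ]; rfl⟩

lemma em_finite [CompactSpace Q] [T1Space L] (he : Continuous e)
    (hinj : Function.Injective e) (hfin : ∀ x, (supp e x).Finite)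
    (hcard : ∀ x, (supp e x).ncard ≤ 2) (hc : Continuous φ)
    {m : L} (hm : m ∈ Mset e φ) : (Em e φ m).Finite := by
  have hcl : IsClosed (Em e φ m) := (isClosed_singleton.preimage hc).inter
    (isClopen_w0 he hinj hfin hcard hc hm).isOpen.isClosed_compl
  exact finite_of_dbl he hinj hfin hcard hcl.isCompact (em_dbl hfin hcard hm)

lemma xm_dbl (hinj : Function.Injective e) (hfin : ∀ x, (supp e x).Finite)
    (hcard : ∀ x, (supp e x).ncard ≤ 2)
    {m : L} : ∀ x ∈ Xm e φ m, (supp e x).ncard = 2 := by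
  rintro x ⟨⟨γ, hγT, hγx⟩, hne, _⟩
  by_contra hnot
  have hle : (supp e x).ncard ≤ 1 := by
    have := hcard x; omega
  have hx1 : supp e x = {γ} := eq_sing hγx (hfin x) hle
  exact hne (tset_disj hinj ⟨x, rfl, hx1⟩ hγT)


lemma xm_finite [CompactSpace Q] [T2Space L] (he : Continuous e)
    (hinj : Function.Injective e) (hfin : ∀ x, (supp e x).Finite)
    (hcard : ∀ x, (supp e x).ncard ≤ 2) (hc : Continuous φ)
    {m : L} (hm : m ∈ Mset e φ) : (Xm e φ m).Finite := by
  have hce : Topology.IsClosedEmbedding e := he.isClosedEmbedding hinj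
  by_contra hinf
  rw [← Set.not_infinite, not_not] at hinf
  -- pigeonhole: one γ⋆ ∈ Tset m carries infinitely many elements of Xm
  have hpig : ∃ γ ∈ Tset e φ m, {x | x ∈ Xm e φ m ∧ γ ∈ supp e x}.Infinite := by
    by_contra hno
    push_neg at hno
    refine hinf (((tset_finite he hinj hfin hcard hc hm).biUnion
      (fun γ hγ => hno γ hγ)).subset ?_)
    rintro x hx
    obtain ⟨γ, hγT, hγx⟩ := hx.1
    exact Set.mem_biUnion hγT ⟨hx, hγx⟩
  obtain ⟨γs, hγsT, hX'inf⟩ := hpig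
  set X' := {x | x ∈ Xm e φ m ∧ γs ∈ supp e x} with hX'def
  obtain ⟨z, hzFib, hzsupp⟩ := hγsT
  have hφz : φ z = m := hzFib
  -- each element of X' has support of the form insert δ (supp z)
  have hform : ∀ x ∈ X', ∃ δ, δ ∉ supp e z ∧ supp e x = insert δ (supp e z) := by
    rintro x ⟨hxX, hγsx⟩
    have h2 : (supp e x).ncard = 2 := xm_dbl hinj hfin hcard x hxX
    obtain ⟨a, b, hab, hsx⟩ := Set.ncard_eq_two.1 h2
    rw [hzsupp]
    have : γs ∈ ({a, b} : Set Γ) := hsx ▸ hγsx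
    rcases this with rfl | hb
    · exact ⟨b, by simp [hab.symm], by rw [hsx, Set.pair_comm]⟩
    · rw [Set.mem_singleton_iff] at hb
      subst hb
      exact ⟨a, by simp [hab], by rw [hsx]⟩
  -- case (i): some fiber meets X' in an infinite set
  by_cases hcase : ∃ ℓ, (X' ∩ Fib φ ℓ).Infinite
  · obtain ⟨ℓ, hℓinf⟩ := hcase
    have hz : z ∈ closure (X' ∩ Fib φ ℓ) :=
      clQ hce.toIsEmbedding hℓinf (fun x hx => hform x hx.1)
    have : z ∈ Fib φ ℓ :=
      (IsClosed.closure_subset_iff (isClosed_singleton.preimage hc)).2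
        Set.inter_subset_right hz
    have hℓm : ℓ = m := by
      have h1 : φ z = ℓ := this
      rw [← h1]; exact hφz
    obtain ⟨x, hx⟩ := hℓinf.nonempty
    have h2 : φ x = ℓ := hx.2
    exact hx.1.1.2.1 (h2.trans hℓm)
  · push_neg at hcase
    -- images of infinite subsets of X' are infinite
    have himg : ∀ Y, Y ⊆ X' → Y.Infinite → (φ '' Y).Infinite := by
      intro Y hsub hYinf hfinIm
      have hYsub : Y ⊆ ⋃ ℓ ∈ φ '' Y, (X' ∩ Fib φ ℓ) := by
        intro x hx
        exact Set.mem_biUnion ⟨x, hx, rfl⟩ ⟨hsub hx, rfl⟩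
      exact hYinf ((hfinIm.biUnion fun ℓ _ => hcase ℓ).subset hYsub)
    -- infinitely many image points have a singleton-support fiber point
    have hsingset : ∀ Y, Y ⊆ X' → Y.Infinite →
        {ℓ ∈ φ '' Y | ∃ y, φ y = ℓ ∧ (supp e y).ncard = 1}.Infinite := by
      intro Y hsub hYinf
      have hIm := himg Y hsub hYinf
      have hdiff : (φ '' Y \ {ℓ ∈ φ '' Y | ∃ y, φ y = ℓ ∧ (supp e y).ncard = 1})
          ⊆ φ '' {x | supp e x = ∅} := by
        rintro ℓ ⟨⟨x, hxY, rfl⟩, hnot⟩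
        have hne : ¬ ∃ y, φ y = φ x ∧ (supp e y).ncard = 1 :=
          fun hex => hnot ⟨⟨x, hxY, rfl⟩, hex⟩
        have hxX' : x ∈ X' := hsub hxY
        have hnd : φ x ∉ Dset e φ := hxX'.1.2.2
        simp only [Dset, Set.mem_setOf_eq, not_forall] at hnd
        obtain ⟨y, hyF, hy2⟩ := hnd
        have hyφ : φ y = φ x := hyF
        have h1 : ¬ ((supp e y).ncard = 1) := fun h1 => hne ⟨y, hyφ, h1⟩
        have h0 : (supp e y).ncard = 0 := by have := hcard y; omega
        exact ⟨y, (Set.ncard_eq_zero (hfin y)).1 h0, hyφ⟩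
      have hz0fin : (φ '' {x | supp e x = ∅}).Finite := by
        apply Set.Subsingleton.finite
        rintro a ⟨x, hx, rfl⟩ b ⟨y, hy, rfl⟩
        rw [supp_inj hinj ((show supp e x = ∅ from hx).trans (show supp e y = ∅ from hy).symm)]
      have h2 : (φ '' Y \ {ℓ ∈ φ '' Y | ∃ y, φ y = ℓ ∧ (supp e y).ncard = 1}).Finite :=
        hz0fin.subset hdiff
      refine (hIm.diff h2).mono ?_
      rintro ℓ ⟨hℓY, hℓn⟩
      by_contra hnS
      exact hℓn ⟨hℓY, hnS⟩
    have hS1inf := hsingset X' Set.Subset.rfl hX'inf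
    haveI := hS1inf.to_subtype
    choose g hg1 hg2 using
      (fun ℓ : {ℓ ∈ φ '' X' | ∃ y, φ y = ℓ ∧ (supp e y).ncard = 1} => ℓ.2.2)
    have hginj : Function.Injective g := fun a b hab =>
      Subtype.ext (by rw [← hg1 a, ← hg1 b, hab])
    have hYrange : (Set.range g).Infinite := Set.infinite_range_of_injective hginj
    have hcl0 : (fun _ => false : Γ → Bool) ∈ closure (e '' Set.range g) := by
      refine mem_closure_pi _ _ ((Set.infinite_image_iff hinj.injOn).2 hYrange) ?_
      rintro _ ⟨y, ⟨ℓ, rfl⟩, rfl⟩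
      obtain ⟨δ, hδ⟩ := Set.ncard_eq_one.1 (hg2 ℓ)
      refine ⟨δ, rfl, fun i => ?_⟩
      constructor
      · intro hi
        have h3 : i ∈ supp e (g ℓ) := hi
        rw [hδ] at h3
        exact Or.inr h3
      · rintro (hfalse | rfl)
        · exact absurd hfalse (by simp)
        · show i ∈ supp e (g ℓ)
          rw [hδ]; rfl
    have hx0ex : (fun _ => false : Γ → Bool) ∈ Set.range e :=
      (hce.isClosed_range.closure_subset_iff.2 (Set.image_subset_range e _)) hcl0
    obtain ⟨x₀, hx₀⟩ := hx0ex
    have hx0supp : supp e x₀ = ∅ := by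
      ext i; simp [supp, hx₀]
    have hpm : m ≠ φ x₀ := by
      intro h
      exact hm.2 x₀ (show φ x₀ = m from h.symm) hx0supp
    obtain ⟨Nm, Np, hNmo, hNpo, hmN, hpN, hdisj⟩ := t2_separation hpm
    have hdifffin : (X' \ φ ⁻¹' Nm).Finite := by
      rw [← Set.not_infinite]
      intro hbad
      have hz2 : z ∈ closure (X' \ φ ⁻¹' Nm) :=
        clQ hce.toIsEmbedding hbad (fun x hx => hform x hx.1)
      have hzc : z ∈ φ ⁻¹' Nmᶜ :=
        (IsClosed.closure_subset_iff ((hNmo.isClosed_compl).preimage hc)).2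
          (fun x hx => hx.2) hz2
      exact hzc (show φ z ∈ Nm by rw [hφz]; exact hmN)
    have hX2inf : (X' ∩ φ ⁻¹' Nm).Infinite := by
      refine (hX'inf.diff hdifffin).mono ?_
      rintro x ⟨hx1, hx2⟩
      refine ⟨hx1, ?_⟩
      by_contra h
      exact hx2 ⟨hx1, h⟩
    have hS2inf := hsingset _ Set.inter_subset_left hX2inf
    haveI := hS2inf.to_subtype
    choose g2 hg21 hg22 using
      (fun ℓ : {ℓ ∈ φ '' (X' ∩ φ ⁻¹' Nm) | ∃ y, φ y = ℓ ∧ (supp e y).ncard = 1} => ℓ.2.2)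
    have hg2inj : Function.Injective g2 := fun a b hab =>
      Subtype.ext (by rw [← hg21 a, ← hg21 b, hab])
    have hY2inf : (Set.range g2).Infinite := Set.infinite_range_of_injective hg2inj
    have hY3fin : (Set.range g2 \ φ ⁻¹' Np).Finite := by
      rw [← Set.not_infinite]
      intro hbad
      have hx0cl : x₀ ∈ closure (Set.range g2 \ φ ⁻¹' Np) := by
        refine clQ hce.toIsEmbedding hbad ?_
        rintro _ ⟨⟨ℓ, rfl⟩, _⟩
        obtain ⟨δ, hδ⟩ := Set.ncard_eq_one.1 (hg22 ℓ)
        refine ⟨δ, by rw [hx0supp]; exact Set.notMem_empty δ, by rw [hδ, hx0supp]; simp⟩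
      have hxc : x₀ ∈ φ ⁻¹' Npᶜ :=
        (IsClosed.closure_subset_iff ((hNpo.isClosed_compl).preimage hc)).2
          (fun x hx => hx.2) hx0cl
      exact hxc hpN
    obtain ⟨y, hy⟩ := (hY2inf.diff hY3fin).nonempty
    obtain ⟨ℓ2, rfl⟩ := hy.1
    have hyNp : φ (g2 ℓ2) ∈ Np := by
      by_contra h
      exact hy.2 ⟨⟨ℓ2, rfl⟩, h⟩
    have hℓNp : (ℓ2 : L) ∈ Np := by rw [← hg21 ℓ2]; exact hyNp
    have hℓNm : (ℓ2 : L) ∈ Nm := by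
      obtain ⟨⟨x, hxmem, hφx⟩, _⟩ := ℓ2.2
      rw [← hφx]; exact hxmem.2
    exact Set.disjoint_left.1 hdisj hℓNm hℓNp


lemma isClopen_w1 [CompactSpace Q] [T2Space Q] [T2Space L] (he : Continuous e)
    (hinj : Function.Injective e) (hfin : ∀ x, (supp e x).Finite)
    (hcard : ∀ x, (supp e x).ncard ≤ 2) (hc : Continuous φ)
    {m : L} (hm : m ∈ Mset e φ) : IsClopen (W1 e φ m) :=
  ((isClopen_w0 he hinj hfin hcard hc hm).diff
    (isClopen_finite_dbl he hinj hfin hcard (xm_finite he hinj hfin hcard hc hm)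
      (xm_dbl hinj hfin hcard))).union
  (isClopen_finite_dbl he hinj hfin hcard (em_finite he hinj hfin hcard hc hm)
      (em_dbl hfin hcard hm))

lemma fib_subset_w1 {m : L} : Fib φ m ⊆ W1 e φ m := by
  intro x hx
  have hφx : φ x = m := hx
  by_cases hW : x ∈ W0 e φ m
  · exact Or.inl ⟨hW, fun hXm => hXm.2.1 hφx⟩
  · exact Or.inr ⟨hx, hW⟩

lemma fib_disj_w1 {m ℓ : L} (hℓm : ℓ ≠ m) (hℓD : ℓ ∉ Dset e φ) :
    Fib φ ℓ ∩ W1 e φ m = ∅ := by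
  ext x
  simp only [Set.mem_inter_iff, Set.mem_empty_iff_false, iff_false, not_and]
  rintro hxf (⟨hW0, hnX⟩ | ⟨hfm, _⟩)
  · exact hnX ⟨hW0, by rw [show φ x = ℓ from hxf]; exact hℓm, by rw [show φ x = ℓ from hxf]; exact hℓD⟩
  · exact hℓm ((show φ x = ℓ from hxf).symm.trans hfm)

lemma mem_uset_self {m : L} : m ∈ Uset e φ m := fib_subset_w1

lemma fib_d_finite [CompactSpace Q] [T1Space L] (he : Continuous e)
    (hinj : Function.Injective e) (hfin : ∀ x, (supp e x).Finite)
    (hcard : ∀ x, (supp e x).ncard ≤ 2) (hc : Continuous φ)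
    {ℓ : L} (hd : ℓ ∈ Dset e φ) : (Fib φ ℓ).Finite :=
  finite_of_dbl he hinj hfin hcard (fib_compact hc ℓ) hd

lemma isClopen_fib_d [CompactSpace Q] [T2Space Q] [T2Space L] (he : Continuous e)
    (hinj : Function.Injective e) (hfin : ∀ x, (supp e x).Finite)
    (hcard : ∀ x, (supp e x).ncard ≤ 2) (hc : Continuous φ)
    {ℓ : L} (hd : ℓ ∈ Dset e φ) : IsClopen (Fib φ ℓ) :=
  isClopen_finite_dbl he hinj hfin hcard (fib_d_finite he hinj hfin hcard hc hd) hd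

lemma isOpen_singleton_d [CompactSpace Q] [T2Space Q] [T2Space L] (he : Continuous e)
    (hinj : Function.Injective e) (hfin : ∀ x, (supp e x).Finite)
    (hcard : ∀ x, (supp e x).ncard ≤ 2) (hc : Continuous φ) (hs : Function.Surjective φ)
    {ℓ : L} (hd : ℓ ∈ Dset e φ) : IsOpen ({ℓ} : Set L) := by
  have heq : ({ℓ} : Set L) = (φ '' (Fib φ ℓ)ᶜ)ᶜ := by
    ext ℓ'
    simp only [Set.mem_singleton_iff, Set.mem_compl_iff, Set.mem_image, not_exists, not_and]
    constructor
    · rintro rfl x hx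
      exact fun h => hx h
    · intro h
      by_contra hne
      obtain ⟨x, hx⟩ := hs ℓ'
      exact h x (fun hmem => hne ((hx.symm.trans hmem))) hx
  rw [heq]
  exact (hc.isClosedMap _ (isClopen_fib_d he hinj hfin hcard hc hd).compl.isClosed).isOpen_compl

lemma uset_eq {m : L} : Uset e φ m = (φ '' (W1 e φ m)ᶜ)ᶜ := by
  ext ℓ
  simp only [Uset, Set.mem_setOf_eq, Set.mem_compl_iff, Set.mem_image, not_exists, not_and]
  constructor
  · intro h x hx hφx
    exact hx (h (show φ x = ℓ from hφx))
  · intro h x hx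
    by_contra hn
    exact h x hn hx

lemma isOpen_uset [CompactSpace Q] [T2Space Q] [T2Space L] (he : Continuous e)
    (hinj : Function.Injective e) (hfin : ∀ x, (supp e x).Finite)
    (hcard : ∀ x, (supp e x).ncard ≤ 2) (hc : Continuous φ)
    {m : L} (hm : m ∈ Mset e φ) : IsOpen (Uset e φ m) := by
  rw [uset_eq]
  exact (hc.isClosedMap _ (isClopen_w1 he hinj hfin hcard hc hm).compl.isClosed).isOpen_compl

lemma isClopen_uset [CompactSpace Q] [T2Space Q] [T2Space L] (he : Continuous e)
    (hinj : Function.Injective e) (hfin : ∀ x, (supp e x).Finite)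
    (hcard : ∀ x, (supp e x).ncard ≤ 2) (hc : Continuous φ) (hs : Function.Surjective φ)
    {m : L} (hm : m ∈ Mset e φ) : IsClopen (Uset e φ m) := by
  refine ⟨?_, isOpen_uset he hinj hfin hcard hc hm⟩
  rw [← closure_subset_iff_isClosed]
  intro ℓ hℓ
  by_cases hℓU : ℓ ∈ Uset e φ m
  · exact hℓU
  by_cases hℓD : ℓ ∈ Dset e φ
  · -- ℓ is isolated, so it must lie in the open set it is in the closure of
    have : ({ℓ} ∩ Uset e φ m).Nonempty := by
      rw [mem_closure_iff] at hℓ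
      exact hℓ {ℓ} (isOpen_singleton_d he hinj hfin hcard hc hs hℓD) rfl
    obtain ⟨x, hx1, hx2⟩ := this
    rwa [← hx1]
  by_cases hℓm : ℓ = m
  · exact absurd (hℓm ▸ mem_uset_self) hℓU
  -- now Fib ℓ ∩ W1 m = ∅, giving an open neighbourhood disjoint from Uset
  exfalso
  have hdisj := fib_disj_w1 (e := e) hℓm hℓD
  have hO : IsOpen ((φ '' W1 e φ m)ᶜ) :=
    (hc.isClosedMap _ (isClopen_w1 he hinj hfin hcard hc hm).isClosed).isOpen_compl
  have hℓO : ℓ ∈ (φ '' W1 e φ m)ᶜ := by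
    rintro ⟨x, hxW, hφx⟩
    exact Set.eq_empty_iff_forall_notMem.1 hdisj x ⟨hφx, hxW⟩
  rw [mem_closure_iff] at hℓ
  obtain ⟨ℓ', hℓ'O, hℓ'U⟩ := hℓ _ hO hℓO
  obtain ⟨x, hx⟩ := hs ℓ'
  exact hℓ'O ⟨x, hℓ'U (show φ x = ℓ' from hx), hx⟩


lemma d_m_disj (hfin : ∀ x, (supp e x).Finite) {ℓ : L} (hM : ℓ ∈ Mset e φ) :
    ℓ ∉ Dset e φ := by
  obtain ⟨⟨y, hy, h1⟩, _⟩ := hM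
  intro hD
  have := hD y hy
  omega

lemma not_d_not_m (hfin : ∀ x, (supp e x).Finite) (hcard : ∀ x, (supp e x).ncard ≤ 2)
    {ℓ : L} (hℓD : ℓ ∉ Dset e φ) (hℓM : ℓ ∉ Mset e φ) :
    ∃ x, x ∈ Fib φ ℓ ∧ supp e x = ∅ := by
  simp only [Dset, Set.mem_setOf_eq, not_forall] at hℓD
  obtain ⟨x, hxF, hx2⟩ := hℓD
  by_cases h0 : (supp e x).ncard = 0
  · exact ⟨x, hxF, (Set.ncard_eq_zero (hfin x)).1 h0⟩
  · have h1 : (supp e x).ncard = 1 := by have := hcard x; omega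
    simp only [Mset, Set.mem_setOf_eq, not_and, not_forall] at hℓM
    obtain ⟨y, hyF, hy⟩ := hℓM ⟨x, hxF, h1⟩
    rw [not_not] at hy
    exact ⟨y, hyF, hy⟩

lemma empty_not_w1 {x : Q} {ℓ m : L} (hx0 : supp e x = ∅) (hxφ : φ x = ℓ)
    (hne : ℓ ≠ m) : x ∉ W1 e φ m := by
  rintro (⟨⟨γ, _, hγ⟩, _⟩ | ⟨hf, _⟩)
  · have : γ ∈ supp e x := hγ
    rw [hx0] at this
    exact this
  · exact hne (hxφ.symm.trans hf)

lemma count_d (hinj : Function.Injective e) (hfin : ∀ x, (supp e x).Finite)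
    (hcard : ∀ x, (supp e x).ncard ≤ 2) (hs : Function.Surjective φ)
    {ℓ : L} (hℓM : ℓ ∉ Mset e φ) :
    {m : ↥(Mset e φ) | ℓ ∈ Uset e φ m.1}.Finite ∧
      {m : ↥(Mset e φ) | ℓ ∈ Uset e φ m.1}.ncard ≤ 2 := by
  classical
  obtain ⟨x, hx⟩ := hs ℓ
  have hxFib : x ∈ Fib φ ℓ := hx
  have hW : ∀ m : ↥(Mset e φ), ℓ ∈ Uset e φ m.1 →
      ∃ γ, γ ∈ Tset e φ m.1 ∧ γ ∈ supp e x := by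
    intro m hmU
    have hxW1 : x ∈ W1 e φ m.1 := hmU hxFib
    rcases hxW1 with ⟨⟨γ, hγT, hγx⟩, _⟩ | ⟨hfm, _⟩
    · exact ⟨γ, hγT, hγx⟩
    · exfalso
      exact hℓM (by rw [hx.symm.trans (show φ x = m.1 from hfm)]; exact m.2)
  by_cases hS : {m : ↥(Mset e φ) | ℓ ∈ Uset e φ m.1} = ∅
  · rw [hS]
    exact ⟨Set.finite_empty, by simp⟩
  obtain ⟨m₀, hm₀⟩ := Set.nonempty_iff_ne_empty.2 hS
  obtain ⟨γ₀, _, _⟩ := hW m₀ hm₀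
  have hWS : ∀ m ∈ {m : ↥(Mset e φ) | ℓ ∈ Uset e φ m.1},
      ∃ γ, γ ∈ Tset e φ m.1 ∧ γ ∈ supp e x := fun m hm => hW m hm
  choose w hwT hwx using hWS
  set w' : ↥(Mset e φ) → Γ := fun m => if h : m ∈ {m : ↥(Mset e φ) | ℓ ∈ Uset e φ m.1}
    then w m h else γ₀ with hw'
  have hmaps : ∀ m ∈ {m : ↥(Mset e φ) | ℓ ∈ Uset e φ m.1}, w' m ∈ supp e x := by
    intro m hm
    rw [hw']; simp only [hm, dif_pos]
    exact hwx m hm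
  have hinjOn : Set.InjOn w' {m : ↥(Mset e φ) | ℓ ∈ Uset e φ m.1} := by
    intro a ha b hb hab
    simp only [hw', dif_pos ha, dif_pos hb] at hab
    exact Subtype.ext (tset_disj hinj (hab ▸ hwT a ha) (hwT b hb))
  constructor
  · exact Set.Finite.of_finite_image ((hfin x).subset (by
      rintro _ ⟨m, hm, rfl⟩; exact hmaps m hm)) hinjOn
  · exact le_trans (Set.ncard_le_ncard_of_injOn w' hmaps hinjOn (hfin x)) (hcard x)

end Lems


theorem main {Q L Γ : Type u} [TopologicalSpace Q] [CompactSpace Q]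
    [TopologicalSpace L] [T2Space L]
    (e : Q → Γ → Bool) (he : Continuous e) (hinj : Function.Injective e)
    (hfin : ∀ x, (supp e x).Finite) (hcard : ∀ x, (supp e x).ncard ≤ 2)
    (φ : Q → L) (hc : Continuous φ) (hs : Function.Surjective φ) :
    ∃ (Γ' : Type u) (f : L → ↥(sigmaN Γ' 3)), Topology.IsEmbedding f := by
  classical
  have hce : Topology.IsClosedEmbedding e := he.isClosedEmbedding hinj
  haveI : T2Space Q := hce.toIsEmbedding.t2Space
  haveI : CompactSpace L := ⟨by rw [← hs.range_eq]; exact isCompact_range hc⟩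
  refine ⟨(↥(Dset e φ) ⊕ ↥(Mset e φ) : Type u), ?_⟩
  set 𝒰 : (↥(Dset e φ) ⊕ ↥(Mset e φ)) → Set L :=
    Sum.elim (fun d => {d.1}) (fun m => Uset e φ m.1) with h𝒰
  have h𝒰co : ∀ j, IsClopen (𝒰 j) := by
    rintro (d | m)
    · exact ⟨isClosed_singleton, isOpen_singleton_d he hinj hfin hcard hc hs d.2⟩
    · exact isClopen_uset he hinj hfin hcard hc hs m.2
  have hUiff : ∀ (m : ↥(Mset e φ)) ℓ, ℓ ∈ Uset e φ m.1 → ℓ ≠ m.1 → ℓ ∉ Dset e φ → False := by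
    intro m ℓ hℓU hne hnD
    obtain ⟨x, hx⟩ := hs ℓ
    have hmem : x ∈ Fib φ ℓ ∩ W1 e φ m.1 := ⟨hx, hℓU hx⟩
    rw [fib_disj_w1 hne hnD] at hmem
    exact hmem
  -- at most three sets through each point
  have hsupp3 : ∀ ℓ : L, {j | ℓ ∈ 𝒰 j}.Finite ∧ {j | ℓ ∈ 𝒰 j}.ncard ≤ 3 := by
    intro ℓ
    by_cases hℓD : ℓ ∈ Dset e φ
    · have hℓM : ℓ ∉ Mset e φ := fun h => d_m_disj hfin h hℓD
      obtain ⟨hSfin, hScard⟩ := count_d hinj hfin hcard hs hℓM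
      have hsub : {j | ℓ ∈ 𝒰 j} ⊆ insert (Sum.inl ⟨ℓ, hℓD⟩)
          (Sum.inr '' {m : ↥(Mset e φ) | ℓ ∈ Uset e φ m.1}) := by
        rintro (d | m) hj
        · have hd : ℓ = d.1 := hj
          have : d = (⟨ℓ, hℓD⟩ : ↥(Dset e φ)) := Subtype.ext hd.symm
          rw [this]
          exact Set.mem_insert _ _
        · exact Set.mem_insert_of_mem _ ⟨m, hj, rfl⟩
      have hbig : (insert ((Sum.inl ⟨ℓ, hℓD⟩ : ↥(Dset e φ) ⊕ ↥(Mset e φ)))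
          (Sum.inr '' {m : ↥(Mset e φ) | ℓ ∈ Uset e φ m.1})).Finite :=
        (hSfin.image _).insert _
      refine ⟨hbig.subset hsub, ?_⟩
      calc {j | ℓ ∈ 𝒰 j}.ncard ≤ _ := Set.ncard_le_ncard hsub hbig
        _ ≤ (Sum.inr '' {m : ↥(Mset e φ) | ℓ ∈ Uset e φ m.1}).ncard + 1 :=
            Set.ncard_insert_le _ _
        _ ≤ {m : ↥(Mset e φ) | ℓ ∈ Uset e φ m.1}.ncard + 1 := by
            have := Set.ncard_image_le
              (f := (Sum.inr : ↥(Mset e φ) → ↥(Dset e φ) ⊕ ↥(Mset e φ)))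
              (s := {m : ↥(Mset e φ) | ℓ ∈ Uset e φ m.1}) hSfin
            omega
        _ ≤ 3 := by omega
    by_cases hℓM : ℓ ∈ Mset e φ
    · have hsub : {j | ℓ ∈ 𝒰 j} ⊆ {Sum.inr ⟨ℓ, hℓM⟩} := by
        rintro (d | m) hj
        · exfalso
          exact hℓD (by rw [show ℓ = d.1 from hj]; exact d.2)
        · by_cases hme : ℓ = m.1
          · have : m = (⟨ℓ, hℓM⟩ : ↥(Mset e φ)) := Subtype.ext hme.symm
            rw [this]
            rfl
          · exact absurd (hUiff m ℓ hj hme hℓD) not_false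
      refine ⟨(Set.finite_singleton _).subset hsub, ?_⟩
      calc {j | ℓ ∈ 𝒰 j}.ncard ≤ _ := Set.ncard_le_ncard hsub (Set.finite_singleton _)
        _ ≤ 3 := by rw [Set.ncard_singleton]; omega
    · obtain ⟨x, hxF, hx0⟩ := not_d_not_m hfin hcard hℓD hℓM
      have hempty : {j | ℓ ∈ 𝒰 j} = ∅ := by
        ext j
        simp only [Set.mem_setOf_eq, Set.mem_empty_iff_false, iff_false]
        rcases j with d | m
        · intro hj
          exact hℓD (by rw [show ℓ = d.1 from hj]; exact d.2)
        · intro hj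
          have hne : ℓ ≠ m.1 := fun h => hℓM (by rw [h]; exact m.2)
          exact empty_not_w1 hx0 hxF hne (hj hxF)
      rw [hempty]
      exact ⟨Set.finite_empty, by simp⟩
  -- injectivity data
  have hinjsep : ∀ ℓ ℓ', (∀ j, (ℓ ∈ 𝒰 j ↔ ℓ' ∈ 𝒰 j)) → ℓ = ℓ' := by
    intro ℓ ℓ' hiff
    by_contra hne
    by_cases h1 : ℓ ∈ Dset e φ
    · exact hne ((hiff (Sum.inl ⟨ℓ, h1⟩)).1 rfl).symm
    by_cases h2 : ℓ' ∈ Dset e φ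
    · exact hne ((hiff (Sum.inl ⟨ℓ', h2⟩)).2 rfl)
    by_cases h3 : ℓ ∈ Mset e φ
    · exact hUiff ⟨ℓ, h3⟩ ℓ' ((hiff (Sum.inr ⟨ℓ, h3⟩)).1 mem_uset_self)
        (fun h => hne h.symm) h2
    by_cases h4 : ℓ' ∈ Mset e φ
    · exact hUiff ⟨ℓ', h4⟩ ℓ ((hiff (Sum.inr ⟨ℓ', h4⟩)).2 mem_uset_self) hne h1
    · obtain ⟨x, hx1, hx2⟩ := not_d_not_m hfin hcard h1 h3
      obtain ⟨y, hy1, hy2⟩ := not_d_not_m hfin hcard h2 h4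
      have hxy : x = y := supp_inj hinj (hx2.trans hy2.symm)
      exact hne ((show φ x = ℓ from hx1).symm.trans (by rw [hxy]; exact hy1))
  -- the embedding
  have hmem : ∀ ℓ, (fun j => (𝒰 j).boolIndicator ℓ) ∈ sigmaN (↥(Dset e φ) ⊕ ↥(Mset e φ)) 3 := by
    intro ℓ
    have hset : {j | (𝒰 j).boolIndicator ℓ = true} = {j | ℓ ∈ 𝒰 j} := by
      ext j
      exact ((𝒰 j).mem_iff_boolIndicator ℓ).symm
    exact ⟨hset ▸ (hsupp3 ℓ).1, hset ▸ (hsupp3 ℓ).2⟩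
  refine ⟨fun ℓ => ⟨_, hmem ℓ⟩, ?_⟩
  have hcont : Continuous (fun ℓ => (⟨fun j => (𝒰 j).boolIndicator ℓ, hmem ℓ⟩ :
      ↥(sigmaN (↥(Dset e φ) ⊕ ↥(Mset e φ)) 3))) := by
    apply Continuous.subtype_mk
    apply continuous_pi
    intro j
    exact (continuous_boolIndicator_iff_isClopen (𝒰 j)).2 (h𝒰co j)
  have hfinj : Function.Injective (fun ℓ => (⟨fun j => (𝒰 j).boolIndicator ℓ, hmem ℓ⟩ :
      ↥(sigmaN (↥(Dset e φ) ⊕ ↥(Mset e φ)) 3))) := by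
    intro ℓ ℓ' h
    apply hinjsep
    intro j
    have hval := congrFun (congrArg Subtype.val h) j
    simp only at hval
    rw [(𝒰 j).mem_iff_boolIndicator, (𝒰 j).mem_iff_boolIndicator, hval]
  exact (hcont.isClosedEmbedding hfinj).toIsEmbedding

end EC23

/-- every continuous Hausdorff image of a compact subspace of
`σ₂(Γ)` embeds into `σ₃(Γ')` for some set `Γ'`; i.e. continuous images of
spaces in `EC₂` belong to `EC₃`. -/
theorem image_EC2_in_EC3 {Γ : Type u} {K : Set ↥(sigmaN Γ 2)} (hK : IsCompact K)
    {L : Type u} [TopologicalSpace L] [T2Space L]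
    {φ : ↥K → L} (hc : Continuous φ) (hs : Function.Surjective φ) :
    ∃ (Γ' : Type u) (f : L → ↥(sigmaN Γ' 3)), Topology.IsEmbedding f := by
  haveI : CompactSpace ↥K := isCompact_iff_compactSpace.mp hK
  refine EC23.main (fun x => (x.1.1 : Γ → Bool)) ?_ ?_ ?_ ?_ φ hc hs
  · exact continuous_subtype_val.comp continuous_subtype_val
  · intro x y h
    exact Subtype.ext (Subtype.ext h)
  · intro x
    exact x.1.2.1
  · intro x
    exact x.1.2.2
end

section
/- For any n ∈ ω, every continuous Hausdorff image of a compact metrizable space K that embeds into σ_n(Γ) for some set Γ itself embeds into σ_n(ω). -/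
universe u v

open Topology Filter Set

section DIter
variable {X : Type*} [TopologicalSpace X]

/-- iterated derived set -/
def dIter (m : ℕ) (A : Set X) : Set X := derivedSet^[m] A

lemma dIter_zero (A : Set X) : dIter 0 A = A := rfl

lemma dIter_succ (m : ℕ) (A : Set X) : dIter (m+1) A = derivedSet (dIter m A) :=
  Function.iterate_succ_apply' _ _ _

lemma derivedSet_subset_self {A : Set X} (hA : IsClosed A) : derivedSet A ⊆ A :=
  (isClosed_iff_derivedSet_subset A).mp hA

lemma isClosed_dIter [T1Space X] {A : Set X} (hA : IsClosed A) (m : ℕ) :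
    IsClosed (dIter m A) := by
  induction m with
  | zero => exact hA
  | succ m ih => rw [dIter_succ]; exact isClosed_derivedSet _

lemma dIter_subset_self [T1Space X] {A : Set X} (hA : IsClosed A) (m : ℕ) :
    dIter m A ⊆ A := by
  induction m with
  | zero => exact subset_rfl
  | succ m ih => rw [dIter_succ]; exact (derivedSet_subset_self (isClosed_dIter hA m)).trans ih

lemma dIter_mono {A B : Set X} (h : A ⊆ B) (m : ℕ) : dIter m A ⊆ dIter m B := by
  induction m with
  | zero => exact h
  | succ m ih => rw [dIter_succ, dIter_succ]; exact derivedSet_mono _ _ ih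

lemma derivedSet_inter_open {A U : Set X} (hU : IsOpen U) :
    derivedSet A ∩ U ⊆ derivedSet (A ∩ U) := by
  rintro x ⟨hx, hxU⟩
  have := (AccPt.nhds_inter (x := x) (C := A) hx (hU.mem_nhds hxU))
  rwa [Set.inter_comm] at this

lemma dIter_inter_open [T1Space X] {A U : Set X} (hA : IsClosed A) (hU : IsOpen U)
    (hB : IsClosed (A ∩ U)) (m : ℕ) : dIter m (A ∩ U) = dIter m A ∩ U := by
  induction m with
  | zero => rfl
  | succ m ih =>
    rw [dIter_succ, dIter_succ, ih]
    apply subset_antisymm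
    · intro x hx
      refine ⟨derivedSet_mono _ _ inter_subset_left hx, ?_⟩
      have : derivedSet (dIter m A ∩ U) ⊆ A ∩ U := by
        rw [← ih]
        exact (derivedSet_subset_self (isClosed_dIter hB m)).trans (dIter_subset_self hB m)
      exact (this hx).2
    · exact derivedSet_inter_open hU

lemma finite_of_derivedSet_empty {A : Set X} (hA : IsCompact A)
    (h : derivedSet A = ∅) : A.Finite := by
  by_contra hinf
  replace hinf : A.Infinite := hinf
  obtain ⟨x, -, hx⟩ := hinf.exists_accPt_of_subset_isCompact hA subset_rfl
  exact absurd (h ▸ hx : x ∈ (∅ : Set X)) (Set.notMem_empty x)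

end DIter

section Img
variable {K : Type*} {L : Type*} [TopologicalSpace K] [TopologicalSpace L] [T2Space L]

lemma derivedSet_image_subset {φ : K → L} (hc : Continuous φ) {C : Set K} (hC : IsCompact C) :
    derivedSet (φ '' C) ⊆ φ '' (C ∩ derivedSet C) := by
  intro ℓ hℓ
  by_contra hno
  have key : ∀ x : {x // x ∈ C ∧ φ x = ℓ}, ∃ U : Set K, IsOpen U ∧ ↑x ∈ U ∧ U ∩ C ⊆ {(x : K)} := by
    rintro ⟨x, hx, hφ⟩
    have hnd : x ∉ derivedSet C := fun h => hno ⟨x, ⟨hx, h⟩, hφ⟩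
    rw [mem_derivedSet, accPt_iff_nhds] at hnd
    push_neg at hnd
    obtain ⟨U, hU, h2⟩ := hnd
    obtain ⟨V, hVU, hVopen, hxV⟩ := mem_nhds_iff.mp hU
    exact ⟨V, hVopen, hxV, fun y ⟨hyV, hyC⟩ => h2 y ⟨hVU hyV, hyC⟩⟩
  choose u hopen hmemu hsub using key
  set W : Set K := ⋃ x, u x with hW
  have hWopen : IsOpen W := isOpen_iUnion fun x => hopen x
  have hC₀ : IsCompact (C \ W) := hC.diff hWopen
  have hln : ℓ ∉ φ '' (C \ W) := by
    rintro ⟨x, ⟨hxC, hxW⟩, rfl⟩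
    exact hxW (mem_iUnion.mpr ⟨⟨x, hxC, rfl⟩, hmemu _⟩)
  have hVopen : IsOpen (φ '' (C \ W))ᶜ := ((hC₀.image hc).isClosed).isOpen_compl
  rw [mem_derivedSet, accPt_iff_nhds] at hℓ
  obtain ⟨y, ⟨hyV, x1, hx1C, rfl⟩, hyne⟩ := hℓ _ (hVopen.mem_nhds hln)
  have hx1W : x1 ∈ W := by
    by_contra h
    exact hyV ⟨x1, ⟨hx1C, h⟩, rfl⟩
  obtain ⟨x, hx1u⟩ := mem_iUnion.mp hx1W
  have : x1 = ↑x := hsub x ⟨hx1u, hx1C⟩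
  exact hyne (by rw [this]; exact x.2.2)

end Img


section Sigma
variable {Γ : Type*} {n : ℕ}

lemma isOpen_allTrue (s : Finset Γ) : IsOpen {g : Γ → Bool | ∀ γ ∈ s, g γ = true} := by
  have : {g : Γ → Bool | ∀ γ ∈ s, g γ = true} = ⋂ γ ∈ s, {g | g γ = true} := by
    ext g; simp
  rw [this]
  refine isOpen_biInter_finset fun γ _ => ?_
  have : {g : Γ → Bool | g γ = true} = (fun g : Γ → Bool => g γ) ⁻¹' {true} := rfl
  rw [this]
  exact (isOpen_discrete _).preimage (continuous_apply γ)

lemma sigmaN_closed : IsClosed (sigmaN Γ n) := by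
  rw [← isOpen_compl_iff]
  rw [isOpen_iff_forall_mem_open]
  intro f hf
  have : ∃ s : Finset Γ, (↑s : Set Γ) ⊆ {γ | f γ = true} ∧ s.card = n + 1 := by
    by_cases hfin : ({γ | f γ = true}).Finite
    · have hn : n + 1 ≤ ({γ | f γ = true}).ncard := by
        by_contra h
        exact hf ⟨hfin, by omega⟩
      obtain ⟨t, hts, htn⟩ := Set.exists_subset_card_eq hn
      have htfin : t.Finite := hfin.subset hts
      exact ⟨htfin.toFinset, by simpa using hts, by
        rw [← Set.ncard_coe_finset]; simpa using htn⟩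
    · obtain ⟨t, hts, htn⟩ := Set.Infinite.exists_subset_card_eq hfin (n+1)
      exact ⟨t, hts, htn⟩
  obtain ⟨s, hs, hcard⟩ := this
  refine ⟨{g | ∀ γ ∈ s, g γ = true}, ?_, isOpen_allTrue s, fun γ hγ => hs hγ⟩
  intro g hg
  rintro ⟨hfin, hcard'⟩
  have hsub : (↑s : Set Γ) ⊆ {γ | g γ = true} := fun γ hγ => hg γ hγ
  have : n + 1 ≤ ({γ | g γ = true}).ncard := by
    calc n + 1 = (↑s : Set Γ).ncard := by rw [Set.ncard_coe_finset, hcard]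
    _ ≤ _ := Set.ncard_le_ncard hsub hfin
  omega

lemma sigmaN_zero : sigmaN Γ 0 = {fun _ => false} := by
  ext f
  simp only [sigmaN, Set.mem_setOf_eq, Set.mem_singleton_iff, Nat.le_zero]
  constructor
  · rintro ⟨hfin, hcard⟩
    have : {γ | f γ = true} = ∅ := (Set.ncard_eq_zero hfin).mp hcard
    funext γ
    by_contra h
    have : γ ∈ {γ | f γ = true} := by
      simp only [Set.mem_setOf_eq]
      revert h; cases f γ <;> simp
    simp_all
  · rintro rfl
    simp

lemma derivedSet_singleton_empty {X : Type*} [TopologicalSpace X] [T1Space X] (a : X) :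
    derivedSet {a} = (∅ : Set X) := by
  ext x
  simp only [mem_derivedSet, accPt_iff_nhds, Set.mem_empty_iff_false, iff_false, not_forall]
  by_cases hxa : x = a
  · subst hxa
    exact ⟨Set.univ, univ_mem, by rintro ⟨y, ⟨-, rfl⟩, hy⟩; exact hy rfl⟩
  · exact ⟨{a}ᶜ, (isOpen_compl_singleton).mem_nhds (by simpa using hxa), by
      rintro ⟨y, ⟨hy1, rfl⟩, -⟩; exact hy1 rfl⟩

lemma derivedSet_sigmaN_succ : derivedSet (sigmaN Γ (n+1)) ⊆ sigmaN Γ n := by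
  intro f hf
  have hfσ : f ∈ sigmaN Γ (n+1) := derivedSet_subset_self sigmaN_closed hf
  by_contra hfn
  have hcard : ({γ | f γ = true}).ncard = n+1 := by
    rcases hfσ with ⟨hfin, hle⟩
    have : ¬ ({γ | f γ = true}).ncard ≤ n := fun h => hfn ⟨hfin, h⟩
    omega
  rw [mem_derivedSet, accPt_iff_nhds] at hf
  obtain ⟨y, ⟨hyU, hyσ⟩, hyne⟩ := hf {g | ∀ γ ∈ hfσ.1.toFinset, g γ = true}
    ((isOpen_allTrue _).mem_nhds (by intro γ hγ; simpa using (hfσ.1.mem_toFinset.mp hγ)))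
  have hsub : {γ | f γ = true} ⊆ {γ | y γ = true} := by
    intro γ hγ
    exact hyU γ (hfσ.1.mem_toFinset.mpr hγ)
  have heq : {γ | f γ = true} = {γ | y γ = true} :=
    Set.eq_of_subset_of_ncard_le hsub (by rw [hcard]; exact hyσ.2) hyσ.1
  apply hyne
  funext γ
  have := Set.ext_iff.mp heq γ
  simp only [Set.mem_setOf_eq] at this
  cases hfγ : f γ <;> cases hyγ : y γ <;> simp_all

end Sigma

section Part4
open Topology Filter Set
variable {Γ : Type*}

lemma dIter_sigmaN_subset (m n : ℕ) : dIter m (sigmaN Γ n) ⊆ sigmaN Γ (n - m) := by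
  induction m with
  | zero => rw [dIter_zero]; simp
  | succ m ih =>
    rw [dIter_succ]
    rcases h : n - m with _ | k
    · have h1 : dIter m (sigmaN Γ n) ⊆ sigmaN Γ 0 := h ▸ ih
      rw [sigmaN_zero] at h1
      intro x hx
      have := (derivedSet_mono _ _ h1) hx
      rw [derivedSet_singleton_empty] at this
      exact absurd this (Set.notMem_empty x)
    · have h1 := (derivedSet_mono _ _ ih)
      rw [h] at h1
      have h2 := h1.trans (derivedSet_sigmaN_succ (n := k))
      have : n - (m + 1) = k := by omega
      rw [this]
      exact h2

lemma dIter_sigmaN_empty (n : ℕ) : dIter (n+1) (sigmaN Γ n) = (∅ : Set (Γ → Bool)) := by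
  rw [dIter_succ]
  apply Set.eq_empty_of_subset_empty
  have h1 : dIter n (sigmaN Γ n) ⊆ sigmaN Γ 0 := by
    have := dIter_sigmaN_subset (Γ := Γ) n n
    rwa [Nat.sub_self] at this
  rw [sigmaN_zero] at h1
  exact (derivedSet_mono _ _ h1).trans (by rw [derivedSet_singleton_empty])

variable {L : Type*} [TopologicalSpace L]

lemma preconnected_subsingleton_of_scattered [T1Space L] {N : ℕ}
    (hN : dIter N (Set.univ : Set L) = ∅) {S : Set L} (hS : IsPreconnected S) :
    S.Subsingleton := by
  by_contra hnt
  have hSnt : S.Nontrivial := Set.not_subsingleton_iff.mp hnt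
  set C := closure S with hC
  have hCp : IsPreconnected C := hS.closure
  have hCnt : C.Nontrivial := hSnt.mono subset_closure
  have hsub : C ⊆ derivedSet C := hCp.preperfect_of_nontrivial hCnt
  have hiter : ∀ m, C ⊆ dIter m Set.univ := by
    intro m
    induction m with
    | zero => exact fun x _ => trivial
    | succ m ih =>
      rw [dIter_succ]
      exact hsub.trans ((derivedSet_mono _ _ ih))
  obtain ⟨x, hx, -, -, -⟩ := hCnt
  exact absurd ((hN ▸ hiter N) hx) (Set.notMem_empty x)

lemma countable_diff_derivedSet {X : Type*} [TopologicalSpace X]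
    [SecondCountableTopology X] (D : Set X) :
    (D \ derivedSet D).Countable := by
  obtain ⟨b, hbc, -, hbasis⟩ := TopologicalSpace.exists_countable_basis X
  have key : ∀ x : ↥(D \ derivedSet D), ∃ V ∈ b, ↑x ∈ V ∧ ∀ y ∈ V ∩ D, y = ↑x := by
    rintro ⟨x, hxD, hxd⟩
    rw [mem_derivedSet, accPt_iff_nhds] at hxd
    push_neg at hxd
    obtain ⟨U, hU, h2⟩ := hxd
    obtain ⟨V, hVb, hxV, hVU⟩ := hbasis.mem_nhds_iff.mp hU
    exact ⟨V, hVb, hxV, fun y hy => h2 y ⟨hVU hy.1, hy.2⟩⟩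
  choose V hVb hmemV hV using key
  have hinj : Function.Injective (fun x => (⟨V x, hVb x⟩ : ↥b)) := by
    intro x y hxy
    have hVeq : V x = V y := congrArg Subtype.val hxy
    have : (y : X) ∈ V x ∩ D := ⟨hVeq ▸ hmemV y, y.2.1⟩
    exact Subtype.ext (hV x _ this).symm
  haveI : Countable ↥b := hbc.to_subtype
  haveI : Countable ↥(D \ derivedSet D) := hinj.countable
  exact Set.countable_coe_iff.mp inferInstance

lemma countable_univ_of_scattered {X : Type*} [TopologicalSpace X]
    [SecondCountableTopology X] {N : ℕ}
    (hN : dIter N (Set.univ : Set X) = ∅) : (Set.univ : Set X).Countable := by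
  have hcover : (Set.univ : Set X) ⊆
      ⋃ m ∈ Finset.range N, (dIter m Set.univ \ dIter (m+1) (Set.univ : Set X)) := by
    intro x _
    by_contra hx
    have hall : ∀ m, m ≤ N → x ∈ dIter m (Set.univ : Set X) := by
      intro m
      induction m with
      | zero => intro _; trivial
      | succ m ih =>
        intro hm
        have hxm := ih (by omega)
        by_contra hxm1
        exact hx (Set.mem_iUnion₂.mpr ⟨m, Finset.mem_range.mpr (by omega), hxm, hxm1⟩)
    exact absurd (hN ▸ hall N le_rfl) (Set.notMem_empty x)
  apply Set.Countable.mono hcover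
  apply Set.Countable.biUnion ((Finset.range N).countable_toSet)
  intro m _
  rw [dIter_succ]
  exact countable_diff_derivedSet _

end Part4

section Part5
open Topology Filter Set
variable {L : Type*} [TopologicalSpace L] [CompactSpace L] [T2Space L]

lemma exists_nbhd_basis (hcount : (Set.univ : Set L).Countable) (p : L) :
    ∃ O : ℕ → Set L, (∀ k, IsOpen (O k) ∧ p ∈ O k) ∧
      ∀ U : Set L, IsOpen U → p ∈ U → ∃ k, O k ⊆ U := by
  haveI : Countable L := by
    rw [Set.countable_univ_iff] at hcount; exact hcount
  have sep : ∀ q : {q : L // q ≠ p}, ∃ u v : Set L, IsOpen u ∧ IsOpen v ∧ p ∈ u ∧ ↑q ∈ v ∧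
      Disjoint u v := by
    rintro ⟨q, hq⟩
    obtain ⟨v, u, hv, hu, hqv, hpu, hdis⟩ := t2_separation hq
    exact ⟨u, v, hu, hv, hpu, hqv, hdis.symm⟩
  choose u v hu hv hpu hqv hdis using sep
  have key : ∀ U : Set L, IsOpen U → p ∈ U → ∃ t : Finset {q : L // q ≠ p},
      (⋂ q ∈ t, u q) ⊆ U := by
    intro U hU hpU
    have hUc : IsCompact Uᶜ := (isClosed_compl_iff.mpr hU).isCompact
    have hcov : Uᶜ ⊆ ⋃ q : {q : L // q ≠ p}, v q := by
      intro x hx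
      have hxp : x ≠ p := fun h => hx (h ▸ hpU)
      exact Set.mem_iUnion.mpr ⟨⟨x, hxp⟩, hqv ⟨x, hxp⟩⟩
    obtain ⟨t, ht⟩ := hUc.elim_finite_subcover v hv hcov
    refine ⟨t, fun x hx => ?_⟩
    by_contra hxU
    obtain ⟨q, hqt, hxq⟩ := Set.mem_iUnion₂.mp (ht hxU)
    have hxu : x ∈ u q := by
      have := Set.mem_iInter₂.mp hx q hqt
      exact this
    exact (hdis q).ne_of_mem hxu hxq rfl
  haveI : Countable (Finset {q : L // q ≠ p}) := inferInstance
  haveI : Nonempty (Finset {q : L // q ≠ p}) := ⟨∅⟩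
  obtain ⟨e, he⟩ := exists_surjective_nat (Finset {q : L // q ≠ p})
  refine ⟨fun k => ⋂ q ∈ e k, u q, fun k => ⟨isOpen_biInter_finset fun q _ => hu q,
    Set.mem_iInter₂.mpr fun q _ => hpu q⟩, fun U hU hpU => ?_⟩
  obtain ⟨t, ht⟩ := key U hU hpU
  obtain ⟨k, rfl⟩ := he t
  exact ⟨k, ht⟩

end Part5

section Part6
open Topology Filter Set

open Classical in
/-- reindex a Bool-valued function along an injection -/
noncomputable def recode (c : ℕ → ℕ) (g : ℕ → Bool) : ℕ → Bool :=
  fun i => if ∃ k, c k = i ∧ g k = true then true else false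

lemma recode_eq_true_iff {c : ℕ → ℕ} {g : ℕ → Bool} {i : ℕ} :
    recode c g i = true ↔ ∃ k, c k = i ∧ g k = true := by
  unfold recode
  by_cases h : ∃ k, c k = i ∧ g k = true <;> simp [h]

lemma recode_apply {c : ℕ → ℕ} (hc : Function.Injective c) (g : ℕ → Bool) (k : ℕ) :
    recode c g (c k) = g k := by
  by_cases h : g k = true
  · rw [recode_eq_true_iff.mpr ⟨k, rfl, h⟩, h]
  · have : ¬ recode c g (c k) = true := by
      rw [recode_eq_true_iff]
      rintro ⟨k', hk', hg⟩
      exact h (hc hk' ▸ hg)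
    rw [Bool.not_eq_true] at h this
    rw [h, this]

lemma recode_not_mem {c : ℕ → ℕ} {i : ℕ} (h : i ∉ Set.range c) (g : ℕ → Bool) :
    recode c g i = false := by
  have : ¬ recode c g i = true := by
    rw [recode_eq_true_iff]
    rintro ⟨k, hk, -⟩
    exact h ⟨k, hk⟩
  rwa [Bool.not_eq_true] at this

lemma supp_recode {c : ℕ → ℕ} (hc : Function.Injective c) (g : ℕ → Bool) :
    {i | recode c g i = true} = c '' {k | g k = true} := by
  ext i
  simp only [Set.mem_setOf_eq, Set.mem_image]
  rw [recode_eq_true_iff]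
  constructor
  · rintro ⟨k, hk, hg⟩
    exact ⟨k, hg, hk⟩
  · rintro ⟨k, hg, rfl⟩
    exact ⟨k, rfl, hg⟩

lemma continuousOn_recode_coord {L : Type*} [TopologicalSpace L] {c : ℕ → ℕ}
    (hc : Function.Injective c) {g : L → ℕ → Bool} {S : Set L}
    (hg : ContinuousOn g S) (i : ℕ) :
    ContinuousOn (fun x => recode c (g x) i) S := by
  by_cases h : i ∈ Set.range c
  · obtain ⟨k, rfl⟩ := h
    have : ∀ x ∈ S, recode c (g x) (c k) = g x k := fun x _ => recode_apply hc (g x) k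
    exact ContinuousOn.congr ((continuous_apply k).comp_continuousOn hg) this
  · have : ∀ x ∈ S, recode c (g x) i = false := fun x _ => recode_not_mem h (g x)
    exact ContinuousOn.congr continuousOn_const this

lemma continuousOn_union_closed {L β : Type*} [TopologicalSpace L] [TopologicalSpace β]
    {f : L → β} {B C : Set L} (hB : IsClosed B) (hC : IsClosed C)
    (h1 : ContinuousOn f B) (h2 : ContinuousOn f C) : ContinuousOn f (B ∪ C) := by
  intro x hx
  rcases hx with hxB | hxC
  · refine (h1 x hxB).union ?_
    by_cases hxC : x ∈ C
    · exact h2 x hxC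
    · exact continuousWithinAt_of_notMem_closure (by rwa [hC.closure_eq])
  · refine ContinuousWithinAt.union ?_ (h2 x hxC)
    by_cases hxB : x ∈ B
    · exact h1 x hxB
    · exact continuousWithinAt_of_notMem_closure (by rwa [hB.closure_eq])

end Part6

section Part7
open Topology Filter Set

variable {L : Type*} [TopologicalSpace L]

def CGood (n : ℕ) (A : Set L) (f : L → ℕ → Bool) : Prop :=
  (∀ x ∈ A, ({i | f x i = true}).Finite ∧ ({i | f x i = true}).ncard ≤ n) ∧
  Set.InjOn f A ∧ ContinuousOn f A

def Cstmt (L : Type*) [TopologicalSpace L] (n : ℕ) : Prop :=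
  ∀ A : Set L, IsClosed A → dIter (n+1) A = ∅ → (dIter n A).Subsingleton →
    ∃ f : L → ℕ → Bool, CGood n A f

def Dstmt (L : Type*) [TopologicalSpace L] (n : ℕ) : Prop :=
  ∀ A : Set L, IsClosed A → dIter (n+1) A = ∅ →
    ∃ f : L → ℕ → Bool, CGood (n+1) A f ∧ ∀ x ∈ A, ∃ i, f x i = true

lemma cstmt_zero : Cstmt L 0 := by
  intro A hA h1 h0
  rw [dIter_zero] at h0
  refine ⟨fun _ _ => false, fun x _ => by simp, fun x hx y hy _ => h0 hx hy,
    continuousOn_const⟩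

private lemma c2_inj : Function.Injective (fun k : ℕ => 2*k+2) := by
  intro a b h; dsimp only at h; omega
private lemma c1_inj : Function.Injective (fun k : ℕ => 2*k+1) := by
  intro a b h; dsimp only at h; omega

open Classical in
lemma merge_lemma {n : ℕ} {B A' : Set L} (hB : IsClosed B) (hA' : IsClosed A')
    {f₁ f₂ : L → ℕ → Bool} (h1 : CGood n B f₁)
    (h2 : CGood (n+1) A' f₂) (h2ne : ∀ x ∈ A', ∃ i, f₂ x i = true)
    (hdisj : B ∩ A' = ∅) :
    ∃ f : L → ℕ → Bool, CGood (n+1) (B ∪ A') f ∧ ∀ x ∈ B ∪ A', ∃ i, f x i = true := by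
  obtain ⟨h1supp, h1inj, h1cont⟩ := h1
  obtain ⟨h2supp, h2inj, h2cont⟩ := h2
  set c2 : ℕ → ℕ := fun k => 2*k+2 with hc2def
  set c1 : ℕ → ℕ := fun k => 2*k+1 with hc1def
  set F : L → ℕ → Bool :=
    fun x => if x ∈ B then (fun i => decide (i = 0) || recode c2 (f₁ x) i)
             else recode c1 (f₂ x) with hFdef
  have hFB : ∀ x ∈ B, F x = fun i => decide (i = 0) || recode c2 (f₁ x) i :=
    fun x hx => by simp only [hFdef, if_pos hx]
  have hFA : ∀ x ∈ A', F x = recode c1 (f₂ x) := by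
    intro x hx
    have hxB : x ∉ B := fun hxB => absurd (hdisj ▸ ⟨hxB, hx⟩) (Set.notMem_empty x)
    simp only [hFdef, if_neg hxB]
  have hsuppB : ∀ x ∈ B, {i | F x i = true} = insert 0 (c2 '' {k | f₁ x k = true}) := by
    intro x hx
    rw [hFB x hx]
    ext i
    simp only [Set.mem_setOf_eq, Bool.or_eq_true, decide_eq_true_eq, Set.mem_insert_iff]
    rw [← supp_recode c2_inj (f₁ x)]
    rfl
  have hsuppA : ∀ x ∈ A', {i | F x i = true} = c1 '' {k | f₂ x k = true} := by
    intro x hx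
    rw [hFA x hx]
    exact supp_recode c1_inj (f₂ x)
  have h0B : ∀ x ∈ B, F x 0 = true := by
    intro x hx; rw [hFB x hx]; simp
  have h0A : ∀ x ∈ A', F x 0 = false := by
    intro x hx
    rw [hFA x hx]
    exact recode_not_mem (by rintro ⟨k, hk⟩; simp only [hc1def] at hk; omega) _
  have hevalB : ∀ x ∈ B, ∀ k, F x (2*k+2) = f₁ x k := by
    intro x hx k
    rw [hFB x hx]
    have h2k : (2*k+2 : ℕ) = c2 k := rfl
    simp only [h2k]
    rw [recode_apply c2_inj]
    simp [hc2def]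
  have hevalA : ∀ x ∈ A', ∀ k, F x (2*k+1) = f₂ x k := by
    intro x hx k
    rw [hFA x hx]
    have h2k : (2*k+1 : ℕ) = c1 k := rfl
    rw [h2k, recode_apply c1_inj]
  refine ⟨F, ⟨?_, ?_, ?_⟩, ?_⟩
  · -- supports
    rintro x (hx | hx)
    · rw [hsuppB x hx]
      have hfin : ({k | f₁ x k = true}).Finite := (h1supp x hx).1
      have h0 : (0 : ℕ) ∉ c2 '' {k | f₁ x k = true} := by
        rintro ⟨k, -, hk⟩; simp only [hc2def] at hk; omega
      refine ⟨(hfin.image c2).insert 0, ?_⟩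
      rw [Set.ncard_insert_of_notMem h0 (hfin.image c2),
        Set.ncard_image_of_injective _ c2_inj]
      have := (h1supp x hx).2
      omega
    · rw [hsuppA x hx]
      have hfin : ({k | f₂ x k = true}).Finite := (h2supp x hx).1
      refine ⟨hfin.image c1, ?_⟩
      rw [Set.ncard_image_of_injective _ c1_inj]
      exact (h2supp x hx).2
  · -- InjOn
    rintro x hx y hy heq
    rcases hx with hxB | hxA
    · rcases hy with hyB | hyA
      · refine h1inj hxB hyB (funext fun k => ?_)
        rw [← hevalB x hxB k, ← hevalB y hyB k, heq]
      · exfalso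
        have := h0B x hxB
        rw [heq, h0A y hyA] at this
        exact Bool.false_ne_true this
    · rcases hy with hyB | hyA
      · exfalso
        have := h0B y hyB
        rw [← heq, h0A x hxA] at this
        exact Bool.false_ne_true this
      · refine h2inj hxA hyA (funext fun k => ?_)
        rw [← hevalA x hxA k, ← hevalA y hyA k, heq]
  · -- continuity
    apply continuousOn_union_closed hB hA'
    · refine ContinuousOn.congr ?_ (fun x hx => hFB x hx)
      rw [continuousOn_pi]
      intro i
      by_cases hi : i = 0
      · subst hi
        exact ContinuousOn.congr (continuousOn_const (c := true)) (fun x _ => by simp)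
      · have : ∀ x ∈ B, (decide (i = 0) || recode c2 (f₁ x) i) = recode c2 (f₁ x) i := by
          intro x _; simp [hi]
        exact ContinuousOn.congr (continuousOn_recode_coord c2_inj h1cont i) this
    · refine ContinuousOn.congr ?_ (fun x hx => hFA x hx)
      rw [continuousOn_pi]
      intro i
      exact continuousOn_recode_coord c1_inj h2cont i
  · -- nonempty support
    rintro x (hx | hx)
    · exact ⟨0, h0B x hx⟩
    · obtain ⟨k, hk⟩ := h2ne x hx
      exact ⟨2*k+1, by rw [hevalA x hx k]; exact hk⟩

end Part7

section Part8
open Topology Filter Set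

variable {L : Type*} [TopologicalSpace L] [CompactSpace L] [T2Space L]
  [TotallyDisconnectedSpace L]

lemma dstep {n : ℕ} (hC : Cstmt L n) : Dstmt L n := by
  suffices H : ∀ m : ℕ, ∀ A : Set L, IsClosed A → dIter (n+1) A = ∅ →
      (dIter n A).ncard ≤ m →
      ∃ f : L → ℕ → Bool, CGood (n+1) A f ∧ ∀ x ∈ A, ∃ i, f x i = true by
    intro A hA h1
    exact H (dIter n A).ncard A hA h1 le_rfl
  intro m
  induction m with
  | zero =>
    intro A hA h1 hcard
    have hfin : (dIter n A).Finite := by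
      apply finite_of_derivedSet_empty (isClosed_dIter hA n).isCompact
      rw [← dIter_succ]; exact h1
    have hempty : dIter n A = ∅ := (Set.ncard_eq_zero hfin).mp (Nat.le_zero.mp hcard)
    obtain ⟨f₁, hf₁⟩ := hC A hA h1 (hempty ▸ Set.subsingleton_empty)
    have h2 : CGood (n+1) (∅ : Set L) (fun _ _ => false) :=
      ⟨fun x hx => absurd hx (Set.notMem_empty x), fun x hx => absurd hx (Set.notMem_empty x),
        continuousOn_empty _⟩
    obtain ⟨f, hf, hfne⟩ := merge_lemma hA isClosed_empty hf₁ h2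
      (fun x hx => absurd hx (Set.notMem_empty x)) (Set.inter_empty _)
    rw [Set.union_empty] at hf hfne
    exact ⟨f, hf, hfne⟩
  | succ m ih =>
    intro A hA h1 hcard
    by_cases hle : (dIter n A).ncard ≤ m
    · exact ih A hA h1 hle
    have hfin : (dIter n A).Finite := by
      apply finite_of_derivedSet_empty (isClosed_dIter hA n).isCompact
      rw [← dIter_succ]; exact h1
    have hne : (dIter n A).Nonempty := by
      apply Set.nonempty_of_ncard_ne_zero
      omega
    obtain ⟨p, hp⟩ := hne
    set Fs := dIter n A with hFs
    have hU'open : IsOpen (Fs \ {p})ᶜ := ((hfin.diff : (Fs \ {p}).Finite).isClosed).isOpen_compl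
    have hpU' : p ∈ (Fs \ {p})ᶜ := by simp
    obtain ⟨V, hVclopen, hpV, hVsub⟩ := compact_exists_isClopen_in_isOpen hU'open hpU'
    set B := A ∩ V with hBdef
    have hBclosed : IsClosed B := hA.inter hVclopen.isClosed
    have hBiter : ∀ j, dIter j B = dIter j A ∩ V :=
      fun j => dIter_inter_open hA hVclopen.isOpen hBclosed j
    have hBsub : (dIter n B).Subsingleton := by
      rw [hBiter n]
      intro x hx y hy
      have hsing : ∀ z, z ∈ dIter n A ∩ V → z = p := by
        rintro z ⟨hz1, hz2⟩
        by_contra hzp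
        exact (hVsub hz2) ⟨hz1, hzp⟩
      rw [hsing x hx, hsing y hy]
    have hB1 : dIter (n+1) B = ∅ := by
      rw [hBiter (n+1), h1, Set.empty_inter]
    obtain ⟨f₁, hf₁⟩ := hC B hBclosed hB1 hBsub
    set A' := A ∩ Vᶜ with hA'def
    have hA'closed : IsClosed A' := hA.inter hVclopen.isOpen.isClosed_compl
    have hA'iter : ∀ j, dIter j A' = dIter j A ∩ Vᶜ :=
      fun j => dIter_inter_open hA hVclopen.isClosed.isOpen_compl hA'closed j
    have hA'1 : dIter (n+1) A' = ∅ := by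
      rw [hA'iter (n+1), h1, Set.empty_inter]
    have hA'card : (dIter n A').ncard ≤ m := by
      rw [hA'iter n]
      have hsub2 : dIter n A ∩ Vᶜ ⊆ Fs \ {p} := by
        rintro z ⟨hz1, hz2⟩
        exact ⟨hz1, fun h => hz2 (h ▸ hpV)⟩
      calc (dIter n A ∩ Vᶜ).ncard ≤ (Fs \ {p}).ncard :=
            Set.ncard_le_ncard hsub2 (hfin.diff : (Fs \ {p}).Finite)
        _ = Fs.ncard - 1 := Set.ncard_diff_singleton_of_mem hp
        _ ≤ m := by
            have : Fs.ncard ≤ m + 1 := hcard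
            omega
    obtain ⟨f₂, hf₂, hf₂ne⟩ := ih A' hA'closed hA'1 hA'card
    have hdisj : B ∩ A' = ∅ := by
      rw [hBdef, hA'def]
      ext z
      simp only [Set.mem_inter_iff, Set.mem_compl_iff, Set.mem_empty_iff_false, iff_false]
      tauto
    obtain ⟨f, hf, hfne⟩ := merge_lemma hBclosed hA'closed hf₁ hf₂ hf₂ne hdisj
    have hBA' : B ∪ A' = A := by
      rw [hBdef, hA'def, ← Set.inter_union_distrib_left, Set.union_compl_self,
        Set.inter_univ]
    rw [hBA'] at hf hfne
    exact ⟨f, hf, hfne⟩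

end Part8

section Part9
open Topology Filter Set

variable {L : Type*} [TopologicalSpace L] [CompactSpace L] [T2Space L]
  [TotallyDisconnectedSpace L]

private lemma pair_inj (k : ℕ) : Function.Injective (Nat.pair k) := by
  intro a b h
  exact (Nat.pair_eq_pair.mp h).2

lemma cstep {n : ℕ}
    (hbas : ∀ p : L, ∃ O : ℕ → Set L, (∀ k, IsOpen (O k) ∧ p ∈ O k) ∧
      ∀ U : Set L, IsOpen U → p ∈ U → ∃ k, O k ⊆ U)
    (hD : Dstmt L n) : Cstmt L (n+1) := by
  classical
  intro A hA h1 h0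
  by_cases hcase : dIter (n+1+1) A = ∅
  swap
  · exact absurd h1 hcase
  by_cases hempty : dIter (n+1) A = ∅
  · obtain ⟨f, hf, -⟩ := hD A hA hempty
    exact ⟨f, hf⟩
  obtain ⟨p, hp⟩ := Set.nonempty_iff_ne_empty.mpr hempty
  have hsing : dIter (n+1) A = {p} := h0.eq_singleton_of_mem hp
  have hpA : p ∈ A := dIter_subset_self hA (n+1) hp
  obtain ⟨O, hOopen, hObas⟩ := hbas p
  -- decreasing clopen neighborhoods
  have step : ∀ (k : ℕ) (S : Set L), IsClopen S → p ∈ S →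
      ∃ T : Set L, IsClopen T ∧ p ∈ T ∧ T ⊆ O k ∩ S := by
    intro k S hS hpS
    exact compact_exists_isClopen_in_isOpen ((hOopen k).1.inter hS.isOpen)
      ⟨(hOopen k).2, hpS⟩
  choose! T hT1 hT2 hT3 using step
  set W : ℕ → Set L := fun k => Nat.rec Set.univ (fun k ih => T k ih) k with hWdef
  have hWsucc : ∀ k, W (k+1) = T k (W k) := fun k => rfl
  have hWclopen : ∀ k, IsClopen (W k) ∧ p ∈ W k := by
    intro k
    induction k with
    | zero => exact ⟨isClopen_univ, trivial⟩
    | succ k ihk =>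
      rw [hWsucc]
      exact ⟨hT1 k _ ihk.1 ihk.2, hT2 k _ ihk.1 ihk.2⟩
  have hWsub : ∀ k, W (k+1) ⊆ O k ∩ W k := by
    intro k
    rw [hWsucc]
    exact hT3 k _ (hWclopen k).1 (hWclopen k).2
  have hWmono : ∀ j k, j ≤ k → W k ⊆ W j := by
    intro j k hjk
    induction k with
    | zero => rw [Nat.le_zero.mp hjk]
    | succ k ihk =>
      rcases Nat.lt_or_ge j (k+1) with h | h
      · exact ((hWsub k).trans Set.inter_subset_right).trans (ihk (by omega))
      · rw [Nat.le_antisymm hjk h]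
  -- the pieces
  set Q : ℕ → Set L := fun k => A ∩ (W k ∩ (W (k+1))ᶜ) with hQdef
  have hQopenPart : ∀ k, IsOpen (W k ∩ (W (k+1))ᶜ) :=
    fun k => (hWclopen k).1.isOpen.inter (hWclopen (k+1)).1.compl.isOpen
  have hQclosed : ∀ k, IsClosed (Q k) :=
    fun k => hA.inter ((hWclopen k).1.isClosed.inter (hWclopen (k+1)).1.compl.isClosed)
  have hQsubA : ∀ k, Q k ⊆ A := fun k => Set.inter_subset_left
  have hQ1 : ∀ k, dIter (n+1) (Q k) = ∅ := by
    intro k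
    have heq : dIter (n+1) (Q k) = dIter (n+1) A ∩ (W k ∩ (W (k+1))ᶜ) :=
      dIter_inter_open hA (hQopenPart k) (hQclosed k) (n+1)
    rw [heq, hsing]
    apply Set.eq_empty_of_subset_empty
    rintro z ⟨hz1, -, hz2⟩
    rw [Set.mem_singleton_iff] at hz1
    cases hz1
    exact absurd ((hWclopen (k+1)).2) hz2
  have hpQ : ∀ k, p ∉ Q k := by
    intro k hpk
    exact hpk.2.2 (hWclopen (k+1)).2
  have hQdisj : ∀ k l, k < l → Q k ∩ Q l = ∅ := by
    intro k l hkl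
    ext z
    simp only [Set.mem_inter_iff, Set.mem_empty_iff_false, iff_false, not_and]
    intro hzk hzl
    exact absurd (hWmono (k+1) l hkl (hzl.2.1)) hzk.2.2
  have hQdisj' : ∀ k l, k ≠ l → ∀ z, z ∈ Q k → z ∈ Q l → False := by
    intro k l hkl z hzk hzl
    rcases Nat.lt_or_ge k l with h | h
    · exact absurd (show z ∈ (∅ : Set L) from hQdisj k l h ▸ (⟨hzk, hzl⟩ : z ∈ Q k ∩ Q l)) (Set.notMem_empty z)
    · have : l < k := by omega
      exact absurd (show z ∈ (∅ : Set L) from hQdisj l k this ▸ (⟨hzl, hzk⟩ : z ∈ Q l ∩ Q k)) (Set.notMem_empty z)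
  have hcover : ∀ x ∈ A, x ≠ p → ∃ k, x ∈ Q k := by
    intro x hxA hxp
    have hex : ∃ k, x ∉ W k := by
      by_contra hall
      push_neg at hall
      obtain ⟨k, hk⟩ := hObas {x}ᶜ isOpen_compl_singleton (by simpa using (Ne.symm hxp))
      exact hk ((hWsub k).trans Set.inter_subset_left (hall (k+1))) rfl
    have h0W : x ∈ W 0 := trivial
    set k₀ := Nat.find hex with hk₀def
    have hk₀ : x ∉ W k₀ := Nat.find_spec hex
    have hk₀pos : k₀ ≠ 0 := fun h => hk₀ (h ▸ h0W)
    refine ⟨k₀ - 1, hxA, ?_, ?_⟩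
    · have := Nat.find_min hex (m := k₀ - 1) (by omega)
      simpa using this
    · have : k₀ - 1 + 1 = k₀ := by omega
      rw [this]
      exact hk₀
  -- piece embeddings
  have hDQ : ∀ k, ∃ g : L → ℕ → Bool, CGood (n+1) (Q k) g ∧ ∀ x ∈ Q k, ∃ i, g x i = true :=
    fun k => hD (Q k) (hQclosed k) (hQ1 k)
  choose g hg hgne using hDQ
  -- the combined map
  set F : L → ℕ → Bool :=
    fun x i => if ∃ k, x ∈ Q k ∧ recode (Nat.pair k) (g k x) i = true then true else false
    with hFdef
  have hFeval : ∀ k, ∀ x ∈ Q k, F x = recode (Nat.pair k) (g k x) := by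
    intro k x hx
    funext i
    show (if ∃ l, x ∈ Q l ∧ recode (Nat.pair l) (g l x) i = true then true else false)
      = recode (Nat.pair k) (g k x) i
    by_cases h : recode (Nat.pair k) (g k x) i = true
    · rw [if_pos ⟨k, hx, h⟩, h]
    · rw [if_neg]
      · cases hrec : recode (Nat.pair k) (g k x) i with
        | false => rfl
        | true => exact absurd hrec h
      · rintro ⟨l, hxl, hl⟩
        by_cases hlk : l = k
        · subst hlk; exact h hl
        · exact hQdisj' l k hlk x hxl hx
  have hFout : ∀ x, (∀ k, x ∉ Q k) → F x = fun _ => false := by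
    intro x hx
    funext i
    show (if ∃ l, x ∈ Q l ∧ recode (Nat.pair l) (g l x) i = true then true else false) = false
    rw [if_neg]
    rintro ⟨l, hxl, -⟩
    exact hx l hxl
  have hFp : F p = fun _ => false := hFout p hpQ
  refine ⟨F, ⟨?_, ?_, ?_⟩⟩
  · -- supports
    intro x hxA
    by_cases hxp : x = p
    · rw [hxp, hFp]
      simp
    · obtain ⟨k, hxk⟩ := hcover x hxA hxp
      rw [hFeval k x hxk, supp_recode (pair_inj k)]
      refine ⟨((hg k).1 x hxk).1.image _, ?_⟩
      rw [Set.ncard_image_of_injective _ (pair_inj k)]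
      exact ((hg k).1 x hxk).2
  · -- injectivity
    intro x hxA y hyA heq
    by_cases hxp : x = p
    · by_cases hyp : y = p
      · rw [hxp, hyp]
      · exfalso
        obtain ⟨k, hyk⟩ := hcover y hyA hyp
        obtain ⟨i, hi⟩ := hgne k y hyk
        have h1' : F y (Nat.pair k i) = true := by
          rw [hFeval k y hyk, recode_apply (pair_inj k)]
          exact hi
        rw [← heq, hxp, hFp] at h1'
        exact Bool.false_ne_true h1'
    · obtain ⟨k, hxk⟩ := hcover x hxA hxp
      by_cases hyp : y = p
      · exfalso
        obtain ⟨i, hi⟩ := hgne k x hxk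
        have h1' : F x (Nat.pair k i) = true := by
          rw [hFeval k x hxk, recode_apply (pair_inj k)]
          exact hi
        rw [heq, hyp, hFp] at h1'
        exact Bool.false_ne_true h1'
      · obtain ⟨l, hyl⟩ := hcover y hyA hyp
        have hkl : k = l := by
          by_contra hne
          obtain ⟨i, hi⟩ := hgne k x hxk
          have h1' : F x (Nat.pair k i) = true := by
            rw [hFeval k x hxk, recode_apply (pair_inj k)]
            exact hi
          rw [heq, hFeval l y hyl] at h1'
          rw [recode_eq_true_iff] at h1'
          obtain ⟨j, hj, -⟩ := h1'
          exact hne ((Nat.pair_eq_pair.mp hj).1).symm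
        subst hkl
        refine (hg k).2.1 hxk hyl (funext fun j => ?_)
        have hx' : F x (Nat.pair k j) = g k x j := by
          rw [hFeval k x hxk, recode_apply (pair_inj k)]
        have hy' : F y (Nat.pair k j) = g k y j := by
          rw [hFeval k y hyl, recode_apply (pair_inj k)]
        rw [← hx', ← hy', heq]
  · -- continuity
    rw [continuousOn_pi]
    intro i
    intro x hxA
    have hi : Nat.pair (Nat.unpair i).1 (Nat.unpair i).2 = i := Nat.pair_unpair i
    set k := (Nat.unpair i).1 with hkdef
    by_cases hxp : x = p
    · have hev : ∀ᶠ z in 𝓝[A] x, F z i = false := by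
        have hWn : W (k+1) ∈ 𝓝 x := by
          rw [hxp]
          exact (hWclopen (k+1)).1.isOpen.mem_nhds (hWclopen (k+1)).2
        filter_upwards [mem_nhdsWithin_of_mem_nhds hWn, self_mem_nhdsWithin] with z hzW hzA
        show (if ∃ l, z ∈ Q l ∧ recode (Nat.pair l) (g l z) i = true then true else false) = false
        rw [if_neg]
        rintro ⟨l, hzl, hl⟩
        rw [recode_eq_true_iff] at hl
        obtain ⟨j, hj, -⟩ := hl
        rw [← hi] at hj
        have hlk : l = k := (Nat.pair_eq_pair.mp hj).1
        subst hlk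
        exact hzl.2.2 hzW
      have hFpi : F x i = false := by rw [hxp, hFp]
      rw [ContinuousWithinAt, hFpi]
      exact tendsto_const_nhds.congr' (by filter_upwards [hev] with z hz using hz.symm)
    · obtain ⟨k₀, hxk₀⟩ := hcover x hxA hxp
      have hUnhds : W k₀ ∩ (W (k₀+1))ᶜ ∈ 𝓝 x :=
        (hQopenPart k₀).mem_nhds ⟨hxk₀.2.1, hxk₀.2.2⟩
      have hC : ContinuousWithinAt (fun z => F z i) (Q k₀) x := by
        have hcongr : ∀ z ∈ Q k₀, F z i = recode (Nat.pair k₀) (g k₀ z) i :=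
          fun z hz => by rw [hFeval k₀ z hz]
        exact (continuousOn_recode_coord (pair_inj k₀) (hg k₀).2.2 i).congr hcongr x hxk₀
      have := (continuousWithinAt_inter hUnhds (f := fun z => F z i) (s := A) (x := x)).mp ?_
      · exact this
      · exact hC
end Part9

section Main
open Topology Filter Set



/-- for `n ∈ ω`, every continuous Hausdorff image of a compact
metrizable space embeddable into some `σ_n(Γ)` itself embeds into `σ_n(ω)`. -/
theorem metrizable_image_in_ECn {K : Type u} [TopologicalSpace K] [CompactSpace K]
    [T2Space K] [TopologicalSpace.MetrizableSpace K] {n : ℕ}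
    (hK : ∃ (Γ : Type u) (g : K → ↥(sigmaN Γ n)), Topology.IsEmbedding g)
    {L : Type v} [TopologicalSpace L] [T2Space L]
    {φ : K → L} (hc : Continuous φ) (hs : Function.Surjective φ) :
    ∃ f : L → ↥(sigmaN ℕ n), Topology.IsEmbedding f := by
  classical
  obtain ⟨Γ, e, he⟩ := hK
  set E : K → (Γ → Bool) := fun x => (e x : Γ → Bool) with hEdef
  have hEcont : Continuous E := continuous_subtype_val.comp he.continuous
  have hEinj : Function.Injective E := Subtype.val_injective.comp he.injective
  -- K-side derived set bounds
  have htrans : ∀ m, E '' dIter m (Set.univ : Set K) ⊆ dIter m (sigmaN Γ n) := by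
    intro m
    induction m with
    | zero =>
      rw [dIter_zero, dIter_zero, Set.image_univ]
      rintro x ⟨y, rfl⟩
      exact (e y).2
    | succ m ih =>
      rw [dIter_succ, dIter_succ]
      exact (hEcont.image_derivedSet hEinj).trans (derivedSet_mono _ _ ih)
  have hK1 : dIter (n+1) (Set.univ : Set K) = ∅ := by
    apply Set.eq_empty_of_subset_empty
    intro x hx
    have := htrans (n+1) ⟨x, hx, rfl⟩
    rw [dIter_sigmaN_empty n] at this
    exact this
  have hK0 : (dIter n (Set.univ : Set K)).Subsingleton := by
    intro x hx y hy
    have hsub := (dIter_sigmaN_subset (Γ := Γ) n n)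
    rw [Nat.sub_self, sigmaN_zero] at hsub
    have hx' := hsub (htrans n ⟨x, hx, rfl⟩)
    have hy' := hsub (htrans n ⟨y, hy, rfl⟩)
    exact hEinj (hx'.trans hy'.symm)
  -- L-side
  have hLcomp : CompactSpace L := by
    constructor
    have : IsCompact (Set.range φ) := isCompact_range hc
    rwa [hs.range_eq] at this
  have himg : ∀ m, dIter m (Set.univ : Set L) ⊆ φ '' dIter m (Set.univ : Set K) := by
    intro m
    induction m with
    | zero =>
      rw [dIter_zero, dIter_zero, Set.image_univ, hs.range_eq]
    | succ m ih =>
      rw [dIter_succ, dIter_succ]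
      intro x hx
      have h1 := derivedSet_mono _ _ ih hx
      have hCcl : IsClosed (dIter m (Set.univ : Set K)) := isClosed_dIter isClosed_univ m
      have h2 := derivedSet_image_subset hc hCcl.isCompact h1
      obtain ⟨y, ⟨-, hy2⟩, rfl⟩ := h2
      exact ⟨y, hy2, rfl⟩
  have hL1 : dIter (n+1) (Set.univ : Set L) = ∅ := by
    apply Set.eq_empty_of_subset_empty
    refine (himg (n+1)).trans ?_
    rw [hK1, Set.image_empty]
  have hL0 : (dIter n (Set.univ : Set L)).Subsingleton :=
    ((hK0.image φ).anti (himg n))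
  have hLtd : TotallyDisconnectedSpace L := by
    constructor
    intro t _ ht
    exact preconnected_subsingleton_of_scattered hL1 ht
  -- countability
  have hKsc : SecondCountableTopology K := by
    letI : MetricSpace K := TopologicalSpace.metrizableSpaceMetric K
    infer_instance
  have hKcount : (Set.univ : Set K).Countable := countable_univ_of_scattered hK1
  have hLcount : (Set.univ : Set L).Countable := by
    have : (Set.univ : Set L) = φ '' Set.univ := by rw [Set.image_univ, hs.range_eq]
    rw [this]
    exact hKcount.image φ
  have hbas := fun p : L => exists_nbhd_basis hLcount p
  -- the construction
  have hCn : ∀ m, Cstmt L m := by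
    intro m
    induction m with
    | zero => exact cstmt_zero
    | succ m ih => exact cstep hbas (dstep ih)
  obtain ⟨f, hfsupp, hfinj, hfcont⟩ := hCn n Set.univ isClosed_univ hL1 hL0
  set F : L → ↥(sigmaN ℕ n) := fun x => ⟨f x, hfsupp x trivial⟩ with hFdef
  have hFcont : Continuous F := by
    apply Continuous.subtype_mk
    rw [← continuousOn_univ]
    exact hfcont
  have hFinj : Function.Injective F := by
    intro x y hxy
    exact hfinj trivial trivial (congrArg Subtype.val hxy)
  exact ⟨F, (hFcont.isClosedEmbedding hFinj).isEmbedding⟩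

end Main
end

section
/- If K is a (uniform) Eberlein compact space, then its Aleksandrov duplicate AD(K) is (uniform) Eberlein compact. -/
open scoped ENNReal

universe u

/-- The topology of the Aleksandrov duplicate on `K × 2`: points `(x,1)` are
isolated, and basic neighborhoods of `(x,0)` are `(U × 2) \ {(x,1)}` for `U`
an open neighborhood of `x`. -/
def ADTopology (K : Type u) [TopologicalSpace K] : TopologicalSpace (K × Bool) :=
  TopologicalSpace.generateFrom
    ({s | ∃ x : K, s = {(x, true)}} ∪
     {s | ∃ (x : K) (U : Set K), IsOpen U ∧ x ∈ U ∧
        s = (U ×ˢ (Set.univ : Set Bool)) \ {(x, true)}})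

/-- The Aleksandrov duplicate of `K`. -/
def AD (K : Type u) [TopologicalSpace K] : Type u := K × Bool

instance (K : Type u) [TopologicalSpace K] : TopologicalSpace (AD K) := ADTopology K

/-- `K` is Eberlein compact: compact and embeddable into `c₀(Γ)` with the
pointwise topology. -/
def IsEberlein (K : Type u) [TopologicalSpace K] : Prop :=
  CompactSpace K ∧ ∃ (Γ : Type u) (f : K → Γ → ℝ), Topology.IsEmbedding f ∧
    ∀ x : K, ∀ ε : ℝ, 0 < ε → {γ | ε < |f x γ|}.Finite

/-- `K` is uniform Eberlein compact: compact and embeddable into a Hilbert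
space `ℓ₂(Γ)` with its weak topology. -/
def IsUniformEberlein (K : Type u) [TopologicalSpace K] : Prop :=
  letI : Fact ((1 : ℝ≥0∞) ≤ 2) := ⟨one_le_two⟩
  CompactSpace K ∧ ∃ (Γ : Type u)
    (f : K → WeakSpace ℝ ↥(lp (fun _ : Γ => ℝ) 2)), Topology.IsEmbedding f

open Topology Filter Set

def ADgen (K : Type u) [TopologicalSpace K] : Set (Set (K × Bool)) :=
  {s | ∃ x : K, s = {(x, true)}} ∪
  {s | ∃ (x : K) (U : Set K), IsOpen U ∧ x ∈ U ∧
      s = (U ×ˢ (Set.univ : Set Bool)) \ {(x, true)}}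

variable {K : Type u} [TopologicalSpace K]

lemma AD_isOpen_of_mem {s : Set (AD K)} (hs : s ∈ ADgen K) : IsOpen s :=
  TopologicalSpace.GenerateOpen.basic s hs

lemma AD_le_nhds_iff {F : Filter (AD K)} {p : AD K} :
    F ≤ 𝓝 p ↔ ∀ s ∈ ADgen K, p ∈ s → s ∈ F := by
  have h : 𝓝 p = @nhds (K × Bool) (TopologicalSpace.generateFrom (ADgen K)) p := rfl
  exact Filter.tendsto_id'.symm.trans TopologicalSpace.tendsto_nhds_generateFrom_iff

lemma AD_isOpen_true (x : K) : IsOpen ({(x, true)} : Set (AD K)) :=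
  AD_isOpen_of_mem (Or.inl ⟨x, rfl⟩)

lemma AD_isOpen_basic {U : Set K} (hU : IsOpen U) {x : K} (hx : x ∈ U) :
    IsOpen ((U ×ˢ (Set.univ : Set Bool)) \ {(x, true)} : Set (AD K)) :=
  AD_isOpen_of_mem (Or.inr ⟨x, U, hU, hx, rfl⟩)

lemma AD_isClosed_true (x : K) : IsClosed ({(x, true)} : Set (AD K)) := by
  have h : ({(x, true)}ᶜ : Set (AD K)) =
      ((Set.univ ×ˢ (Set.univ : Set Bool)) \ {(x, true)}) := by
    ext ⟨y, b⟩
    exact ⟨fun h => ⟨⟨trivial, trivial⟩, h⟩, fun h => h.2⟩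
  exact ⟨h ▸ AD_isOpen_basic isOpen_univ (Set.mem_univ x)⟩

lemma AD_continuous_fst : Continuous (fun p : AD K => p.1) := by
  rw [continuous_def]
  intro U hU
  have h : ((fun p : AD K => p.1) ⁻¹' U : Set (AD K)) =
      ⋃ x ∈ U, ({(x, true)} ∪ ((U ×ˢ (Set.univ : Set Bool)) \ {(x, true)})) := by
    ext ⟨y, b⟩
    change y ∈ U ↔ (y, b) ∈ ⋃ x ∈ U, (({(x, true)} : Set (K × Bool)) ∪
      ((U ×ˢ (Set.univ : Set Bool)) \ {(x, true)}))
    simp only [Set.mem_preimage, Set.mem_iUnion, Set.mem_union, Set.mem_singleton_iff,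
      Set.mem_diff, Set.mem_prod, Set.mem_univ, and_true, Prod.mk.injEq]
    constructor
    · intro hy
      refine ⟨y, hy, ?_⟩
      cases b
      · exact Or.inr ⟨hy,
          fun h => Bool.false_ne_true h.2⟩
      · simp
    · rintro ⟨x, hx, ⟨rfl, -⟩ | ⟨h1, -⟩⟩
      · exact hx
      · exact h1
  rw [h]
  exact isOpen_biUnion fun x hx =>
    (AD_isOpen_true x).union (AD_isOpen_basic hU hx)

lemma AD_compactSpace [T2Space K] [CompactSpace K] : CompactSpace (AD K) := by
  refine ⟨isCompact_iff_ultrafilter_le_nhds.2 fun F _ => ?_⟩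
  set G : Ultrafilter K := F.map (fun p : AD K => p.1) with hG
  set x : K := G.lim with hxdef
  have hx : ↑G ≤ 𝓝 x := G.le_nhds_lim
  have hUmem : ∀ U : Set K, U ∈ 𝓝 x → (U ×ˢ (Set.univ : Set Bool)) ∈ F := by
    intro U hU
    have h1 : (fun p : AD K => p.1) ⁻¹' U ∈ F := hx hU
    rw [show (U ×ˢ (Set.univ : Set Bool)) = (fun p : AD K => p.1) ⁻¹' U by
      ext ⟨y, b⟩; simp; exact Iff.rfl]
    exact h1
  rcases F.mem_or_compl_mem {(x, true)} with h1 | h2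
  · refine ⟨(x, true), Set.mem_univ _, AD_le_nhds_iff.2 ?_⟩
    rintro s (⟨y, rfl⟩ | ⟨y, U, hU, hyU, rfl⟩) hps
    · obtain ⟨rfl, -⟩ := Prod.mk.inj (Set.mem_singleton_iff.1 hps)
      exact h1
    · refine F.toFilter.mem_of_superset h1 ?_
      rintro p hp
      replace hp := Set.mem_singleton_iff.1 hp
      subst hp
      exact hps
  · have hall : ∀ y : K, ({(y, true)}ᶜ : Set (AD K)) ∈ F := by
      intro y
      rcases F.mem_or_compl_mem {(y, true)} with hy | hy
      · exfalso
        have hpre : (fun p : AD K => p.1) ⁻¹' {y} ∈ F := by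
          refine F.toFilter.mem_of_superset hy ?_
          rintro p hp
          replace hp := Set.mem_singleton_iff.1 hp
          subst hp
          rfl
        have hpure : ({y} : Set K) ∈ G := hpre
        have hxy : x = y := by
          by_contra hne
          rcases t2_separation hne with ⟨u, v, hu, hv, hxu, hyv, huv⟩
          have h1' : u ∈ G := hx (hu.mem_nhds hxu)
          have h2' : u ∩ {y} ∈ G := G.toFilter.inter_sets h1' hpure
          rcases G.nonempty_of_mem h2' with ⟨z, hz1, hz2⟩
          rw [Set.mem_singleton_iff] at hz2
          subst hz2
          exact Set.disjoint_iff.1 huv ⟨hz1, hyv⟩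
        rw [hxy] at h2
        exact (Ultrafilter.compl_mem_iff_notMem.1 h2) hy
      · exact hy
    refine ⟨(x, false), Set.mem_univ _, AD_le_nhds_iff.2 ?_⟩
    rintro s (⟨y, rfl⟩ | ⟨y, U, hU, hyU, rfl⟩) hps
    · replace hps := Set.mem_singleton_iff.1 hps
      exact absurd (congrArg Prod.snd hps) (by simp)
    · rcases hps with ⟨⟨hxU, -⟩, -⟩
      have hmem1 := hUmem U (hU.mem_nhds hxU)
      exact F.toFilter.inter_sets hmem1 (hall y)

open Classical in
/-- indicator of the isolated point `(y,true)` -/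
noncomputable def indAt (y : K) : AD K → ℝ := fun p => if p = (y, true) then 1 else 0

lemma indAt_self (y : K) : indAt y ((y, true) : AD K) = 1 := by exact if_pos rfl

lemma indAt_ne (y : K) {p : AD K} (hp : p ≠ (y, true)) : indAt y p = 0 := by
  simp [indAt, hp]

lemma AD_continuous_indicator (y : K) : Continuous (indAt (K := K) y) := by
  classical
  have hclopen : IsClopen ({(y, true)} : Set (AD K)) :=
    ⟨AD_isClosed_true y, AD_isOpen_true y⟩
  have h : indAt (K := K) y =
      Set.piecewise ({(y, true)} : Set (AD K)) (fun _ => (1 : ℝ)) (fun _ => 0) := by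
    funext p
    by_cases hp : p = (y, true)
    · rw [Set.piecewise_eq_of_mem _ _ _ (show p ∈ ({(y, true)} : Set (AD K)) from hp)]
      exact if_pos hp
    · rw [Set.piecewise_eq_of_notMem _ _ _ (show p ∉ ({(y, true)} : Set (AD K)) from hp)]
      exact if_neg hp
  rw [h]
  exact Continuous.piecewise
    (by rw [hclopen.frontier_eq]; intro a ha; exact absurd ha (Set.notMem_empty a))
    continuous_const continuous_const

lemma AD_continuous_snd_weight [T1Space K] (w : K → ℝ)
    (hw : Filter.Tendsto w Filter.cofinite (𝓝 0)) :
    Continuous (fun p : AD K => if p.2 = true then w p.1 else 0) := by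
  rw [continuous_iff_continuousAt]
  rintro ⟨x, b⟩
  cases b
  · -- at (x, false), the value is 0
    have hval : (fun p : AD K => if p.2 = true then w p.1 else 0) (x, false) = 0 := by
      simp
    unfold ContinuousAt
    rw [hval, NormedAddCommGroup.tendsto_nhds_zero]
    · skip
      intro ε hε
      have hfin : {y : K | ¬ dist (w y) 0 < ε}.Finite := by
        have := Metric.tendsto_nhds.1 hw ε hε
        rwa [Filter.eventually_cofinite] at this
      set C : Set K := {y : K | ¬ dist (w y) 0 < ε} \ {x} with hC
      have hCfin : C.Finite := hfin.subset Set.diff_subset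
      have hCclosed : IsClosed C := hCfin.isClosed
      have hxU : x ∈ Cᶜ := fun hxC => hxC.2 rfl
      refine Filter.mem_of_superset
        ((AD_isOpen_basic hCclosed.isOpen_compl hxU).mem_nhds
          ⟨⟨hxU, Set.mem_univ _⟩,
            fun h => Bool.false_ne_true (congrArg Prod.snd h)⟩) ?_
      rintro ⟨y, c⟩ ⟨⟨hyU, -⟩, hne⟩
      cases c
      · show ‖(if false = true then w y else 0)‖ < ε
        simpa using hε
      · have hyx : y ≠ x := fun h => hne (by rw [h]; exact rfl)
        have hyC : ¬ y ∈ C := hyU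
        have hd : dist (w y) 0 < ε := by
          by_contra hcon
          exact hyC ⟨hcon, hyx⟩
        show ‖(if true = true then w y else 0)‖ < ε
        simpa [Real.dist_eq] using hd
  · -- at (x, true), the function is locally constant
    refine Filter.EventuallyEq.continuousAt (y := w x) ?_
    refine Filter.eventuallyEq_of_mem ((AD_isOpen_true x).mem_nhds rfl) ?_
    rintro p hp
    replace hp := Set.mem_singleton_iff.1 hp
    subst hp
    simp

lemma hasSum_sum_elim {α β : Type*} {f : α → ℝ} {g : β → ℝ} {a b : ℝ}
    (hf : HasSum f a) (hg : HasSum g b) : HasSum (Sum.elim f g) (a + b) := by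
  have h1 : HasSum (Sum.elim f (0 : β → ℝ)) a := by
    refine (Function.Injective.hasSum_iff Sum.inl_injective ?_).1 hf
    rintro (⟨a'⟩ | ⟨b'⟩) hx
    · exact absurd ⟨a', rfl⟩ hx
    · rfl
  have h2 : HasSum (Sum.elim (0 : α → ℝ) g) b := by
    refine (Function.Injective.hasSum_iff Sum.inr_injective ?_).1 hg
    rintro (⟨a'⟩ | ⟨b'⟩) hx
    · rfl
    · exact absurd ⟨b', rfl⟩ hx
  have h3 := h1.add h2
  convert h3 using 1
  funext c
  cases c <;> simp

lemma AD_ne_true {x : K} {i : Bool} (h : i = false) :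
    ((x, i) : AD K) ≠ (x, true) := by
  subst h
  exact fun h => Bool.false_ne_true (congrArg Prod.snd h)

lemma eberlein_AD (h : IsEberlein K) : IsEberlein (AD K) := by
  obtain ⟨hc, Γ, f, hf, hfin⟩ := h
  haveI : CompactSpace K := hc
  haveI : T2Space K := hf.t2Space
  haveI hcAD : CompactSpace (AD K) := AD_compactSpace
  set g : AD K → (Γ ⊕ K) → ℝ :=
    fun p => Sum.elim (f p.1) (fun y => indAt y p) with hg
  have hcont : Continuous g := by
    apply continuous_pi
    rintro (γ | y)
    · show Continuous fun p : AD K => f p.1 γ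
      exact ((continuous_apply γ).comp hf.continuous).comp AD_continuous_fst
    · show Continuous fun p : AD K => indAt y p
      exact AD_continuous_indicator y
  have hinj : Function.Injective g := by
    rintro ⟨x, i⟩ ⟨y, j⟩ hpq
    have h1 : f x = f y := funext fun γ => congrFun hpq (Sum.inl γ)
    have hxy : x = y := hf.injective h1
    subst hxy
    have h2 := congrFun hpq (Sum.inr x)
    simp only [hg, Sum.elim_inr] at h2
    cases i <;> cases j
    · rfl
    · rw [indAt_ne x (AD_ne_true rfl), indAt_self] at h2
      norm_num at h2
    · rw [indAt_self, indAt_ne x (AD_ne_true rfl)] at h2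
      norm_num at h2
    · rfl
  refine ⟨hcAD, Γ ⊕ K, g, (hcont.isClosedEmbedding hinj).toIsEmbedding, ?_⟩
  rintro ⟨x, i⟩ ε hε
  refine Set.Finite.subset
    (((hfin x ε hε).image Sum.inl).union (Set.finite_singleton (Sum.inr x))) ?_
  rintro (γ | y) hcmem
  · exact Or.inl ⟨γ, hcmem, rfl⟩
  · simp only [Set.mem_setOf_eq, hg, Sum.elim_inr] at hcmem
    by_cases hp : ((x, i) : AD K) = (y, true)
    · have : y = x := (congrArg Prod.fst hp).symm
      exact Or.inr (by rw [this]; rfl)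
    · rw [indAt_ne y hp] at hcmem
      simp only [abs_zero] at hcmem
      linarith

lemma weakSpace_t2 {E : Type*} [NormedAddCommGroup E] [NormedSpace ℝ E] :
    T2Space (WeakSpace ℝ E) := by
  refine ⟨fun x y hxy => ?_⟩
  obtain ⟨ℓ, hℓ⟩ := SeparatingDual.exists_separating_of_ne (R := ℝ) (V := E) hxy
  have hcont : Continuous fun v : WeakSpace ℝ E => ℓ v := by
    have := WeakBilin.eval_continuous (topDualPairing ℝ E).flip ℓ
    exact this
  exact separated_by_continuous hcont hℓ

lemma uniformEberlein_AD (h : IsUniformEberlein K) : IsUniformEberlein (AD K) := by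
  letI : Fact ((1 : ℝ≥0∞) ≤ 2) := ⟨one_le_two⟩
  obtain ⟨hc, Γ, f, hf⟩ := h
  haveI : CompactSpace K := hc
  haveI hT2E : T2Space (WeakSpace ℝ ↥(lp (fun _ : Γ => ℝ) 2)) := weakSpace_t2
  haveI : T2Space K := hf.t2Space
  haveI hcAD : CompactSpace (AD K) := AD_compactSpace
  haveI hT2E' : T2Space (WeakSpace ℝ ↥(lp (fun _ : Γ ⊕ K => ℝ) 2)) := weakSpace_t2
  -- the underlying lp-valued map of `f`
  set fE : K → ↥(lp (fun _ : Γ => ℝ) 2) := fun x => f x with hfE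
  -- the coordinates of the new map
  set Fp : AD K → (Γ ⊕ K) → ℝ :=
    fun p => Sum.elim (fun γ => fE p.1 γ) (fun y => indAt y p) with hFp
  have hmem : ∀ p : AD K, Memℓp (Fp p) 2 := by
    intro p
    apply memℓp_gen
    have heq : (fun c => ‖Fp p c‖ ^ (2 : ℝ≥0∞).toReal) =
        Sum.elim (fun γ => ‖fE p.1 γ‖ ^ (2 : ℝ≥0∞).toReal)
          (fun y => ‖indAt y p‖ ^ (2 : ℝ≥0∞).toReal) := by
      funext c; cases c <;> rfl
    rw [heq]
    have h1 : Summable fun γ => ‖fE p.1 γ‖ ^ (2 : ℝ≥0∞).toReal :=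
      (lp.memℓp (fE p.1)).summable (by norm_num)
    have h2 : Summable fun y : K => ‖indAt y p‖ ^ (2 : ℝ≥0∞).toReal := by
      apply summable_of_ne_finset_zero (s := {p.1})
      intro y hy
      have hne : p ≠ (y, true) := by
        intro hcon
        exact hy (by simp [congrArg Prod.fst hcon])
      rw [indAt_ne y hne, norm_zero, Real.zero_rpow (by norm_num)]
    exact (hasSum_sum_elim h1.hasSum h2.hasSum).summable
  set gL : AD K → ↥(lp (fun _ : Γ ⊕ K => ℝ) 2) := fun p => ⟨Fp p, hmem p⟩ with hgL
  set g : AD K → WeakSpace ℝ ↥(lp (fun _ : Γ ⊕ K => ℝ) 2) := gL with hgdef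
  have hinj : Function.Injective g := by
    rintro ⟨x, i⟩ ⟨y, j⟩ hpq
    have hFpq : Fp (x, i) = Fp (y, j) := congrArg Subtype.val hpq
    have h1 : fE x = fE y := by
      apply Subtype.ext
      funext γ
      exact congrFun hFpq (Sum.inl γ)
    have hxy : x = y := hf.injective h1
    subst hxy
    have h2 := congrFun hFpq (Sum.inr x)
    simp only [hFp, Sum.elim_inr] at h2
    cases i <;> cases j
    · rfl
    · rw [indAt_ne x (AD_ne_true rfl), indAt_self] at h2
      norm_num at h2
    · rw [indAt_self, indAt_ne x (AD_ne_true rfl)] at h2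
      norm_num at h2
    · rfl
  have hgcont : Continuous g := by
    apply WeakBilin.continuous_of_continuous_eval
    intro ℓ
    show Continuous fun p : AD K => ℓ (g p)
    set w : ↥(lp (fun _ : Γ ⊕ K => ℝ) 2) :=
      (InnerProductSpace.toDual ℝ ↥(lp (fun _ : Γ ⊕ K => ℝ) 2)).symm ℓ with hw
    have hℓ : ∀ v : ↥(lp (fun _ : Γ ⊕ K => ℝ) 2), ℓ v = (inner ℝ w v : ℝ) := by
      intro v
      rw [← InnerProductSpace.toDual_apply_apply, hw,
        (InnerProductSpace.toDual ℝ ↥(lp (fun _ : Γ ⊕ K => ℝ) 2)).apply_symm_apply ℓ]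
    have hwl : Memℓp (fun γ : Γ => w (Sum.inl γ)) 2 := by
      apply memℓp_gen
      exact ((lp.memℓp w).summable (by norm_num)).comp_injective Sum.inl_injective
    set wl : ↥(lp (fun _ : Γ => ℝ) 2) := ⟨fun γ => w (Sum.inl γ), hwl⟩ with hwldef
    have hval : ∀ p : AD K, ℓ (gL p) =
        (inner ℝ wl (fE p.1) : ℝ) + (if p.2 = true then w (Sum.inr p.1) else 0) := by
      rintro ⟨x, i⟩
      rw [hℓ]
      have hs1 : HasSum (fun γ : Γ => (inner ℝ (wl γ) (fE x γ) : ℝ)) (inner ℝ wl (fE x)) :=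
        lp.hasSum_inner wl (fE x)
      have hs2 : HasSum (fun y : K => (inner ℝ (w (Sum.inr y)) (indAt y ((x, i) : AD K)) : ℝ))
          (if i = true then w (Sum.inr x) else 0) := by
        have h0 : ∀ y : K, y ≠ x →
            (inner ℝ (w (Sum.inr y)) (indAt y ((x, i) : AD K)) : ℝ) = 0 := by
          intro y hy
          have hne : ((x, i) : AD K) ≠ (y, true) := fun hcon => hy (congrArg Prod.fst hcon).symm
          exact (congrArg (inner ℝ (w (Sum.inr y))) (indAt_ne y hne)).trans (inner_zero_right _)
        have hsingle := hasSum_single (f := fun y : K =>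
          (inner ℝ (w (Sum.inr y)) (indAt y ((x, i) : AD K)) : ℝ)) x h0
        have hvx : (fun y : K => (inner ℝ (w (Sum.inr y)) (indAt y ((x, i) : AD K)) : ℝ)) x
            = (if i = true then w (Sum.inr x) else 0) := by
          show (inner ℝ (w (Sum.inr x)) (indAt x ((x, i) : AD K)) : ℝ) = _
          cases i
          · rw [indAt_ne x (AD_ne_true rfl), inner_zero_right]
            simp
          · rw [indAt_self]
            simp [RCLike.inner_apply]
        rw [← hvx]
        exact hsingle
      have h3 := hasSum_sum_elim hs1 hs2
      have heq : (fun c : Γ ⊕ K => (inner ℝ (w c) ((gL ((x, i) : AD K)) c) : ℝ)) =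
          Sum.elim (fun γ => (inner ℝ (wl γ) (fE x γ) : ℝ))
            (fun y => (inner ℝ (w (Sum.inr y)) (indAt y ((x, i) : AD K)) : ℝ)) := by
        funext c; cases c <;> rfl
      rw [lp.inner_eq_tsum, heq]
      exact h3.tsum_eq
    have hc1 : Continuous fun p : AD K => (inner ℝ wl (fE p.1) : ℝ) := by
      have hev : Continuous fun v : WeakSpace ℝ ↥(lp (fun _ : Γ => ℝ) 2) =>
          (InnerProductSpace.toDual ℝ ↥(lp (fun _ : Γ => ℝ) 2) wl) v := by
        have := WeakBilin.eval_continuous (topDualPairing ℝ ↥(lp (fun _ : Γ => ℝ) 2)).flip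
          (InnerProductSpace.toDual ℝ ↥(lp (fun _ : Γ => ℝ) 2) wl)
        exact this
      have hcomp := hev.comp (hf.continuous.comp AD_continuous_fst)
      have heq2 : (fun p : AD K =>
          (InnerProductSpace.toDual ℝ ↥(lp (fun _ : Γ => ℝ) 2) wl) (f p.1)) =
          fun p : AD K => (inner ℝ wl (fE p.1) : ℝ) := by
        funext p
        exact InnerProductSpace.toDual_apply_apply
      rw [← heq2]
      exact hcomp
    have htend : Filter.Tendsto (fun y : K => w (Sum.inr y)) Filter.cofinite (𝓝 0) := by
      have hsum2 : Summable fun y : K => ‖w (Sum.inr y)‖ ^ (2 : ℝ≥0∞).toReal :=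
        ((lp.memℓp w).summable (by norm_num)).comp_injective Sum.inr_injective
      have h2' := hsum2.tendsto_cofinite_zero
      have h3' := (Real.continuous_sqrt.tendsto 0).comp h2'
      have heq3 : (fun y : K => Real.sqrt (‖w (Sum.inr y)‖ ^ (2 : ℝ≥0∞).toReal)) =
          fun y : K => ‖w (Sum.inr y)‖ := by
        funext y
        rw [show ((2 : ℝ≥0∞).toReal) = ((2 : ℕ) : ℝ) by norm_num, Real.rpow_natCast,
          Real.sqrt_sq (norm_nonneg _)]
      rw [Function.comp_def] at h3'
      rw [heq3] at h3'
      rw [Real.sqrt_zero] at h3'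
      exact tendsto_zero_iff_norm_tendsto_zero.2 h3'
    have hc2 : Continuous fun p : AD K => (if p.2 = true then w (Sum.inr p.1) else 0 : ℝ) :=
      AD_continuous_snd_weight (fun y => w (Sum.inr y)) htend
    have hfinal : (fun p : AD K => ℓ (gL p)) =
        fun p : AD K => (inner ℝ wl (fE p.1) : ℝ) +
          (if p.2 = true then w (Sum.inr p.1) else 0) := funext hval
    rw [show (fun p : AD K => ℓ (g p)) = fun p : AD K => ℓ (gL p) from rfl, hfinal]
    exact hc1.add hc2
  exact ⟨hcAD, Γ ⊕ K, g, (hgcont.isClosedEmbedding hinj).toIsEmbedding⟩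

/-- the Aleksandrov duplicate of a (uniform) Eberlein compact
space is (uniform) Eberlein compact. -/
theorem AD_eberlein {K : Type u} [TopologicalSpace K] :
    (IsEberlein K → IsEberlein (AD K)) ∧
    (IsUniformEberlein K → IsUniformEberlein (AD K)) := by
  exact ⟨eberlein_AD, uniformEberlein_AD⟩
end

section
/- Let x be a non-isolated point of a Corson compact space K with character χ(K,x) = κ. Then K contains a subspace homeomorphic to the one-point compactification of a discrete space of cardinality κ, with x as the point at infinity. -/
universe u

open Topology Filter Set Cardinal

/-- The Σ-product of real lines over `Γ`. -/
def SigmaProd (Γ : Type u) : Set (Γ → ℝ) := {x | {γ | x γ ≠ 0}.Countable}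

/-- `K` is Corson compact: compact and embeddable into some `Σ(ℝ^Γ)`. -/
def IsCorson (K : Type u) [TopologicalSpace K] : Prop :=
  CompactSpace K ∧ ∃ (Γ : Type u) (f : K → ↥(SigmaProd Γ)), Topology.IsEmbedding f

/-- The character of a point: the least cardinality of a neighborhood base. -/
noncomputable def charAt (K : Type u) [TopologicalSpace K] (x : K) : Cardinal.{u} :=
  sInf {c | ∃ B : Set (Set K), (∀ U ∈ B, U ∈ nhds x) ∧
    (∀ V ∈ nhds x, ∃ U ∈ B, U ⊆ V) ∧ Cardinal.mk B = c}

section Aux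
variable {K : Type u} [TopologicalSpace K]

lemma charAt_spec (x : K) : ∃ B : Set (Set K), (∀ U ∈ B, U ∈ nhds x) ∧
    (∀ V ∈ nhds x, ∃ U ∈ B, U ⊆ V) ∧ Cardinal.mk B = charAt K x := by
  have hne : {c | ∃ B : Set (Set K), (∀ U ∈ B, U ∈ nhds x) ∧
      (∀ V ∈ nhds x, ∃ U ∈ B, U ⊆ V) ∧ Cardinal.mk B = c}.Nonempty :=
    ⟨_, {U | U ∈ nhds x}, fun _ hU => hU, fun V hV => ⟨V, hV, subset_rfl⟩, rfl⟩
  obtain ⟨B, h1, h2, h3⟩ := csInf_mem hne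
  exact ⟨B, h1, h2, h3⟩

lemma charAt_le (x : K) {B : Set (Set K)} (h1 : ∀ U ∈ B, U ∈ nhds x)
    (h2 : ∀ V ∈ nhds x, ∃ U ∈ B, U ⊆ V) : charAt K x ≤ Cardinal.mk B :=
  csInf_le' ⟨B, h1, h2, rfl⟩

lemma nonisolated_nhds {x : K} (hx : ¬ IsOpen ({x} : Set K)) {U : Set K} (hU : U ∈ 𝓝 x) :
    ∃ y ∈ U, y ≠ x := by
  by_contra h
  push_neg at h
  obtain ⟨W, hWU, hWo, hxW⟩ := mem_nhds_iff.1 hU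
  have : W = {x} := subset_antisymm (fun y hy => h y (hWU hy)) (singleton_subset_iff.2 hxW)
  exact hx (this ▸ hWo)

lemma aleph0_le_charAt [T1Space K] {x : K} (hx : ¬ IsOpen ({x} : Set K)) :
    ℵ₀ ≤ charAt K x := by
  by_contra h
  push_neg at h
  obtain ⟨B, hB1, hB2, hBc⟩ := charAt_spec x
  have hBfin : B.Finite := by
    rw [← Cardinal.lt_aleph0_iff_set_finite, hBc]; exact h
  have hU : ⋂₀ B ∈ 𝓝 x := (Filter.sInter_mem hBfin).2 hB1
  obtain ⟨y, hyU, hy⟩ := nonisolated_nhds hx hU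
  obtain ⟨U, hUB, hUsub⟩ := hB2 {y}ᶜ (compl_singleton_mem_nhds (Ne.symm hy))
  exact hUsub (hyU U hUB) rfl

end Aux

lemma onePoint_embed {K : Type u} [TopologicalSpace K] [T2Space K] {x : K}
    {D : Type u} [TopologicalSpace D] [DiscreteTopology D] (ι : D → K)
    (hinj : Function.Injective ι) (hne : ∀ d, ι d ≠ x)
    (hcof : ∀ V ∈ 𝓝 x, {d | ι d ∉ V}.Finite) :
    Topology.IsEmbedding (fun o : OnePoint D => o.elim x ι) := by
  have hcont : Continuous (fun o : OnePoint D => o.elim x ι) := by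
    rw [OnePoint.continuous_iff_from_discrete]
    simp only [OnePoint.elim_infty, OnePoint.elim_some]
    intro V hV
    rw [Filter.mem_map, Filter.mem_cofinite]
    have : ((fun d : D => ι d) ⁻¹' V)ᶜ = {d | ι d ∉ V} := by ext d; simp
    rw [this]
    exact hcof V hV
  have hinj' : Function.Injective (fun o : OnePoint D => o.elim x ι) := by
    intro a b hab
    induction a using OnePoint.rec <;> induction b using OnePoint.rec <;>
      simp only [OnePoint.elim_infty, OnePoint.elim_some] at hab
    · rfl
    · exact absurd hab.symm (hne _)
    · exact absurd hab (hne _)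
    · exact congrArg _ (hinj hab)
  exact (hcont.isClosedEmbedding hinj').isEmbedding

lemma exists_family_aleph0 {K : Type u} [TopologicalSpace K] [T1Space K] {x : K}
    (hx : ¬ IsOpen ({x} : Set K)) {B : Set (Set K)}
    (h1 : ∀ U ∈ B, U ∈ 𝓝 x) (h2 : ∀ V ∈ 𝓝 x, ∃ U ∈ B, U ⊆ V)
    (hBc : Cardinal.mk B = ℵ₀) :
    ∃ A : Set K, x ∉ A ∧ Cardinal.mk ↥A = ℵ₀ ∧ ∀ V ∈ 𝓝 x, (A \ V).Finite := by
  have hBne : B.Nonempty := by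
    obtain ⟨U, hU, -⟩ := h2 Set.univ univ_mem
    exact ⟨U, hU⟩
  have hBcount : B.Countable := by
    rw [← Set.countable_coe_iff]
    exact Cardinal.mk_le_aleph0_iff.1 hBc.le
  obtain ⟨u, hu⟩ := hBcount.exists_eq_range hBne
  have hUn : ∀ n : ℕ, (⋂ m ∈ Finset.range (n + 1), u m) ∈ 𝓝 x := by
    intro n
    refine (Filter.biInter_finset_mem _).2 fun m _ => h1 (u m) ?_
    rw [hu]; exact mem_range_self m
  choose y hy hyne using fun n => nonisolated_nhds hx (hUn n)
  have htend : Filter.Tendsto y atTop (𝓝 x) := by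
    intro V hV
    obtain ⟨U, hUB, hUV⟩ := h2 V hV
    rw [hu] at hUB
    obtain ⟨m, rfl⟩ := hUB
    rw [Filter.mem_map]
    filter_upwards [Filter.eventually_ge_atTop m] with n hn
    have : y n ∈ u m := by
      have := hy n
      exact Set.mem_iInter₂.1 this m (Finset.mem_range.2 (Nat.lt_succ_of_le hn))
    exact hUV this
  refine ⟨Set.range y, ?_, ?_, ?_⟩
  · rintro ⟨n, rfl⟩; exact hyne n rfl
  · have hcnt : (Set.range y).Countable := Set.countable_range y
    have hinf : (Set.range y).Infinite := by
      intro hfin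
      have hval : ∀ a ∈ Set.range y, {n | y n = a}.Finite := by
        intro a haR
        have ha : a ≠ x := by rintro rfl; obtain ⟨n, rfl⟩ := haR; exact hyne n rfl
        have hmem : {a}ᶜ ∈ 𝓝 x := compl_singleton_mem_nhds (Ne.symm ha)
        have := htend hmem
        rw [Filter.mem_map, Filter.mem_atTop_sets] at this
        obtain ⟨N, hN⟩ := this
        refine Set.Finite.subset (Set.finite_Iio N) fun n hn => ?_
        by_contra hnN
        exact (hN n (le_of_not_gt hnN)) hn
      have huniv : (Set.univ : Set ℕ).Finite := by
        refine Set.Finite.subset (Set.Finite.biUnion hfin hval) fun n _ => ?_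
        exact Set.mem_biUnion (Set.mem_range_self n) rfl
      exact Set.infinite_univ huniv
    exact le_antisymm (Cardinal.mk_le_aleph0_iff.2 hcnt.to_subtype)
      (Cardinal.aleph0_le_mk_iff.2 hinf.to_subtype)
  · intro V hV
    have := htend hV
    rw [Filter.mem_map, Filter.mem_atTop_sets] at this
    obtain ⟨N, hN⟩ := this
    refine Set.Finite.subset ((Set.finite_Iio N).image y) ?_
    rintro a ⟨⟨n, rfl⟩, haV⟩
    refine ⟨n, ?_, rfl⟩
    by_contra hnN
    exact haV (hN n (le_of_not_gt hnN))

noncomputable def wfSeq {W : Type u} {K : Type u} [LT W] [IsWellFounded W (· < ·)]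
    (pick : Set K → K) : W → K :=
  (IsWellFounded.wf (r := ((· < ·) : W → W → Prop))).fix
    (fun w ih => pick (Set.range fun v : {v : W // v < w} => ih v v.2))

lemma wfSeq_eq {W K : Type u} [LT W] [IsWellFounded W (· < ·)] (pick : Set K → K) (w : W) :
    wfSeq pick w = pick (wfSeq pick '' {v | v < w}) := by
  rw [wfSeq, WellFounded.fix_eq]
  congr 1
  rw [Set.image_eq_range]
  rfl

lemma exists_family_of_uncountable {K : Type u} [TopologicalSpace K]
    (hK : IsCorson K) {x : K} {κ : Cardinal.{u}} (hκ : charAt K x = κ)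
    (hunc : ℵ₀ < κ) :
    ∃ A : Set K, x ∉ A ∧ Cardinal.mk ↥A = κ ∧ ∀ V ∈ 𝓝 x, (A \ V).Finite := by
  classical
  obtain ⟨hcomp, Γ, f, hf⟩ := hK
  set g : K → Γ → ℝ := fun z => (f z : Γ → ℝ) - (f x : Γ → ℝ) with hgdef
  -- g is an embedding
  have hgemb : Topology.IsEmbedding g := by
    have h1 : Topology.IsEmbedding (fun z : K => (f z : Γ → ℝ)) :=
      Topology.IsEmbedding.subtypeVal.comp hf
    exact (Homeomorph.subRight ((f x : Γ → ℝ))).isEmbedding.comp h1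
  have hgx : g x = 0 := sub_self _
  have hginj : ∀ z : K, g z = 0 → z = x := by
    intro z hz
    exact hgemb.injective (by rw [hz, hgx])
  have hsupp : ∀ z : K, {γ | g z γ ≠ 0}.Countable := by
    intro z
    refine Set.Countable.mono ?_ ((f z).2.union (f x).2)
    intro γ hγ
    by_contra hn
    simp only [SigmaProd, mem_union, mem_setOf_eq, not_or, not_not] at hn
    exact hγ (by simp [hgdef, hn.1, hn.2])
  -- basic neighborhoods over all of Γ
  have hbasic : ∀ V ∈ 𝓝 x, ∃ (F : Finset Γ) (ε : ℝ), 0 < ε ∧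
      {z : K | ∀ γ ∈ F, |g z γ| < ε} ⊆ V := by
    intro V hV
    have hnc : V ∈ Filter.comap g (𝓝 (g x)) := by
      rw [← hgemb.nhds_eq_comap]; exact hV
    rw [hgx, nhds_pi] at hnc
    obtain ⟨W, hW, hWV⟩ := hnc
    rw [Filter.mem_pi] at hW
    obtain ⟨I, hIfin, t, ht, htW⟩ := hW
    choose ε hε hball using fun γ (hγ : γ ∈ I) => Metric.mem_nhds_iff.1 (ht γ)
    set F : Finset Γ := hIfin.toFinset with hF
    set ε' : Γ → ℝ := fun γ => if h : γ ∈ I then ε γ h else 1 with hε'def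
    have hε' : ∀ γ, 0 < ε' γ := by
      intro γ; by_cases h : γ ∈ I <;> simp [hε'def, h, hε]
    set ε₀ : ℝ := if h : F.Nonempty then F.inf' h ε' else 1 with hε₀def
    have hε₀pos : 0 < ε₀ := by
      by_cases h : F.Nonempty
      · rw [hε₀def, dif_pos h]
        exact (Finset.lt_inf'_iff h).2 fun γ _ => hε' γ
      · rw [hε₀def, dif_neg h]; norm_num
    refine ⟨F, ε₀, hε₀pos, fun z hz => hWV ?_⟩
    refine htW ?_
    intro γ hγ
    have hγF : γ ∈ F := hIfin.mem_toFinset.2 hγ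
    have hlt : |g z γ| < ε₀ := hz γ hγF
    have hle : ε₀ ≤ ε γ hγ := by
      have hne : F.Nonempty := ⟨γ, hγF⟩
      have h2 : ε₀ ≤ ε' γ := by
        rw [hε₀def, dif_pos hne]
        exact Finset.inf'_le _ hγF
      rw [hε'def] at h2
      simpa [dif_pos hγ] using h2
    refine hball γ hγ ?_
    rw [Metric.mem_ball]
    simp only [Pi.zero_apply, Real.dist_0_eq_abs]
    exact lt_of_lt_of_le hlt hle
  -- basic sets are open neighborhoods
  have hUopen : ∀ (F : Finset Γ) (ε : ℝ), IsOpen {z : K | ∀ γ ∈ F, |g z γ| < ε} := by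
    intro F ε
    have heq : {z : K | ∀ γ ∈ F, |g z γ| < ε} =
        ⋂ γ ∈ F, (fun z => g z γ) ⁻¹' (Metric.ball 0 ε) := by
      ext z; simp [Real.dist_0_eq_abs]
    rw [heq]
    exact isOpen_biInter_finset fun γ _ =>
      (((continuous_apply γ).comp hgemb.continuous)).isOpen_preimage _ Metric.isOpen_ball
  have hUmem : ∀ (F : Finset Γ) (ε : ℝ), 0 < ε → {z : K | ∀ γ ∈ F, |g z γ| < ε} ∈ 𝓝 x := by
    intro F ε hε
    refine (hUopen F ε).mem_nhds ?_
    intro γ _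
    rw [show g x γ = 0 by rw [hgx]; rfl]
    simpa using hε
  -- compactness: no vanishing point means basic sets over S form a base
  have hC : ∀ S : Set Γ, (∀ y : K, (∀ γ ∈ S, g y γ = 0) → y = x) →
      ∀ V ∈ 𝓝 x, ∃ F : Finset Γ, ↑F ⊆ S ∧ ∃ n : ℕ,
        {z : K | ∀ γ ∈ F, |g z γ| < 1 / (n + 1)} ⊆ V := by
    intro S hS V hV
    by_contra hcon
    push_neg at hcon
    obtain ⟨W, hWV, hWopen, hxW⟩ := mem_nhds_iff.1 hV
    set D : Finset ↥S × ℕ → Set K := fun p =>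
      {z : K | ∀ γ ∈ p.1, |g z ↑γ| ≤ 1 / (p.2 + 1)} ∩ Wᶜ with hD
    have hnon : ∀ p, (D p).Nonempty := by
      rintro ⟨T, n⟩
      have hsub : ↑(T.image (Subtype.val : ↥S → Γ)) ⊆ S := by
        intro γ hγ
        simp only [Finset.coe_image, Set.mem_image, Finset.mem_coe] at hγ
        obtain ⟨δ, _, rfl⟩ := hγ
        exact δ.2
      have h3 := hcon (T.image Subtype.val) hsub n
      rw [Set.not_subset] at h3
      obtain ⟨z, hz1, hz2⟩ := h3
      exact ⟨z, fun γ hγ => le_of_lt (hz1 _ (Finset.mem_image_of_mem _ hγ)),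
        fun hzW => hz2 (hWV hzW)⟩
    have hdir : Directed (· ⊇ ·) D := by
      rintro ⟨T, n⟩ ⟨T', n'⟩
      refine ⟨⟨T ∪ T', max n n'⟩, ?_, ?_⟩ <;>
      · rintro z ⟨hz1, hz2⟩
        refine ⟨fun γ hγ => le_trans (hz1 γ (by simp [hγ])) ?_, hz2⟩
        apply one_div_le_one_div_of_le
        · positivity
        · push_cast; simp
    have hclosed : ∀ p, IsClosed (D p) := by
      rintro ⟨T, n⟩
      refine IsClosed.inter ?_ hWopen.isClosed_compl
      have heq : {z : K | ∀ γ ∈ T, |g z ↑γ| ≤ 1 / ((n : ℝ) + 1)} =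
          ⋂ γ ∈ T, (fun z => g z ↑γ) ⁻¹' (Metric.closedBall 0 (1 / ((n : ℝ) + 1))) := by
        ext z; simp [Real.dist_0_eq_abs]
      rw [heq]
      exact isClosed_biInter fun γ _ =>
        IsClosed.preimage ((continuous_apply (γ : Γ)).comp hgemb.continuous)
          Metric.isClosed_closedBall
    have hcompK : CompactSpace K := hcomp
    have hcpt : ∀ p, IsCompact (D p) := fun p => (hclosed p).isCompact
    obtain ⟨y, hy⟩ := IsCompact.nonempty_iInter_of_directed_nonempty_isCompact_isClosed
      D hdir hnon hcpt hclosed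
    have hyall : ∀ p, y ∈ D p := Set.mem_iInter.1 hy
    have hyW : y ∉ W := (hyall ⟨∅, 0⟩).2
    have hyS : ∀ γ ∈ S, g y γ = 0 := by
      intro γ hγ
      have h0 : ∀ n : ℕ, |g y γ| ≤ 1 / (n + 1) :=
        fun n => (hyall ⟨{⟨γ, hγ⟩}, n⟩).1 _ (Finset.mem_singleton_self _)
      by_contra hne
      obtain ⟨n, hn⟩ := exists_nat_one_div_lt (abs_pos.2 hne)
      exact absurd (h0 n) (not_le.2 hn)
    exact hyW (hS y hyS ▸ hxW)
  -- small sets admit vanishing points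
  have hbound : ∀ S : Set Γ, Cardinal.mk ↥S < κ →
      ∃ y : K, y ≠ x ∧ ∀ γ ∈ S, g y γ = 0 := by
    intro S hSκ
    by_contra hcon
    push_neg at hcon
    have hS : ∀ y : K, (∀ γ ∈ S, g y γ = 0) → y = x := by
      intro y hy
      by_contra hne
      obtain ⟨γ, hγS, hγ⟩ := hcon y hne
      exact hγ (hy γ hγS)
    set B : Set (Set K) := Set.range (fun p : {F : Finset Γ // ↑F ⊆ S} × ℕ =>
      {z : K | ∀ γ ∈ p.1.1, |g z γ| < 1 / (p.2 + 1)}) with hB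
    have h1 : ∀ U ∈ B, U ∈ 𝓝 x := by
      rintro U ⟨p, rfl⟩
      exact hUmem _ _ (by positivity)
    have h2 : ∀ V ∈ 𝓝 x, ∃ U ∈ B, U ⊆ V := by
      intro V hV
      obtain ⟨F, hFS, n, hsub⟩ := hC S hS V hV
      exact ⟨_, ⟨⟨⟨F, hFS⟩, n⟩, rfl⟩, hsub⟩
    have hle := charAt_le x h1 h2
    have hlt : Cardinal.mk ↥B < κ := by
      have step1 : Cardinal.mk ↥B ≤ Cardinal.mk ({F : Finset Γ // ↑F ⊆ S} × ℕ) :=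
        Cardinal.mk_range_le
      have step2 : Cardinal.mk {F : Finset Γ // ↑F ⊆ S} ≤ Cardinal.mk (Finset ↥S) := by
        refine Cardinal.mk_le_of_injective (f := fun F =>
          Finset.preimage F.1 (Subtype.val : ↥S → Γ) Subtype.val_injective.injOn) ?_
        rintro ⟨F, hFS⟩ ⟨F', hFS'⟩ h
        dsimp only at h
        apply Subtype.ext
        ext γ
        constructor
        · intro hγ
          have h5 : (⟨γ, hFS hγ⟩ : ↥S) ∈
              Finset.preimage F (Subtype.val : ↥S → Γ) Subtype.val_injective.injOn :=
            Finset.mem_preimage.2 hγ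
          rw [h] at h5
          exact Finset.mem_preimage.1 h5
        · intro hγ
          have h5 : (⟨γ, hFS' hγ⟩ : ↥S) ∈
              Finset.preimage F' (Subtype.val : ↥S → Γ) Subtype.val_injective.injOn :=
            Finset.mem_preimage.2 hγ
          rw [← h] at h5
          exact Finset.mem_preimage.1 h5
      have step3 : Cardinal.mk (Finset ↥S) < κ := by
        by_cases hfin : Finite ↥S
        · haveI := Fintype.ofFinite ↥S
          exact lt_trans (Cardinal.lt_aleph0_of_finite _) hunc
        · have : Infinite ↥S := not_finite_iff_infinite.1 hfin
          rw [Cardinal.mk_finset_of_infinite]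
          exact hSκ
      have step4 : Cardinal.mk ({F : Finset Γ // ↑F ⊆ S} × ℕ) =
          Cardinal.mk {F : Finset Γ // ↑F ⊆ S} * ℵ₀ := by
        rw [Cardinal.mk_prod]
        simp
      calc Cardinal.mk ↥B ≤ _ := step1
        _ = Cardinal.mk {F : Finset Γ // ↑F ⊆ S} * ℵ₀ := step4
        _ < κ := Cardinal.mul_lt_of_lt hunc.le (lt_of_le_of_lt step2 step3) hunc
    rw [hκ] at hle
    exact absurd (lt_of_le_of_lt hle hlt) (lt_irrefl _)
  -- transfinite construction
  set W := (Cardinal.ord κ).ToType with hW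
  set pick : Set K → K := fun A =>
    if h : ∃ y : K, y ≠ x ∧ ∀ γ, (∃ a ∈ A, g a γ ≠ 0) → g y γ = 0 then h.choose else x
    with hpick
  set Y : W → K := wfSeq pick with hY
  have hP : ∀ w : W, ∃ y : K, y ≠ x ∧
      ∀ γ, (∃ a ∈ Y '' {v | v < w}, g a γ ≠ 0) → g y γ = 0 := by
    intro w
    set S : Set Γ := ⋃ a ∈ Y '' {v | v < w}, {γ | g a γ ≠ 0} with hSdef
    have hSκ : Cardinal.mk ↥S < κ := by
      have b1 : Cardinal.mk ↥S ≤ Cardinal.mk ↥(Y '' {v | v < w}) * ℵ₀ := by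
        refine le_trans (Cardinal.mk_biUnion_le _ _) ?_
        refine mul_le_mul_right ?_ _
        exact ciSup_le' fun a => Cardinal.mk_le_aleph0_iff.2 (hsupp _).to_subtype
      have b2 : Cardinal.mk ↥(Y '' {v | v < w}) < κ := by
        refine lt_of_le_of_lt (Cardinal.mk_image_le) ?_
        exact Cardinal.mk_Iio_ord_toType w
      exact lt_of_le_of_lt b1 (Cardinal.mul_lt_of_lt hunc.le b2 hunc)
    obtain ⟨y, hy1, hy2⟩ := hbound S hSκ
    refine ⟨y, hy1, fun γ hγ => hy2 γ ?_⟩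
    obtain ⟨a, ha, hga⟩ := hγ
    exact Set.mem_biUnion ha hga
  have hspec : ∀ w : W, Y w ≠ x ∧
      ∀ γ, (∃ a ∈ Y '' {v | v < w}, g a γ ≠ 0) → g (Y w) γ = 0 := by
    intro w
    have heq : Y w = pick (Y '' {v | v < w}) := wfSeq_eq pick w
    rw [heq, hpick]
    simp only []
    rw [dif_pos (hP w)]
    exact (hP w).choose_spec
  have hYne : ∀ w, Y w ≠ x := fun w => (hspec w).1
  have hkey : ∀ v w : W, v < w → ∀ γ, g (Y v) γ ≠ 0 → g (Y w) γ = 0 := by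
    intro v w hvw γ hγ
    exact (hspec w).2 γ ⟨Y v, Set.mem_image_of_mem _ hvw, hγ⟩
  have hYinj : Function.Injective Y := by
    have haux : ∀ v w : W, v < w → Y v = Y w → False := by
      intro v w hlt heq
      have hsuppne : ∃ γ, g (Y v) γ ≠ 0 := by
        by_contra hz
        push_neg at hz
        exact hYne v (hginj _ (funext hz))
      obtain ⟨γ, hγ⟩ := hsuppne
      have h6 := hkey v w hlt γ hγ
      rw [← heq] at h6
      exact hγ h6
    intro v w hvw
    rcases lt_trichotomy v w with h | h | h
    · exact absurd hvw (fun hh => haux v w h hh)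
    · exact h
    · exact absurd hvw.symm (fun hh => haux w v h hh)
  refine ⟨Set.range Y, ?_, ?_, ?_⟩
  · rintro ⟨w, hw⟩
    exact hYne w hw
  · rw [Cardinal.mk_range_eq _ hYinj]
    exact (Cardinal.mk_toType _).trans (Cardinal.card_ord _)
  · intro V hV
    obtain ⟨F, ε, hε, hsub⟩ := hbasic V hV
    have hsing : ∀ γ : Γ, {w : W | g (Y w) γ ≠ 0}.Subsingleton := by
      intro γ v hv w hw
      by_contra hne
      rcases lt_trichotomy v w with h | h | h
      · exact hw (hkey v w h γ hv)
      · exact hne h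
      · exact hv (hkey w v h γ hw)
    have hfin : (⋃ γ ∈ F, {w : W | g (Y w) γ ≠ 0}).Finite :=
      Set.Finite.biUnion F.finite_toSet fun γ _ => (hsing γ).finite
    refine Set.Finite.subset (hfin.image Y) ?_
    rintro a ⟨⟨w, rfl⟩, haV⟩
    have h7 : Y w ∉ {z : K | ∀ γ ∈ F, |g z γ| < ε} := fun h => haV (hsub h)
    simp only [Set.mem_setOf_eq, not_forall] at h7
    obtain ⟨γ, hγF, hγ⟩ := h7
    refine ⟨w, Set.mem_biUnion hγF ?_, rfl⟩
    show g (Y w) γ ≠ 0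
    intro h0
    apply hγ
    rw [h0]
    simpa using hε

/-- a Corson compact space `K` contains, around each non-isolated
point `x` of character `κ`, a copy of the one-point compactification of a
discrete space of cardinality `κ` with `x` as the point at infinity. -/
theorem corson_onePoint_subspace {K : Type u} [TopologicalSpace K]
    (hK : IsCorson K) {x : K} (hx : ¬ IsOpen ({x} : Set K))
    {κ : Cardinal.{u}} (hκ : charAt K x = κ) :
    ∃ D : Type u, Cardinal.mk D = κ ∧ ∃ f : OnePoint D → K,
      (letI : TopologicalSpace D := ⊥; Topology.IsEmbedding f) ∧
      f OnePoint.infty = x := by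
  haveI : CompactSpace K := hK.1
  obtain ⟨-, Γ, f, hf⟩ := id hK
  haveI : T2Space K := hf.t2Space
  have h0 : ℵ₀ ≤ κ := hκ ▸ aleph0_le_charAt hx
  have hA : ∃ A : Set K, x ∉ A ∧ Cardinal.mk ↥A = κ ∧ ∀ V ∈ 𝓝 x, (A \ V).Finite := by
    rcases eq_or_lt_of_le h0 with heq | hlt
    · obtain ⟨B, h1, h2, h3⟩ := charAt_spec x
      obtain ⟨A, hxA, hmk, hcof⟩ := exists_family_aleph0 hx h1 h2 (by rw [h3, hκ, ← heq])
      exact ⟨A, hxA, by rw [hmk, heq], hcof⟩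
    · exact exists_family_of_uncountable hK hκ hlt
  obtain ⟨A, hxA, hmk, hcof⟩ := hA
  refine ⟨↥A, hmk, fun o => o.elim x Subtype.val, ?_, rfl⟩
  letI : TopologicalSpace ↥A := ⊥
  haveI : DiscreteTopology ↥A := ⟨rfl⟩
  refine onePoint_embed Subtype.val Subtype.val_injective
    (fun d hd => hxA (hd ▸ d.2)) ?_
  intro V hV
  have hpre : {d : ↥A | ↑d ∉ V} = Subtype.val ⁻¹' (A \ V) := by
    ext d; simp [d.2]
  rw [hpre]
  exact (hcof V hV).preimage Subtype.val_injective.injOn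
end

section
/- Let k < n be natural numbers, let Y be a set of cardinality ω_k, and let {C_α : α < ω_n} be a family of countable subsets of Y. Then there exist a countable subset Z ⊆ Y and a set S ⊆ ω_n of cardinality ω_n such that C_α ⊆ Z for all α ∈ S. -/
universe u

open Cardinal Set Ordinal

private lemma nat_cast_succ_ord (k : ℕ) : ((k + 1 : ℕ) : Ordinal) = Order.succ (k : Ordinal) := by
  push_cast
  rw [Ordinal.add_one_eq_succ]

private lemma aleph_nat_succ_regular (k : ℕ) :
    Cardinal.IsRegular (Cardinal.aleph (k + 1 : ℕ)) := by
  rw [nat_cast_succ_ord]; exact isRegular_aleph_succ _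

private lemma aux : ∀ (k : ℕ) {n : ℕ}, k < n → ∀ {Y : Type u}, #Y ≤ Cardinal.aleph k →
    ∀ {I : Type u}, #I = Cardinal.aleph n → ∀ (C : I → Set Y), (∀ α, (C α).Countable) →
    ∃ (Z : Set Y) (S : Set I), Z.Countable ∧ #S = Cardinal.aleph n ∧ ∀ α ∈ S, C α ⊆ Z := by
  intro k
  induction k with
  | zero =>
    intro n hn Y hY I hI C hC
    rw [Nat.cast_zero, aleph_zero] at hY
    have : Countable Y := mk_le_aleph0_iff.1 hY
    exact ⟨Set.univ, Set.univ, Set.countable_univ, by simpa using hI, fun α _ => subset_univ _⟩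
  | succ k ih =>
    intro n hn Y hY I hI C hC
    have hreg1 : Cardinal.IsRegular (Cardinal.aleph (k + 1 : ℕ)) := aleph_nat_succ_regular k
    have hn1 : 1 ≤ n := le_trans (Nat.succ_le_succ (Nat.zero_le k)) (le_of_lt hn)
    obtain ⟨m, rfl⟩ := Nat.exists_eq_add_of_le hn1
    have hregn : Cardinal.IsRegular (Cardinal.aleph (1 + m : ℕ)) := by
      rw [Nat.add_comm]; exact aleph_nat_succ_regular m
    have hYle : #Y ≤ #(Cardinal.aleph (k + 1 : ℕ)).ord.ToType := by
      rw [mk_ord_toType]; exact hY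
    obtain ⟨f⟩ := hYle
    -- each C α is bounded in the order on toType
    have hbdd : ∀ α : I, ∃ b, ∀ y ∈ C α, f y < b := by
      intro α
      have wo : IsWellOrder (Cardinal.aleph.{u} (k + 1 : ℕ)).ord.ToType (· < ·) :=
        isWellOrder_lt
      have h1 : #(f '' C α) < Ordinal.cof (@Ordinal.type _ (· < ·) wo) := by
        rw [Ordinal.type_toType, hreg1.cof_eq]
        calc #(f '' C α) ≤ ℵ₀ := mk_le_aleph0_iff.2 ((hC α).image f).to_subtype
          _ = Cardinal.aleph 0 := aleph_zero.symm
          _ < Cardinal.aleph (k + 1 : ℕ) := aleph_lt_aleph.2 (by exact_mod_cast Nat.succ_pos k)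
      obtain ⟨b, hb⟩ : ∃ b, ∀ a ∈ f '' C α, a < b := by
        by_contra hcon
        push_neg at hcon
        have hc : IsCofinal (f '' C α) := fun a => hcon a
        have h2 := Order.cof_le hc
        rw [Ordinal.cof_toType] at h2
        rw [Ordinal.type_toType] at h1
        exact absurd (lt_of_lt_of_le h1 h2) (lt_irrefl _)
      exact ⟨b, fun y hy => hb (f y) ⟨y, hy, rfl⟩⟩
    choose g hg using hbdd
    -- pigeonhole: some fiber of g has full size
    have hfib : ∃ b, #(g ⁻¹' {b}) = Cardinal.aleph (1 + m : ℕ) := by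
      by_contra hcon
      push_neg at hcon
      have hlt : ∀ b, #(g ⁻¹' {b}) < Cardinal.aleph (1 + m : ℕ) := fun b =>
        lt_of_le_of_ne (by rw [← hI]; exact mk_set_le _) (hcon b)
      have : #I < Cardinal.aleph (1 + m : ℕ) := by
        have heq : #I = Cardinal.sum (fun b => #(g ⁻¹' {b})) := by
          rw [← mk_sigma]
          exact (mk_congr (Equiv.sigmaFiberEquiv g)).symm
        rw [heq]
        apply sum_lt_of_isRegular hregn _ hlt
        rw [mk_ord_toType]
        exact aleph_lt_aleph.2 (by exact_mod_cast hn)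
      rw [hI] at this; exact lt_irrefl _ this
    obtain ⟨b, hb⟩ := hfib
    have hY'card : #(f ⁻¹' (Set.Iio b) : Set Y) ≤ Cardinal.aleph k := by
      have h1 : #(f ⁻¹' (Set.Iio b) : Set Y) ≤ #(Set.Iio b) := by
        apply mk_le_of_injective (f := fun y : (f ⁻¹' (Set.Iio b) : Set Y) =>
          (⟨f y.1, y.2⟩ : Set.Iio b))
        intro y z hyz
        exact Subtype.ext (f.injective (by simpa using congrArg Subtype.val hyz))
      have h2 : #(Set.Iio b) < Order.succ (Cardinal.aleph k) := by
        rw [← aleph_succ, ← nat_cast_succ_ord]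
        exact mk_Iio_ord_toType b
      exact h1.trans (Order.lt_succ_iff.1 h2)
    have hCsub : ∀ α : (g ⁻¹' {b} : Set I), C α.1 ⊆ f ⁻¹' (Set.Iio b) := by
      rintro ⟨α, hα⟩ y hy
      have h := hg α y hy
      rw [Set.mem_preimage, Set.mem_singleton_iff] at hα
      simp only [Set.mem_preimage, Set.mem_Iio]
      rwa [hα] at h
    obtain ⟨Z', S'', hZ'c, hS''c, hZ'sub⟩ :=
      ih (Nat.lt_of_succ_lt hn) hY'card hb
        (fun α : (g ⁻¹' {b} : Set I) => (Subtype.val ⁻¹' C α.1 : Set (f ⁻¹' (Set.Iio b) : Set Y)))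
        (fun α => (hC α.1).preimage Subtype.val_injective)
    refine ⟨Subtype.val '' Z', Subtype.val '' S'', hZ'c.image _, ?_, ?_⟩
    · rw [mk_image_eq Subtype.val_injective, hS''c]
    · rintro α ⟨β, hβ, rfl⟩ y hy
      have hyY' : y ∈ f ⁻¹' (Set.Iio b) := hCsub β hy
      exact ⟨⟨y, hyY'⟩, hZ'sub β hβ hy, rfl⟩


/-- if `k < n`, `|Y| = ω_k` and `{C_α : α < ω_n}` is a family of
countable subsets of `Y`, then some countable `Z ⊆ Y` contains `C_α` for
`ω_n`-many `α`. -/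
theorem countable_subsets_stabilize {k n : ℕ} (hkn : k < n) {Y : Type u}
    (hY : Cardinal.mk Y = Cardinal.aleph k)
    (C : (Cardinal.aleph n).ord.ToType → Set Y) (hC : ∀ α, (C α).Countable) :
    ∃ (Z : Set Y) (S : Set (Cardinal.aleph n).ord.ToType),
      Z.Countable ∧ Cardinal.mk S = Cardinal.aleph n ∧ ∀ α ∈ S, C α ⊆ Z := by
  -- move everything to a common universe via ULift
  have hIY : #(ULift.{u, u_1} (Cardinal.aleph n).ord.ToType) = Cardinal.aleph n := by
    rw [mk_uLift, mk_ord_toType, lift_aleph]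
    norm_num
  have hYY : #(ULift.{u_1, u} Y) ≤ Cardinal.aleph k := by
    rw [mk_uLift, hY, lift_aleph]
    norm_num
  obtain ⟨Z, S, hZc, hSc, hsub⟩ :=
    aux.{max u u_1} k hkn hYY hIY
      (fun α => (ULift.up '' C α.down : Set (ULift.{u_1, u} Y)))
      (fun α => Set.Countable.image (hC α.down) ULift.up)
  refine ⟨ULift.down '' Z, ULift.down '' S, hZc.image _, ?_, ?_⟩
  · have h := mk_image_eq_lift ULift.down S ULift.down_injective
    rw [hSc, lift_aleph] at h
    rw [← Cardinal.lift_inj.{u_1, max u u_1}, h, lift_aleph]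
    norm_num
  · rintro α ⟨β, hβ, rfl⟩ y hy
    exact ⟨ULift.up y, hsub β hβ ⟨y, hy, rfl⟩, rfl⟩
end
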